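/- arXiv:0906.3565 — 11 statements merged into one kernel-verified Lean document; each statement's English description precedes it below -/
import Mathlib

section
/- Let Ω, T ⊆ ℂ be open and U,V : Ω×T → ℂ be differentiable functions satisfying the canonical Poisson relation w(∂_wU·∂_{t₀}V − ∂_wV·∂_{t₀}U) = U on Ω×T, with ∂_{t₀}U(w,t₀) ≠ 0 everywhere. Let D ⊆ (ℂ∖{0})² be open and 𝒜 : D → T be a differentiable function with (w,𝒜(w,w̃)) ∈ Ω×T and U(w, 𝒜(w,w̃)) = w̃ for all (w,w̃) ∈ D, and define Ã(w,w̃) = V(w, 𝒜(w,w̃)). Then ∂_wÃ(w,w̃) = −(w̃/w)·∂_{w̃}𝒜(w,w̃) for all (w,w̃) ∈ D; equivalently ∂_w(−Ã(w,w̃)/w̃) = ∂_{w̃}(𝒜(w,w̃)/w), i.e. the 1-form (𝒜/w)dw − (Ã/w̃)dw̃ is closed. -/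
/-!
Differentiating the identities `U(w, 𝒜(w, w̃)) = w̃` in `w` and in `w̃` expresses the partial
derivatives of `𝒜` through those of `U`: `∂_w U + ∂_w 𝒜 · ∂_t U = 0` and `∂_{w̃} 𝒜 · ∂_t U = 1`.
By the chain rule `∂_w Ã = ∂_w V + ∂_w 𝒜 · ∂_t V`, and after eliminating `∂_w 𝒜` the Poisson
relation `w (∂_w U ∂_t V - ∂_w V ∂_t U) = w̃` turns this into `-(w̃ / w) ∂_{w̃} 𝒜`.
-/

open Filter Topology

section ChainRule

variable {𝕜 : Type*} [NontriviallyNormedField 𝕜] {F : Type*} [NormedAddCommGroup F]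
  [NormedSpace 𝕜 F] {f : 𝕜 → 𝕜 → F} {x y : 𝕜}

theorem DifferentiableAt.hasDerivAt_partial_fst
    (hf : DifferentiableAt 𝕜 (fun p : 𝕜 × 𝕜 => f p.1 p.2) (x, y)) :
    HasDerivAt (fun x' => f x' y) (fderiv 𝕜 (fun p : 𝕜 × 𝕜 => f p.1 p.2) (x, y) (1, 0)) x := by
  exact hf.hasFDerivAt.comp_hasDerivAt x ((hasDerivAt_id' x).prodMk (hasDerivAt_const x y))

theorem DifferentiableAt.hasDerivAt_partial_snd
    (hf : DifferentiableAt 𝕜 (fun p : 𝕜 × 𝕜 => f p.1 p.2) (x, y)) :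
    HasDerivAt (f x) (fderiv 𝕜 (fun p : 𝕜 × 𝕜 => f p.1 p.2) (x, y) (0, 1)) y := by
  exact hf.hasFDerivAt.comp_hasDerivAt y ((hasDerivAt_const y x).prodMk (hasDerivAt_id' y))

theorem DifferentiableAt.hasDerivAt_comp₂ {γ δ : 𝕜 → 𝕜} {γ' δ' s : 𝕜}
    (hf : DifferentiableAt 𝕜 (fun p : 𝕜 × 𝕜 => f p.1 p.2) (γ s, δ s))
    (hγ : HasDerivAt γ γ' s) (hδ : HasDerivAt δ δ' s) :
    HasDerivAt (fun s => f (γ s) (δ s))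
      (γ' • deriv (fun x' => f x' (δ s)) (γ s) + δ' • deriv (f (γ s)) (δ s)) s := by
  have hL := hf.hasFDerivAt.comp_hasDerivAt s (hγ.prodMk hδ)
  have hsplit : ((γ', δ') : 𝕜 × 𝕜) = γ' • ((1 : 𝕜), (0 : 𝕜)) + δ' • ((0 : 𝕜), (1 : 𝕜)) := by
    simp
  rwa [hsplit, map_add, map_smul, map_smul, ← hf.hasDerivAt_partial_fst.deriv,
    ← hf.hasDerivAt_partial_snd.deriv] at hL

end ChainRule

theorem poisson_elimination {w w' a b c d α β : ℂ} (hw : w ≠ 0)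
    (hPoisson : w * (a * d - c * b) = w') (hα : a + α * b = 0) (hβ : β * b = 1) :
    c + α * d = -(w' / w) * β := by
  rw [← hPoisson, mul_div_cancel_left₀ _ hw]
  linear_combination (-c - α * d) * hβ + (β * d) * hα

theorem stmt_1_general
    (Ω T : Set ℂ)
    (U V : ℂ → ℂ → ℂ)
    (hU : ∀ w ∈ Ω, ∀ t ∈ T, DifferentiableAt ℂ (fun p : ℂ × ℂ => U p.1 p.2) (w, t))
    (hV : ∀ w ∈ Ω, ∀ t ∈ T, DifferentiableAt ℂ (fun p : ℂ × ℂ => V p.1 p.2) (w, t))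
    (hPoisson : ∀ w ∈ Ω, ∀ t ∈ T,
      w * (deriv (fun w' => U w' t) w * deriv (V w) t
            - deriv (fun w' => V w' t) w * deriv (U w) t) = U w t)
    (D : Set (ℂ × ℂ)) (hDopen : IsOpen D) (hD0 : ∀ p ∈ D, p.1 ≠ 0 ∧ p.2 ≠ 0)
    (𝒜 : ℂ → ℂ → ℂ)
    (h𝒜diff : ∀ p ∈ D, DifferentiableAt ℂ (fun q : ℂ × ℂ => 𝒜 q.1 q.2) p)
    (h𝒜mem : ∀ p ∈ D, p.1 ∈ Ω ∧ 𝒜 p.1 p.2 ∈ T)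
    (h𝒜inv : ∀ p ∈ D, U p.1 (𝒜 p.1 p.2) = p.2)
    (𝒜' : ℂ → ℂ → ℂ)
    (h𝒜' : ∀ p ∈ D, 𝒜' p.1 p.2 = V p.1 (𝒜 p.1 p.2)) :
    ∀ p ∈ D,
      deriv (fun w => 𝒜' w p.2) p.1 = -(p.2 / p.1) * deriv (𝒜 p.1) p.2 ∧
      deriv (fun w => -𝒜' w p.2 / p.2) p.1 = deriv (fun v => 𝒜 p.1 v / p.1) p.2 := by
  rintro ⟨w, v⟩ hp
  obtain ⟨hw0, hv0⟩ : w ≠ 0 ∧ v ≠ 0 := hD0 _ hp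
  obtain ⟨hwΩ, htT⟩ : w ∈ Ω ∧ 𝒜 w v ∈ T := h𝒜mem _ hp
  have hP := hPoisson w hwΩ _ htT
  rw [show U w (𝒜 w v) = v from h𝒜inv _ hp] at hP
  have near_w : ∀ᶠ s in 𝓝 w, (s, v) ∈ D :=
    (continuous_id.prodMk continuous_const).continuousAt.preimage_mem_nhds (hDopen.mem_nhds hp)
  have near_v : ∀ᶠ s in 𝓝 v, (w, s) ∈ D :=
    (continuous_const.prodMk continuous_id).continuousAt.preimage_mem_nhds (hDopen.mem_nhds hp)
  have h𝒜w := (h𝒜diff _ hp).hasDerivAt_partial_fst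
  have h𝒜v := (h𝒜diff _ hp).hasDerivAt_partial_snd
  have hUw := ((hU w hwΩ _ htT).hasDerivAt_comp₂ (hasDerivAt_id' w) h𝒜w).unique
    ((hasDerivAt_const w v).congr_of_eventuallyEq (near_w.mono fun s hs => h𝒜inv _ hs))
  have hUv := ((hU w hwΩ _ htT).hasDerivAt_comp₂ (hasDerivAt_const v w) h𝒜v).unique
    ((hasDerivAt_id' v).congr_of_eventuallyEq (near_v.mono fun s hs => h𝒜inv _ hs))
  have h𝒜'w := ((hV w hwΩ _ htT).hasDerivAt_comp₂ (hasDerivAt_id' w) h𝒜w).congr_of_eventuallyEq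
    (near_w.mono fun s hs => h𝒜' _ hs)
  simp only [smul_eq_mul, one_mul, zero_mul, zero_add] at hUw hUv h𝒜'w
  rw [poisson_elimination hw0 hP hUw hUv] at h𝒜'w
  dsimp only
  refine ⟨by rw [h𝒜'w.deriv, h𝒜v.deriv], ?_⟩
  rw [(h𝒜'w.fun_neg.div_const v).deriv, (h𝒜v.div_const w).deriv]
  field_simp

/-- Non-degenerate case (Case II), key computation: if `(U, V)` satisfies the canonical
Poisson relation `{U, V} = U` with `∂_{t₀}U ≠ 0`, and `𝒜` inverts `U` in its second
argument (`U(w, 𝒜(w, v)) = v`), then with `𝒜'(w, v) = V(w, 𝒜(w, v))` one has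
`∂_w 𝒜' = -(v/w) ∂_{v} 𝒜`; equivalently `∂_w(-𝒜'/v) = ∂_{v}(𝒜/w)`, i.e. the 1-form
`(𝒜/w)dw - (𝒜'/v)dv` is closed. -/
theorem stmt_1
    (Ω T : Set ℂ) (hΩopen : IsOpen Ω) (hTopen : IsOpen T)
    (U V : ℂ → ℂ → ℂ)
    (hU : ∀ w ∈ Ω, ∀ t ∈ T, DifferentiableAt ℂ (fun p : ℂ × ℂ => U p.1 p.2) (w, t))
    (hV : ∀ w ∈ Ω, ∀ t ∈ T, DifferentiableAt ℂ (fun p : ℂ × ℂ => V p.1 p.2) (w, t))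
    (hPoisson : ∀ w ∈ Ω, ∀ t ∈ T,
      w * (deriv (fun w' => U w' t) w * deriv (V w) t
            - deriv (fun w' => V w' t) w * deriv (U w) t) = U w t)
    (hUt : ∀ w ∈ Ω, ∀ t ∈ T, deriv (U w) t ≠ 0)
    (D : Set (ℂ × ℂ)) (hDopen : IsOpen D) (hD0 : ∀ p ∈ D, p.1 ≠ 0 ∧ p.2 ≠ 0)
    (𝒜 : ℂ → ℂ → ℂ)
    (h𝒜diff : ∀ p ∈ D, DifferentiableAt ℂ (fun q : ℂ × ℂ => 𝒜 q.1 q.2) p)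
    (h𝒜mem : ∀ p ∈ D, p.1 ∈ Ω ∧ 𝒜 p.1 p.2 ∈ T)
    (h𝒜inv : ∀ p ∈ D, U p.1 (𝒜 p.1 p.2) = p.2)
    (𝒜' : ℂ → ℂ → ℂ)
    (h𝒜' : ∀ p ∈ D, 𝒜' p.1 p.2 = V p.1 (𝒜 p.1 p.2)) :
    ∀ p ∈ D,
      deriv (fun w => 𝒜' w p.2) p.1 = -(p.2 / p.1) * deriv (𝒜 p.1) p.2 ∧
      deriv (fun w => -𝒜' w p.2 / p.2) p.1 = deriv (fun v => 𝒜 p.1 v / p.1) p.2 :=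
  stmt_1_general Ω T U V hU hV hPoisson D hDopen hD0 𝒜 h𝒜diff h𝒜mem h𝒜inv 𝒜' h𝒜'
end

section
/- Let A ⊆ ℂ∖{0} and Ω ⊆ ℂ be open, I ⊆ ℝ an open interval, and D ⊆ (ℂ∖{0})² open. Let g, f : I×A → ℂ∖{0} be C¹ in (t,w) and holomorphic in w for each fixed t, with ∂_wg and ∂_wf nowhere zero and (g(t,w), f(t,w)) ∈ D for all (t,w). Let h : I×Ω → A be C¹ with g(t, h(t,z)) = z for all (t,z) ∈ I×Ω. Let ℋ be holomorphic on D with ∂_{z₁}∂_{z₂}ℋ nowhere zero, and let P : A → ℂ be holomorphic. Assume that for all (t,w) ∈ I×A: ∂_tg(t,w)/∂_wg(t,w) − ∂_tf(t,w)/∂_wf(t,w) = −P′(w) / ( ∂_wf(t,w) · ∂_wg(t,w) · ∂_{z₁}∂_{z₂}ℋ(g(t,w), f(t,w)) ). Then for all (t,z) ∈ I×Ω: ∂_t [ ∂_{z₁}ℋ( z, f(t, h(t,z)) ) ] = P′(h(t,z)) · ∂_z h(t,z). -/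
/-!
Differentiating `g(s, h(s, z)) = z` in `s` gives `∂_t h = -∂_t g / ∂_w g`, and the inverse
function rule gives `∂_z h = 1 / ∂_w g`. By the chain rule the `t`-derivative of
`∂_{z₁}ℋ(z, f(t, h(t, z)))` is `∂_{z₂}∂_{z₁}ℋ · (∂_t f + ∂_t h · ∂_w f)`, which the deformation
relation turns into `P′(h) / ∂_w g` once `∂_{z₂}∂_{z₁}ℋ = ∂_{z₁}∂_{z₂}ℋ`.

That symmetry of mixed partials of a holomorphic function of two variables comes from Cauchy
estimates: by the Schwarz lemma the difference quotients of `ℋ` in `z₂` converge to `∂_{z₂}ℋ`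
uniformly in `z₁`, so by Weierstrass their `z₁`-derivatives converge as well.
-/

open Metric Set Filter
open scoped Topology

section

variable {E : Type*} [NormedAddCommGroup E] [NormedSpace ℂ E]

theorem norm_sub_sub_smul_deriv_le {φ : ℂ → E} {c z : ℂ} {r M : ℝ}
    (hφ : DifferentiableOn ℂ φ (ball c r)) (hM : ∀ w ∈ ball c r, ‖φ w‖ ≤ M)
    (hz : z ∈ ball c r) :
    ‖φ z - φ c - (z - c) • deriv φ c‖ ≤ 4 * M * (‖z - c‖ / r) ^ 2 := by
  have hr : 0 < r := nonempty_ball.mp ⟨z, hz⟩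
  have hc : c ∈ ball c r := mem_ball_self hr
  have hmaps : MapsTo φ (ball c r) (closedBall (φ c) (2 * M)) := fun w hw => by
    rw [mem_closedBall, dist_eq_norm]
    linarith [norm_sub_le (φ w) (φ c), hM w hw, hM c hc]
  have hderiv : ‖deriv φ c‖ ≤ 2 * M / r := Complex.norm_deriv_le_div_of_mapsTo_ball hφ hmaps hr
  set ψ : ℂ → E := fun w => φ w - φ c - (w - c) • deriv φ c
  have hψd : DifferentiableOn ℂ ψ (ball c r) :=
    (hφ.sub_const _).sub ((differentiableOn_id.sub_const c).smul_const _)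
  have hψmaps : MapsTo ψ (ball c r) (closedBall (ψ c) (4 * M)) := fun w hw => by
    have hw' : ‖w - c‖ ≤ r := by simpa [dist_eq_norm] using (mem_ball.mp hw).le
    have hlin : ‖(w - c) • deriv φ c‖ ≤ 2 * M := by
      rw [norm_smul]
      calc ‖w - c‖ * ‖deriv φ c‖ ≤ r * (2 * M / r) := by gcongr
        _ = 2 * M := by field_simp
    have hφw : ‖φ w - φ c‖ ≤ 2 * M := by simpa [dist_eq_norm] using hmaps hw
    rw [mem_closedBall, dist_eq_norm]
    simp only [ψ, sub_self, zero_smul, sub_zero]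
    linarith [norm_sub_le (φ w - φ c) ((w - c) • deriv φ c)]
  have hψo : (ψ · - ψ c) =o[𝓝 c] (fun w => ‖w - c‖ ^ 1) := by
    have := ((hφ.differentiableAt (isOpen_ball.mem_nhds hc)).hasDerivAt).isLittleO
    simpa [ψ, pow_one, Asymptotics.isLittleO_norm_right] using this
  have := Complex.dist_le_mul_div_pow_of_mapsTo_ball_of_isLittleO hψd hψmaps hψo hz
  simpa [ψ, dist_eq_norm] using this

theorem norm_slope_sub_deriv_le {φ : ℂ → E} {c z : ℂ} {r M : ℝ}
    (hφ : DifferentiableOn ℂ φ (ball c r)) (hM : ∀ w ∈ ball c r, ‖φ w‖ ≤ M)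
    (hz : z ∈ ball c r) (hzc : z ≠ c) :
    ‖slope φ c z - deriv φ c‖ ≤ 4 * M / r ^ 2 * ‖z - c‖ := by
  have hzc' : ‖z - c‖ ≠ 0 := norm_ne_zero_iff.mpr (sub_ne_zero.mpr hzc)
  calc ‖slope φ c z - deriv φ c‖ = ‖z - c‖⁻¹ * ‖φ z - φ c - (z - c) • deriv φ c‖ := by
        rw [← norm_inv, ← norm_smul, smul_sub, smul_sub, inv_smul_smul₀ (sub_ne_zero.mpr hzc),
          slope_def_module, smul_sub]
    _ ≤ ‖z - c‖⁻¹ * (4 * M * (‖z - c‖ / r) ^ 2) := by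
        gcongr; exact norm_sub_sub_smul_deriv_le hφ hM hz
    _ = 4 * M / r ^ 2 * ‖z - c‖ := by field_simp

theorem tendstoUniformlyOn_slope_deriv {ι : Type*} {φ : ι → ℂ → E} {K : Set ι} {c : ℂ} {r M : ℝ}
    (hφ : ∀ i ∈ K, DifferentiableOn ℂ (φ i) (ball c r))
    (hM : ∀ i ∈ K, ∀ w ∈ ball c r, ‖φ i w‖ ≤ M) (hr : 0 < r) :
    TendstoUniformlyOn (fun z i => slope (φ i) c z) (fun i => deriv (φ i) c) (𝓝[≠] c) K := by
  rw [Metric.tendstoUniformlyOn_iff]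
  intro ε hε
  have hbound : Tendsto (fun z => 4 * M / r ^ 2 * ‖z - c‖) (𝓝[≠] c) (𝓝 0) := by
    have : ContinuousAt (fun z => 4 * M / r ^ 2 * ‖z - c‖) c := by fun_prop
    simpa using this.tendsto.mono_left nhdsWithin_le_nhds
  filter_upwards [hbound.eventually (gt_mem_nhds hε), self_mem_nhdsWithin,
    nhdsWithin_le_nhds (ball_mem_nhds c hr)] with z hzε hzc hz i hi
  rw [dist_comm, dist_eq_norm]
  exact (norm_slope_sub_deriv_le (hφ i hi) (hM i hi) hz hzc).trans_lt hzε

theorem hasDerivAt_deriv_swap_of_differentiableOn [CompleteSpace E] {H : ℂ → ℂ → E}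
    {D : Set (ℂ × ℂ)} (hD : IsOpen D) (hH : DifferentiableOn ℂ (Function.uncurry H) D)
    {z₀ y₀ : ℂ} (hp : (z₀, y₀) ∈ D) :
    HasDerivAt (fun y => deriv (fun u => H u y) z₀) (deriv (fun u => deriv (H u) y₀) z₀) y₀ := by
  obtain ⟨ε, hε, hball⟩ := Metric.isOpen_iff.mp hD _ hp
  have hr : 0 < ε / 2 := half_pos hε
  have hK : closedBall z₀ (ε / 2) ×ˢ closedBall y₀ (ε / 2) ⊆ D := fun p hp' => hball <| by
    rw [mem_ball, Prod.dist_eq, max_lt_iff]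
    exact ⟨(mem_closedBall.mp hp'.1).trans_lt (half_lt_self hε),
      (mem_closedBall.mp hp'.2).trans_lt (half_lt_self hε)⟩
  obtain ⟨M, hM⟩ := ((isCompact_closedBall z₀ _).prod (isCompact_closedBall y₀ _)
    ).exists_bound_of_continuousOn (hH.continuousOn.mono hK)
  have hdiff : ∀ u ∈ closedBall z₀ (ε / 2), ∀ y ∈ ball y₀ (ε / 2),
      DifferentiableAt ℂ (Function.uncurry H) (u, y) := fun u hu y hy =>
    hH.differentiableAt (hD.mem_nhds (hK ⟨hu, ball_subset_closedBall hy⟩))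
  have hslope : ∀ y ∈ ball y₀ (ε / 2), ∀ u ∈ ball z₀ (ε / 2),
      HasDerivAt (fun u => slope (H u) y₀ y)
        (slope (fun y => deriv (fun u => H u y) u) y₀ y) u := by
    intro y hy u hu
    have hpartial : ∀ y ∈ ball y₀ (ε / 2),
        HasDerivAt (fun u => H u y) (deriv (fun u => H u y) u) u := fun y hy => by
      have : DifferentiableAt ℂ (Function.uncurry H ∘ fun u => (u, y)) u :=
        (hdiff u (ball_subset_closedBall hu) y hy).comp u (by fun_prop)
      exact this.hasDerivAt
    simp only [slope_def_module]
    exact ((hpartial y hy).sub (hpartial y₀ (mem_ball_self hr))).const_smul _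
  have hunif := tendstoUniformlyOn_slope_deriv (φ := H) (K := closedBall z₀ (ε / 2))
    (fun u hu => fun y hy => ((hdiff u hu y hy).comp y
      ((differentiableAt_const u).prodMk differentiableAt_id)).differentiableWithinAt)
    (fun u hu y hy => hM (u, y) ⟨hu, ball_subset_closedBall hy⟩) hr
  have hderiv := ((hunif.tendstoLocallyUniformlyOn.mono ball_subset_closedBall).deriv ?_
    isOpen_ball).tendsto_at (mem_ball_self hr)
  · rw [hasDerivAt_iff_tendsto_slope]
    refine hderiv.congr' ?_
    filter_upwards [nhdsWithin_le_nhds (ball_mem_nhds y₀ hr)] with y hy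
    exact (hslope y hy z₀ (mem_ball_self hr)).deriv
  · filter_upwards [nhdsWithin_le_nhds (ball_mem_nhds y₀ hr)] with y hy u hu
    exact (hslope y hy u hu).differentiableAt.differentiableWithinAt

theorem hasDerivAt_uncurry_comp_prodMk {F : ℝ → ℂ → E} {γ : ℝ → ℂ} {γ' : ℂ} {t : ℝ}
    (hF : DifferentiableAt ℝ (Function.uncurry F) (t, γ t)) (hFt : DifferentiableAt ℂ (F t) (γ t))
    (hγ : HasDerivAt γ γ' t) :
    HasDerivAt (fun s => F s (γ s)) (deriv (fun s => F s (γ t)) t + γ' • deriv (F t) (γ t)) t := by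
  set L := fderiv ℝ (Function.uncurry F) (t, γ t)
  have htime : L (1, 0) = deriv (fun s => F s (γ t)) t := by
    have hsection := hF.hasFDerivAt.comp_hasDerivAt t
      ((hasDerivAt_id t).prodMk (hasDerivAt_const t (γ t)))
    exact hsection.deriv.symm
  have hspace : L (0, γ') = γ' • deriv (F t) (γ t) := by
    have hslice : HasFDerivAt (F t) (L.comp (.inr ℝ ℝ ℂ)) (γ t) :=
      hF.hasFDerivAt.comp (γ t) (hasFDerivAt_prodMk_right t (γ t))
    simpa using congrArg (· γ') (hslice.unique (hFt.hasFDerivAt.restrictScalars ℝ))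
  have hcurve : HasDerivAt (fun s => F s (γ s)) (L (1, γ')) t :=
    hF.hasFDerivAt.comp_hasDerivAt (l := Function.uncurry F) t ((hasDerivAt_id t).prodMk hγ)
  rwa [← htime, ← hspace, ← map_add, Prod.mk_add_mk, add_zero, zero_add]

end

theorem stmt_5_general
    (A Ω : Set ℂ) (hAopen : IsOpen A) (hΩopen : IsOpen Ω)
    (a b : ℝ)
    (D : Set (ℂ × ℂ)) (hDopen : IsOpen D)
    (g f : ℝ → ℂ → ℂ)
    (hgC1 : ContDiffOn ℝ 1 (fun p : ℝ × ℂ => g p.1 p.2) (Set.Ioo a b ×ˢ A))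
    (hfC1 : ContDiffOn ℝ 1 (fun p : ℝ × ℂ => f p.1 p.2) (Set.Ioo a b ×ˢ A))
    (hghol : ∀ t ∈ Set.Ioo a b, DifferentiableOn ℂ (g t) A)
    (hfhol : ∀ t ∈ Set.Ioo a b, DifferentiableOn ℂ (f t) A)
    (hgd : ∀ t ∈ Set.Ioo a b, ∀ w ∈ A, deriv (g t) w ≠ 0)
    (hfd : ∀ t ∈ Set.Ioo a b, ∀ w ∈ A, deriv (f t) w ≠ 0)
    (hmemD : ∀ t ∈ Set.Ioo a b, ∀ w ∈ A, (g t w, f t w) ∈ D)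
    (h : ℝ → ℂ → ℂ)
    (hhC1 : ContDiffOn ℝ 1 (fun p : ℝ × ℂ => h p.1 p.2) (Set.Ioo a b ×ˢ Ω))
    (hhA : ∀ t ∈ Set.Ioo a b, ∀ z ∈ Ω, h t z ∈ A)
    (hinv : ∀ t ∈ Set.Ioo a b, ∀ z ∈ Ω, g t (h t z) = z)
    (H : ℂ → ℂ → ℂ)
    (hH : DifferentiableOn ℂ (fun p : ℂ × ℂ => H p.1 p.2) D)
    (hH12 : ∀ p ∈ D, deriv (fun w => deriv (H w) p.2) p.1 ≠ 0)
    (P : ℂ → ℂ)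
    (hflow : ∀ t ∈ Set.Ioo a b, ∀ w ∈ A,
      deriv (fun s => g s w) t / deriv (g t) w
          - deriv (fun s => f s w) t / deriv (f t) w
        = -deriv P w / (deriv (f t) w * deriv (g t) w
            * deriv (fun z => deriv (H z) (f t w)) (g t w))) :
    ∀ t ∈ Set.Ioo a b, ∀ z ∈ Ω,
      deriv (fun s => deriv (fun u => H u (f s (h s z))) z) t
        = deriv P (h t z) * deriv (h t) z := by
  intro t ht z hz
  have hw : h t z ∈ A := hhA t ht z hz
  have hC1 : ∀ {F : ℝ → ℂ → ℂ} {U : Set ℂ}, IsOpen U →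
      ContDiffOn ℝ 1 (fun p : ℝ × ℂ => F p.1 p.2) (Ioo a b ×ˢ U) →
      ∀ x ∈ U, DifferentiableAt ℝ (Function.uncurry F) (t, x) := fun hU hF x hx =>
    (hF.differentiableOn one_ne_zero).differentiableAt ((isOpen_Ioo.prod hU).mem_nhds ⟨ht, hx⟩)
  have hgw : DifferentiableAt ℂ (g t) (h t z) := (hghol t ht).differentiableAt (hAopen.mem_nhds hw)
  have hfw : DifferentiableAt ℂ (f t) (h t z) := (hfhol t ht).differentiableAt (hAopen.mem_nhds hw)
  have hh_t : HasDerivAt (fun s => h s z) (deriv (fun s => h s z) t) t := by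
    have : DifferentiableAt ℝ (Function.uncurry h ∘ fun s => (s, z)) t :=
      (hC1 hΩopen hhC1 z hz).comp t (by fun_prop)
    exact this.hasDerivAt
  have hh_z : HasDerivAt (h t) (deriv (g t) (h t z))⁻¹ z := by
    have hcont : ContinuousAt (Function.uncurry h ∘ fun z' => (t, z')) z :=
      (hC1 hΩopen hhC1 z hz).continuousAt.comp (by fun_prop)
    refine HasDerivAt.of_local_left_inverse hcont hgw.hasDerivAt (hgd t ht _ hw) ?_
    filter_upwards [hΩopen.mem_nhds hz] with z' hz' using hinv t ht z' hz'
  have hg_t :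
      deriv (fun s => g s (h t z)) t + deriv (fun s => h s z) t * deriv (g t) (h t z) = 0 := by
    refine (hasDerivAt_uncurry_comp_prodMk (hC1 hAopen hgC1 _ hw) hgw hh_t).unique ?_
    refine (hasDerivAt_const t z).congr_of_eventuallyEq ?_
    filter_upwards [isOpen_Ioo.mem_nhds ht] with s hs using hinv s hs z hz
  have hf_t := hasDerivAt_uncurry_comp_prodMk (hC1 hAopen hfC1 _ hw) hfw hh_t
  have hD : (z, f t (h t z)) ∈ D := by simpa only [hinv t ht z hz] using hmemD t ht _ hw
  have hLHS : HasDerivAt (fun s => deriv (fun u => H u (f s (h s z))) z) _ t :=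
    (hasDerivAt_deriv_swap_of_differentiableOn hDopen hH hD).comp
      (h₂ := fun y => deriv (fun u => H u y) z) t hf_t
  have hrel := hflow t ht _ hw
  rw [hinv t ht z hz] at hrel
  field_simp [hH12 _ hD, hgd t ht _ hw, hfd t ht _ hw] at hrel
  rw [hLHS.deriv, hh_z.deriv, smul_eq_mul, eq_mul_inv_iff_mul_eq₀ (hgd t ht _ hw)]
  linear_combination
    -hrel + deriv (fun u => deriv (H u) (f t (h t z))) z * deriv (f t) (h t z) * hg_t

/-- Key computation in the proof that `∂_n t_m = δ_{n,m}`: if the C¹ family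
`(g(t,·), f(t,·))` of functions holomorphic in `w` satisfies the deformation relation
`∂_t g/∂_w g - ∂_t f/∂_w f = -P'(w)/(∂_w f · ∂_w g · ∂_{z₁}∂_{z₂}ℋ(g, f))` with generator
`P`, and `h(t,·)` is a right inverse of `g(t,·)` (`g(t, h(t,z)) = z`), then
`∂_t [∂_{z₁}ℋ(z, f(t, h(t,z)))] = P'(h(t,z)) · ∂_z h(t,z)`. -/
theorem stmt_5
    (A Ω : Set ℂ) (hAopen : IsOpen A) (hA0 : ∀ w ∈ A, w ≠ 0) (hΩopen : IsOpen Ω)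
    (a b : ℝ)
    (D : Set (ℂ × ℂ)) (hDopen : IsOpen D) (hD0 : ∀ p ∈ D, p.1 ≠ 0 ∧ p.2 ≠ 0)
    (g f : ℝ → ℂ → ℂ)
    (hgC1 : ContDiffOn ℝ 1 (fun p : ℝ × ℂ => g p.1 p.2) (Set.Ioo a b ×ˢ A))
    (hfC1 : ContDiffOn ℝ 1 (fun p : ℝ × ℂ => f p.1 p.2) (Set.Ioo a b ×ˢ A))
    (hghol : ∀ t ∈ Set.Ioo a b, DifferentiableOn ℂ (g t) A)
    (hfhol : ∀ t ∈ Set.Ioo a b, DifferentiableOn ℂ (f t) A)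
    (hg0 : ∀ t ∈ Set.Ioo a b, ∀ w ∈ A, g t w ≠ 0)
    (hf0 : ∀ t ∈ Set.Ioo a b, ∀ w ∈ A, f t w ≠ 0)
    (hgd : ∀ t ∈ Set.Ioo a b, ∀ w ∈ A, deriv (g t) w ≠ 0)
    (hfd : ∀ t ∈ Set.Ioo a b, ∀ w ∈ A, deriv (f t) w ≠ 0)
    (hmemD : ∀ t ∈ Set.Ioo a b, ∀ w ∈ A, (g t w, f t w) ∈ D)
    (h : ℝ → ℂ → ℂ)
    (hhC1 : ContDiffOn ℝ 1 (fun p : ℝ × ℂ => h p.1 p.2) (Set.Ioo a b ×ˢ Ω))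
    (hhA : ∀ t ∈ Set.Ioo a b, ∀ z ∈ Ω, h t z ∈ A)
    (hinv : ∀ t ∈ Set.Ioo a b, ∀ z ∈ Ω, g t (h t z) = z)
    (H : ℂ → ℂ → ℂ)
    (hH : DifferentiableOn ℂ (fun p : ℂ × ℂ => H p.1 p.2) D)
    (hH12 : ∀ p ∈ D, deriv (fun w => deriv (H w) p.2) p.1 ≠ 0)
    (P : ℂ → ℂ) (hP : DifferentiableOn ℂ P A)
    (hflow : ∀ t ∈ Set.Ioo a b, ∀ w ∈ A,
      deriv (fun s => g s w) t / deriv (g t) w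
          - deriv (fun s => f s w) t / deriv (f t) w
        = -deriv P w / (deriv (f t) w * deriv (g t) w
            * deriv (fun z => deriv (H z) (f t w)) (g t w))) :
    ∀ t ∈ Set.Ioo a b, ∀ z ∈ Ω,
      deriv (fun s => deriv (fun u => H u (f s (h s z))) z) t
        = deriv P (h t z) * deriv (h t) z :=
  stmt_5_general A Ω hAopen hΩopen a b D hDopen g f hgC1 hfC1 hghol hfhol hgd hfd hmemD h hhC1 hhA
    hinv H hH hH12 P hflow
end

section
/- Let A ⊆ ℂ∖{0} and Ω ⊆ ℂ be open, I ⊆ ℝ an open interval, and D ⊆ (ℂ∖{0})² open. Let g, f : I×A → ℂ∖{0} be C¹ in (t,w) and holomorphic in w for each fixed t, with ∂_wg and ∂_wf nowhere zero and (g(t,w), f(t,w)) ∈ D for all (t,w). Let k : I×Ω → A be C¹ with f(t, k(t,z)) = z for all (t,z) ∈ I×Ω. Let ℋ be holomorphic on D with ∂_{z₁}∂_{z₂}ℋ nowhere zero, and let P : A → ℂ be holomorphic. Assume that for all (t,w) ∈ I×A: ∂_tg(t,w)/∂_wg(t,w) − ∂_tf(t,w)/∂_wf(t,w) = −P′(w)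 / ( ∂_wf(t,w) · ∂_wg(t,w) · ∂_{z₁}∂_{z₂}ℋ(g(t,w), f(t,w)) ). Then for all (t,z) ∈ I×Ω: −∂_t [ ∂_{z₂}ℋ( g(t, k(t,z)), z ) ] = P′(k(t,z)) · ∂_z k(t,z). -/
/-!
Write `w = k(t,z)`. Differentiating `f(s, k(s,z)) = z` in `s` and in `z` gives
`∂_t k = -∂_t f / ∂_w f` and `∂_z k = 1 / ∂_w f`. By the chain rule the left-hand side is
`-(∂_t g + ∂_t k · ∂_w g) · ∂_{z₁}∂_{z₂}ℋ(g, f)`, and `∂_t g - (∂_t f / ∂_w f) ∂_w g` is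
`∂_w g` times the left-hand side of the deformation relation, which turns it into `P'(w) / ∂_w f`.
-/

open Filter Topology

section PartialDerivatives

variable {𝕜 : Type*} [NontriviallyNormedField 𝕜] [NormedAlgebra ℝ 𝕜]
  {F : ℝ → 𝕜 → 𝕜} {γ : ℝ → 𝕜} {t : ℝ} {w F' γ' : 𝕜}

theorem hasDerivAt_fst_of_differentiableAt_uncurry
    (hF : DifferentiableAt ℝ (fun p : ℝ × 𝕜 => F p.1 p.2) (t, w)) :
    HasDerivAt (fun s => F s w)
      (fderiv ℝ (fun p : ℝ × 𝕜 => F p.1 p.2) (t, w) (1, 0)) t :=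
  hF.hasFDerivAt.comp_hasDerivAt (f := fun s => (s, w)) t
    ((hasDerivAt_id' t).prodMk (hasDerivAt_const t w))

theorem continuousAt_snd_of_differentiableAt_uncurry
    (hF : DifferentiableAt ℝ (fun p : ℝ × 𝕜 => F p.1 p.2) (t, w)) :
    ContinuousAt (F t) w :=
  hF.continuousAt.comp (Continuous.prodMk_right t).continuousAt

theorem fderiv_uncurry_apply_zero_snd
    (hF : DifferentiableAt ℝ (fun p : ℝ × 𝕜 => F p.1 p.2) (t, w))
    (hw : HasDerivAt (F t) F' w) (u : 𝕜) :
    fderiv ℝ (fun p : ℝ × 𝕜 => F p.1 p.2) (t, w) (0, u) = u * F' := by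
  have hslice := (hF.hasFDerivAt.comp w (hasFDerivAt_prodMk_right t w)).unique
    (hw.hasFDerivAt.restrictScalars ℝ)
  simpa [smul_eq_mul] using congrArg (fun L : 𝕜 →L[ℝ] 𝕜 => L u) hslice

theorem hasDerivAt_uncurry_comp_curve
    (hF : DifferentiableAt ℝ (fun p : ℝ × 𝕜 => F p.1 p.2) (t, γ t))
    (hw : HasDerivAt (F t) F' (γ t)) (hγ : HasDerivAt γ γ' t) :
    HasDerivAt (fun s => F s (γ s)) (deriv (fun s => F s (γ t)) t + γ' * F') t := by
  set L := fderiv ℝ (fun p : ℝ × 𝕜 => F p.1 p.2) (t, γ t)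
  have hcurve : HasDerivAt (fun s => F s (γ s)) (L (1, γ')) t :=
    hF.hasFDerivAt.comp_hasDerivAt (f := fun s => (s, γ s)) t ((hasDerivAt_id' t).prodMk hγ)
  have hsplit : L (1, γ') = L (1, 0) + L (0, γ') := by
    rw [← map_add, Prod.mk_add_mk, add_zero, zero_add]
  rwa [(hasDerivAt_fst_of_differentiableAt_uncurry hF).deriv,
    ← fderiv_uncurry_apply_zero_snd hF hw, ← hsplit]

variable {f k : ℝ → 𝕜 → 𝕜} {z f' : 𝕜}

theorem hasDerivAt_snd_of_rightInverse
    (hk : DifferentiableAt ℝ (fun p : ℝ × 𝕜 => k p.1 p.2) (t, z))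
    (hf : HasDerivAt (f t) f' (k t z)) (hf' : f' ≠ 0)
    (hinv : ∀ᶠ p : ℝ × 𝕜 in 𝓝 (t, z), f p.1 (k p.1 p.2) = p.2) :
    HasDerivAt (k t) f'⁻¹ z :=
  .of_local_left_inverse (continuousAt_snd_of_differentiableAt_uncurry hk) hf hf'
    ((Continuous.prodMk_right t).continuousAt.eventually hinv)

theorem deriv_fst_add_mul_eq_zero_of_rightInverse
    (hf : DifferentiableAt ℝ (fun p : ℝ × 𝕜 => f p.1 p.2) (t, k t z))
    (hf' : HasDerivAt (f t) f' (k t z))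
    (hk : DifferentiableAt ℝ (fun p : ℝ × 𝕜 => k p.1 p.2) (t, z))
    (hinv : ∀ᶠ p : ℝ × 𝕜 in 𝓝 (t, z), f p.1 (k p.1 p.2) = p.2) :
    deriv (fun s => f s (k t z)) t + deriv (fun s => k s z) t * f' = 0 := by
  have hconst : (fun s => f s (k s z)) =ᶠ[𝓝 t] fun _ => z :=
    (Continuous.prodMk_left z).continuousAt.eventually hinv
  have hkt := (hasDerivAt_fst_of_differentiableAt_uncurry hk).differentiableAt.hasDerivAt
  exact ((hasDerivAt_uncurry_comp_curve hf hf' hkt).congr_of_eventuallyEq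
    hconst.symm).unique (hasDerivAt_const t z)

end PartialDerivatives

theorem neg_mul_add_eq_of_deformation {K : Type*} [Field K] {gt ft gw fw kt c p : K}
    (hgw : gw ≠ 0) (hfw : fw ≠ 0) (hc : c ≠ 0) (hkt : ft + kt * fw = 0)
    (hflow : gt / gw - ft / fw = -p / (fw * gw * c)) :
    -(c * (gt + kt * gw)) = p * fw⁻¹ := by
  field_simp at hflow ⊢
  linear_combination (-1 : K) * hflow - c * gw * hkt

theorem stmt_6_general
    (A Ω : Set ℂ) (hAopen : IsOpen A) (hΩopen : IsOpen Ω)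
    (a b : ℝ)
    (D : Set (ℂ × ℂ))
    (g f : ℝ → ℂ → ℂ)
    (hgC1 : ContDiffOn ℝ 1 (fun p : ℝ × ℂ => g p.1 p.2) (Set.Ioo a b ×ˢ A))
    (hfC1 : ContDiffOn ℝ 1 (fun p : ℝ × ℂ => f p.1 p.2) (Set.Ioo a b ×ˢ A))
    (hghol : ∀ t ∈ Set.Ioo a b, DifferentiableOn ℂ (g t) A)
    (hfhol : ∀ t ∈ Set.Ioo a b, DifferentiableOn ℂ (f t) A)
    (hgd : ∀ t ∈ Set.Ioo a b, ∀ w ∈ A, deriv (g t) w ≠ 0)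
    (hfd : ∀ t ∈ Set.Ioo a b, ∀ w ∈ A, deriv (f t) w ≠ 0)
    (hmemD : ∀ t ∈ Set.Ioo a b, ∀ w ∈ A, (g t w, f t w) ∈ D)
    (k : ℝ → ℂ → ℂ)
    (hkC1 : ContDiffOn ℝ 1 (fun p : ℝ × ℂ => k p.1 p.2) (Set.Ioo a b ×ˢ Ω))
    (hkA : ∀ t ∈ Set.Ioo a b, ∀ z ∈ Ω, k t z ∈ A)
    (hinv : ∀ t ∈ Set.Ioo a b, ∀ z ∈ Ω, f t (k t z) = z)
    (H : ℂ → ℂ → ℂ)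
    (hH12 : ∀ p ∈ D, deriv (fun w => deriv (H w) p.2) p.1 ≠ 0)
    (P : ℂ → ℂ)
    (hflow : ∀ t ∈ Set.Ioo a b, ∀ w ∈ A,
      deriv (fun s => g s w) t / deriv (g t) w
          - deriv (fun s => f s w) t / deriv (f t) w
        = -deriv P w / (deriv (f t) w * deriv (g t) w
            * deriv (fun z => deriv (H z) (f t w)) (g t w))) :
    ∀ t ∈ Set.Ioo a b, ∀ z ∈ Ω,
      -deriv (fun s => deriv (H (g s (k s z))) z) t
        = deriv P (k t z) * deriv (k t) z := by
  intro t ht z hz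
  set w := k t z
  have hwA : w ∈ A := hkA t ht z hz
  have hfkz : f t w = z := hinv t ht z hz
  have htw : Set.Ioo a b ×ˢ A ∈ 𝓝 (t, w) := (isOpen_Ioo.prod hAopen).mem_nhds ⟨ht, hwA⟩
  have htz : Set.Ioo a b ×ˢ Ω ∈ 𝓝 (t, z) := (isOpen_Ioo.prod hΩopen).mem_nhds ⟨ht, hz⟩
  have hg := (hgC1.differentiableOn one_ne_zero).differentiableAt htw
  have hf := (hfC1.differentiableOn one_ne_zero).differentiableAt htw
  have hk := (hkC1.differentiableOn one_ne_zero).differentiableAt htz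
  have hg_w := ((hghol t ht).differentiableAt (hAopen.mem_nhds hwA)).hasDerivAt
  have hf_w := ((hfhol t ht).differentiableAt (hAopen.mem_nhds hwA)).hasDerivAt
  have hinv_near : ∀ᶠ p : ℝ × ℂ in 𝓝 (t, z), f p.1 (k p.1 p.2) = p.2 := by
    filter_upwards [htz] with p hp using hinv p.1 hp.1 p.2 hp.2
  have hc : deriv (fun y => deriv (H y) z) (g t w) ≠ 0 :=
    hH12 (g t w, z) (hfkz ▸ hmemD t ht w hwA)
  have hkt := (hasDerivAt_fst_of_differentiableAt_uncurry hk).differentiableAt.hasDerivAt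
  have hcomp : HasDerivAt (fun s => deriv (H (g s (k s z))) z)
      (deriv (fun y => deriv (H y) z) (g t w)
        * (deriv (fun s => g s w) t + deriv (fun s => k s z) t * deriv (g t) w)) t :=
    (differentiableAt_of_deriv_ne_zero hc).hasDerivAt.comp (h := fun s => g s (k s z)) t
      (hasDerivAt_uncurry_comp_curve hg hg_w hkt)
  rw [hcomp.deriv, (hasDerivAt_snd_of_rightInverse hk hf_w (hfd t ht w hwA) hinv_near).deriv]
  refine neg_mul_add_eq_of_deformation (hgd t ht w hwA) (hfd t ht w hwA) hc
    (deriv_fst_add_mul_eq_zero_of_rightInverse hf hf_w hk hinv_near) ?_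
  simpa only [hfkz] using hflow t ht w hwA

/-- Companion identity to the key computation in the proof that `∂_n t_m = δ_{n,m}`:
if the C¹ family `(g(t,·), f(t,·))` of functions holomorphic in `w` satisfies the
deformation relation with generator `P`, and `k(t,·)` is a right inverse of `f(t,·)`
(`f(t, k(t,z)) = z`), then `-∂_t [∂_{z₂}ℋ(g(t, k(t,z)), z)] = P'(k(t,z)) · ∂_z k(t,z)`. -/
theorem stmt_6
    (A Ω : Set ℂ) (hAopen : IsOpen A) (hA0 : ∀ w ∈ A, w ≠ 0) (hΩopen : IsOpen Ω)
    (a b : ℝ)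
    (D : Set (ℂ × ℂ)) (hDopen : IsOpen D) (hD0 : ∀ p ∈ D, p.1 ≠ 0 ∧ p.2 ≠ 0)
    (g f : ℝ → ℂ → ℂ)
    (hgC1 : ContDiffOn ℝ 1 (fun p : ℝ × ℂ => g p.1 p.2) (Set.Ioo a b ×ˢ A))
    (hfC1 : ContDiffOn ℝ 1 (fun p : ℝ × ℂ => f p.1 p.2) (Set.Ioo a b ×ˢ A))
    (hghol : ∀ t ∈ Set.Ioo a b, DifferentiableOn ℂ (g t) A)
    (hfhol : ∀ t ∈ Set.Ioo a b, DifferentiableOn ℂ (f t) A)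
    (hg0 : ∀ t ∈ Set.Ioo a b, ∀ w ∈ A, g t w ≠ 0)
    (hf0 : ∀ t ∈ Set.Ioo a b, ∀ w ∈ A, f t w ≠ 0)
    (hgd : ∀ t ∈ Set.Ioo a b, ∀ w ∈ A, deriv (g t) w ≠ 0)
    (hfd : ∀ t ∈ Set.Ioo a b, ∀ w ∈ A, deriv (f t) w ≠ 0)
    (hmemD : ∀ t ∈ Set.Ioo a b, ∀ w ∈ A, (g t w, f t w) ∈ D)
    (k : ℝ → ℂ → ℂ)
    (hkC1 : ContDiffOn ℝ 1 (fun p : ℝ × ℂ => k p.1 p.2) (Set.Ioo a b ×ˢ Ω))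
    (hkA : ∀ t ∈ Set.Ioo a b, ∀ z ∈ Ω, k t z ∈ A)
    (hinv : ∀ t ∈ Set.Ioo a b, ∀ z ∈ Ω, f t (k t z) = z)
    (H : ℂ → ℂ → ℂ)
    (hH : DifferentiableOn ℂ (fun p : ℂ × ℂ => H p.1 p.2) D)
    (hH12 : ∀ p ∈ D, deriv (fun w => deriv (H w) p.2) p.1 ≠ 0)
    (P : ℂ → ℂ) (hP : DifferentiableOn ℂ P A)
    (hflow : ∀ t ∈ Set.Ioo a b, ∀ w ∈ A,
      deriv (fun s => g s w) t / deriv (g t) w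
          - deriv (fun s => f s w) t / deriv (f t) w
        = -deriv P w / (deriv (f t) w * deriv (g t) w
            * deriv (fun z => deriv (H z) (f t w)) (g t w))) :
    ∀ t ∈ Set.Ioo a b, ∀ z ∈ Ω,
      -deriv (fun s => deriv (H (g s (k s z))) z) t
        = deriv P (k t z) * deriv (k t) z :=
  stmt_6_general A Ω hAopen hΩopen a b D g f hgC1 hfC1 hghol hfhol hgd hfd hmemD k hkC1 hkA hinv H
    hH12 P hflow
end

section
/- Let A ⊆ ℂ∖{0} be an open annulus containing the unit circle, I ⊆ ℝ an open interval, and D ⊆ (ℂ∖{0})² open. Let g, f : I×A → ℂ∖{0} be C¹ in (t,w) and holomorphic in w for each fixed t, with ∂_wg and ∂_wf nowhere zero and (g(t,w), f(t,w)) ∈ D. Let ℋ be holomorphic on D with ∂_{z₁}∂_{z₂}ℋ nowhere zero, let P : A → ℂ be holomorphic, and assume that for all (t,w): ∂_tg/∂_wg − ∂_tf/∂_wf = −P′(w)/( ∂_wf · ∂_wg · ∂_{z₁}∂_{z₂}ℋ(g,f) ). Let Φ be holomorphic on an open set containing the image of g and Ψ holomorphic on an open set containing the image of f. Then for each t ∈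 I: d/dt ∮_{S¹} { ∂_{z₁}ℋ(g,f)·∂_wg·Φ(g) + ∂_{z₂}ℋ(g,f)·∂_wf·Ψ(f) } dw = ∮_{S¹} P′(w) ( Φ(g(t,w)) − Ψ(f(t,w)) ) dw. -/
/-!
Pull the holomorphic 1-form `ω = ∂₁ℋ·Φ(z₁) dz₁ + ∂₂ℋ·Ψ(z₂) dz₂` back along
`(t, w) ↦ (g(t,w), f(t,w))`; the integrand is its `dw`-component `ω_w`, and `ω_t` is its
`dt`-component. Differentiating under the integral sign, `∂_t ω_w = ∂_w ω_t + curl`, and by the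
symmetry `∂₁∂₂ℋ = ∂₂∂₁ℋ` the curl is `∂₁∂₂ℋ(g,f)·(Ψ(f) - Φ(g))·(g_t f_w - g_w f_t)`, which the
deformation relation turns into `P'(w)(Φ(g) - Ψ(f))`. The exact term `∂_w ω_t` integrates to zero
over the closed circle.

The analytic input: the partial derivatives of `ℋ` are again holomorphic, with symmetric mixed
partials (Weierstrass's theorem on locally uniform limits and Osgood's lemma), and for the C¹
holomorphic families `g`, `f` the derivatives in `t` and `w` commute.
-/

open Set Metric Filter Topology Function Asymptotics

-- `u t → u t₀` locally uniformly, hence so do the derivatives (Weierstrass).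
theorem continuousOn_deriv_of_continuousOn_uncurry {α : Type*} [UniformSpace α]
    [LocallyCompactSpace α] {T : Set α} {U : Set ℂ} (hT : IsOpen T) (hU : IsOpen U)
    {u : α → ℂ → ℂ} (hc : ContinuousOn (uncurry u) (T ×ˢ U))
    (hd : ∀ t ∈ T, DifferentiableOn ℂ (u t) U) :
    ContinuousOn (fun p : α × ℂ => deriv (u p.1) p.2) (T ×ˢ U) := by
  rintro ⟨t₀, w₀⟩ ⟨ht₀, hw₀⟩
  have hT₀ : T ∈ 𝓝 t₀ := hT.mem_nhds ht₀
  have hu : TendstoLocallyUniformlyOn u (u t₀) (𝓝 t₀) U := by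
    refine (tendstoLocallyUniformlyOn_iff_forall_isCompact hU).2 fun K hKU hK => ?_
    obtain ⟨N, hN, hNT, hNc⟩ := local_compact_nhds hT₀
    have := (hNc.prod hK).uniformContinuousOn_of_continuous (hc.mono (prod_mono hNT hKU))
    simpa only [nhdsWithin_eq_nhds.2 hN] using this.tendstoUniformlyOn (mem_of_mem_nhds hN)
  have hu' := hu.deriv (eventually_of_mem hT₀ hd) hU
  have hlift : TendstoLocallyUniformlyOn (fun p : α × ℂ => deriv (u p.1)) (deriv (u t₀))
      (𝓝 (t₀, w₀)) U := fun V hV w hw =>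
    (hu' V hV w hw).imp fun _ ⟨hmem, hev⟩ =>
      ⟨hmem, (continuous_fst.tendsto (t₀, w₀)).eventually hev⟩
  have hcont : ContinuousWithinAt (deriv (u t₀)) U w₀ :=
    ((hd t₀ ht₀).analyticOnNhd hU).deriv.continuousOn w₀ hw₀
  refine (hlift.tendsto_comp hcont hw₀ ?_).mono_left nhdsWithin_le_nhds
  rw [hU.nhdsWithin_eq hw₀]
  exact continuousAt_snd

theorem Convex.norm_image_sub_sub_smul_le {𝕜 G : Type*} [RCLike 𝕜] [NormedAddCommGroup G]
    [NormedSpace 𝕜 G] {f f' : 𝕜 → G} {s : Set 𝕜} {x y : 𝕜} {c : G} {C : ℝ}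
    (hf : ∀ z ∈ s, HasDerivWithinAt f (f' z) s z) (bound : ∀ z ∈ s, ‖f' z - c‖ ≤ C)
    (hs : Convex ℝ s) (xs : x ∈ s) (ys : y ∈ s) :
    ‖f y - f x - (y - x) • c‖ ≤ C * ‖y - x‖ := by
  have hg : ∀ z ∈ s, HasDerivWithinAt (fun z => f z - z • c) (f' z - c) s z := fun z hz => by
    have := (hf z hz).sub ((hasDerivWithinAt_id z s).smul_const c)
    rwa [one_smul] at this
  convert hs.norm_image_sub_le_of_norm_hasDerivWithin_le hg bound xs ys using 2
  rw [sub_smul]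
  abel

section Parametric

variable {𝕜 : Type*} [RCLike 𝕜] [NormedAlgebra 𝕜 ℂ]

theorem tendstoLocallyUniformlyOn_slope {T : Set 𝕜} {U : Set ℂ} (hT : IsOpen T) (hU : IsOpen U)
    {u u' : 𝕜 → ℂ → ℂ} (hu : ∀ s ∈ T, ∀ w ∈ U, HasDerivAt (fun τ => u τ w) (u' s w) s)
    (hu' : ContinuousOn (uncurry u') (T ×ˢ U)) {s₀ : 𝕜} (hs₀ : s₀ ∈ T) :
    TendstoLocallyUniformlyOn (fun s w => slope (fun τ => u τ w) s₀ s) (u' s₀) (𝓝[≠] s₀) U := by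
  refine (tendstoLocallyUniformlyOn_iff_forall_isCompact hU).2 fun K hKU hK => ?_
  refine Metric.tendstoUniformlyOn_iff.2 fun ε hε => ?_
  obtain ⟨ρ, hρ, hρT⟩ := Metric.isOpen_iff.1 hT s₀ hs₀
  have hρT' : closedBall s₀ (ρ / 2) ⊆ T := (closedBall_subset_ball (by linarith)).trans hρT
  have huc := ((isCompact_closedBall s₀ (ρ / 2)).prod hK).uniformContinuousOn_of_continuous
    (hu'.mono (prod_mono hρT' hKU))
  obtain ⟨δ, hδ, hδu⟩ := Metric.uniformContinuousOn_iff.1 huc (ε / 2) (half_pos hε)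
  set r := min δ (ρ / 2)
  have hr : 0 < r := lt_min hδ (half_pos hρ)
  have hrρ : ball s₀ r ⊆ closedBall s₀ (ρ / 2) :=
    (ball_subset_ball (min_le_right _ _)).trans ball_subset_closedBall
  filter_upwards [nhdsWithin_le_nhds (ball_mem_nhds s₀ hr), self_mem_nhdsWithin]
    with s hs hne w hw
  have hmvt : ‖u s w - u s₀ w - (s - s₀) • u' s₀ w‖ ≤ ε / 2 * ‖s - s₀‖ := by
    refine (convex_ball s₀ r).norm_image_sub_sub_smul_le
      (fun z hz => (hu z (hρT' (hrρ hz)) w (hKU hw)).hasDerivWithinAt) (fun z hz => ?_)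
      (mem_ball_self hr) hs
    rw [← dist_eq_norm]
    refine (hδu (z, w) ⟨hrρ hz, hw⟩ (s₀, w) ⟨mem_closedBall_self (by linarith), hw⟩ ?_).le
    simpa [Prod.dist_eq] using (mem_ball.1 hz).trans_le (min_le_left _ _)
  have hne' : s - s₀ ≠ 0 := sub_ne_zero.2 hne
  rw [dist_eq_norm', slope_def_module]
  calc ‖(s - s₀)⁻¹ • (u s w - u s₀ w) - u' s₀ w‖
      = ‖(s - s₀)⁻¹ • (u s w - u s₀ w - (s - s₀) • u' s₀ w)‖ := by
        rw [smul_sub _ (u s w - u s₀ w), smul_smul, inv_mul_cancel₀ hne', one_smul]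
    _ = ‖s - s₀‖⁻¹ * ‖u s w - u s₀ w - (s - s₀) • u' s₀ w‖ := by rw [norm_smul, norm_inv]
    _ ≤ ‖s - s₀‖⁻¹ * (ε / 2 * ‖s - s₀‖) := by gcongr
    _ < ε := by
        rw [mul_left_comm, inv_mul_cancel₀ (norm_ne_zero_iff.2 hne'), mul_one]
        linarith

theorem eventually_differentiableOn_slope {T : Set 𝕜} {U : Set ℂ} (hT : IsOpen T)
    {u : 𝕜 → ℂ → ℂ} (hd : ∀ s ∈ T, DifferentiableOn ℂ (u s) U) {s₀ : 𝕜} (hs₀ : s₀ ∈ T) :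
    ∀ᶠ s in 𝓝[≠] s₀, DifferentiableOn ℂ (fun w => slope (fun τ => u τ w) s₀ s) U := by
  filter_upwards [nhdsWithin_le_nhds (hT.mem_nhds hs₀)] with s hs
  exact ((hd s hs).sub (hd s₀ hs₀)).const_smul (s - s₀)⁻¹

theorem differentiableOn_of_hasDerivAt_param {T : Set 𝕜} {U : Set ℂ} (hT : IsOpen T)
    (hU : IsOpen U) {u u' : 𝕜 → ℂ → ℂ}
    (hu : ∀ s ∈ T, ∀ w ∈ U, HasDerivAt (fun τ => u τ w) (u' s w) s)
    (hu' : ContinuousOn (uncurry u') (T ×ˢ U)) (hd : ∀ s ∈ T, DifferentiableOn ℂ (u s) U)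
    {s₀ : 𝕜} (hs₀ : s₀ ∈ T) : DifferentiableOn ℂ (u' s₀) U :=
  (tendstoLocallyUniformlyOn_slope hT hU hu hu' hs₀).differentiableOn
    (eventually_differentiableOn_slope hT hd hs₀) hU

-- The `w`-derivatives of the difference quotients in `s` converge as well (Weierstrass).
theorem hasDerivAt_deriv_param {T : Set 𝕜} {U : Set ℂ} (hT : IsOpen T) (hU : IsOpen U)
    {u u' : 𝕜 → ℂ → ℂ} (hu : ∀ s ∈ T, ∀ w ∈ U, HasDerivAt (fun τ => u τ w) (u' s w) s)
    (hu' : ContinuousOn (uncurry u') (T ×ˢ U)) (hd : ∀ s ∈ T, DifferentiableOn ℂ (u s) U)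
    {s₀ : 𝕜} (hs₀ : s₀ ∈ T) {w : ℂ} (hw : w ∈ U) :
    HasDerivAt (fun s => deriv (u s) w) (deriv (u' s₀) w) s₀ := by
  refine hasDerivAt_iff_tendsto_slope.2 (((tendstoLocallyUniformlyOn_slope hT hU hu hu' hs₀).deriv
    (eventually_differentiableOn_slope hT hd hs₀) hU).tendsto_at hw |>.congr' ?_)
  filter_upwards [nhdsWithin_le_nhds (hT.mem_nhds hs₀)] with s hs
  have h₁ := ((hd s hs).differentiableAt (hU.mem_nhds hw)).hasDerivAt
  have h₀ := ((hd s₀ hs₀).differentiableAt (hU.mem_nhds hw)).hasDerivAt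
  simp only [comp_apply, slope_def_module]
  exact ((h₁.sub h₀).const_smul (s - s₀)⁻¹).deriv

end Parametric

noncomputable def partialFst (F : ℂ → ℂ → ℂ) (z₁ z₂ : ℂ) : ℂ := deriv (fun z => F z z₂) z₁

noncomputable def partialSnd (F : ℂ → ℂ → ℂ) (z₁ z₂ : ℂ) : ℂ := deriv (F z₁) z₂

section TwoVariables

variable {Ω : Set (ℂ × ℂ)} {F : ℂ → ℂ → ℂ}

theorem exists_ball_prod_subset (hΩ : IsOpen Ω) {p : ℂ × ℂ} (hp : p ∈ Ω) :
    ∃ ρ > 0, ball p.1 ρ ×ˢ ball p.2 ρ ⊆ Ω := by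
  obtain ⟨ρ, hρ, hsub⟩ := Metric.isOpen_iff.1 hΩ p hp
  exact ⟨ρ, hρ, by rwa [ball_prod_same]⟩

theorem DifferentiableAt.uncurry_fst {p : ℂ × ℂ} (h : DifferentiableAt ℂ (uncurry F) p) :
    DifferentiableAt ℂ (fun z => F z p.2) p.1 :=
  h.comp (f := fun z => (z, p.2)) p.1 (differentiableAt_id.prodMk (differentiableAt_const _))

theorem DifferentiableAt.uncurry_snd {p : ℂ × ℂ} (h : DifferentiableAt ℂ (uncurry F) p) :
    DifferentiableAt ℂ (F p.1) p.2 :=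
  h.comp (f := fun z => (p.1, z)) p.2 ((differentiableAt_const _).prodMk differentiableAt_id)

theorem DifferentiableOn.uncurry_flip (hF : DifferentiableOn ℂ (uncurry F) Ω) :
    DifferentiableOn ℂ (uncurry (flip F)) (Prod.swap ⁻¹' Ω) :=
  hF.comp (differentiable_snd.prodMk differentiable_fst).differentiableOn fun _ hq => hq

theorem continuousOn_uncurry_partialSnd (hΩ : IsOpen Ω) (hc : ContinuousOn (uncurry F) Ω)
    (hd : ∀ p ∈ Ω, DifferentiableAt ℂ (F p.1) p.2) :
    ContinuousOn (uncurry (partialSnd F)) Ω := by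
  intro p hp
  obtain ⟨ρ, hρ, hsub⟩ := exists_ball_prod_subset hΩ hp
  have := continuousOn_deriv_of_continuousOn_uncurry isOpen_ball isOpen_ball (hc.mono hsub)
    fun z hz w hw => (hd (z, w) (hsub ⟨hz, hw⟩)).differentiableWithinAt
  exact (this.continuousAt (prod_mem_nhds (ball_mem_nhds _ hρ) (ball_mem_nhds _ hρ)))
    |>.continuousWithinAt

theorem continuousOn_uncurry_partialFst (hΩ : IsOpen Ω) (hc : ContinuousOn (uncurry F) Ω)
    (hd : ∀ p ∈ Ω, DifferentiableAt ℂ (fun z => F z p.2) p.1) :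
    ContinuousOn (uncurry (partialFst F)) Ω :=
  (continuousOn_uncurry_partialSnd (F := flip F) (hΩ.preimage continuous_swap)
    (hc.comp continuous_swap.continuousOn fun _ hq => hq) fun q hq => hd q.swap hq).comp
    continuous_swap.continuousOn fun _ hq => by simpa using hq

-- Osgood's lemma. The cross term is controlled by the mean value inequality in `z₁`, using the
-- continuity of `∂₁F`.
theorem hasFDerivAt_uncurry_of_separately (hΩ : IsOpen Ω) (hc : ContinuousOn (uncurry F) Ω)
    (h₁ : ∀ p ∈ Ω, DifferentiableAt ℂ (fun z => F z p.2) p.1)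
    (h₂ : ∀ p ∈ Ω, DifferentiableAt ℂ (F p.1) p.2) {p : ℂ × ℂ} (hp : p ∈ Ω) :
    HasFDerivAt (uncurry F) (partialFst F p.1 p.2 • ContinuousLinearMap.fst ℂ ℂ ℂ
      + partialSnd F p.1 p.2 • ContinuousLinearMap.snd ℂ ℂ ℂ) p := by
  obtain ⟨x, y⟩ := p
  set a := partialFst F x y
  set b := partialSnd F x y
  rw [hasFDerivAt_iff_isLittleO]
  have hsplit : (fun q : ℂ × ℂ => uncurry F q - uncurry F (x, y)
      - (a • ContinuousLinearMap.fst ℂ ℂ ℂ + b • ContinuousLinearMap.snd ℂ ℂ ℂ) (q - (x, y)))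
      = fun q => (F q.1 q.2 - F x q.2 - (q.1 - x) • a) + (F x q.2 - F x y - (q.2 - y) • b) := by
    ext ⟨q₁, q₂⟩
    simp only [uncurry_apply_pair, add_apply, smul_apply, ContinuousLinearMap.coe_fst',
      ContinuousLinearMap.coe_snd', Prod.mk_sub_mk, smul_eq_mul]
    ring
  rw [hsplit]
  refine IsLittleO.add (isLittleO_iff.2 fun ε hε => ?_) ?_
  · have hcont := (continuousOn_uncurry_partialFst hΩ hc h₁).continuousAt (hΩ.mem_nhds hp)
    obtain ⟨δ, hδ, hball⟩ := Metric.eventually_nhds_iff_ball.1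
      ((hΩ.eventually_mem hp).and (hcont.eventually (closedBall_mem_nhds _ hε)))
    filter_upwards [ball_mem_nhds _ hδ] with q hq
    rw [← ball_prod_same] at hball hq
    have hmem : ∀ z ∈ ball x δ, (z, q.2) ∈ ball x δ ×ˢ ball y δ := fun z hz => ⟨hz, hq.2⟩
    calc ‖F q.1 q.2 - F x q.2 - (q.1 - x) • a‖ ≤ ε * ‖q.1 - x‖ :=
          (convex_ball x δ).norm_image_sub_sub_smul_le (f := fun z => F z q.2)
            (fun z hz => (h₁ _ (hball _ (hmem z hz)).1).hasDerivAt.hasDerivWithinAt)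
            (fun z hz => by
              have := (hball _ (hmem z hz)).2
              rwa [dist_eq_norm] at this)
            (mem_ball_self hδ) hq.1
      _ ≤ ε * ‖q - (x, y)‖ := by gcongr; exact norm_fst_le (q - (x, y))
  · have h := (hasDerivAt_iff_isLittleO.1 (h₂ _ hp).hasDerivAt).comp_tendsto
      (continuous_snd.tendsto (x, y))
    exact h.trans_isBigO (isBigO_of_le _ fun q => norm_snd_le (q - (x, y)))

theorem differentiableAt_partialFst_fst (hΩ : IsOpen Ω) (hF : DifferentiableOn ℂ (uncurry F) Ω)
    {p : ℂ × ℂ} (hp : p ∈ Ω) : DifferentiableAt ℂ (fun z => partialFst F z p.2) p.1 := by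
  have hev : ∀ᶠ z in 𝓝 p.1, (z, p.2) ∈ Ω :=
    (continuous_id.prodMk continuous_const).continuousAt.eventually (hΩ.mem_nhds hp)
  refine (Complex.analyticAt_iff_eventually_differentiableAt.2 ?_).deriv.differentiableAt
  filter_upwards [hev] with z hz
  exact (hF.differentiableAt (hΩ.mem_nhds hz)).uncurry_fst

theorem differentiableAt_partialSnd_snd (hΩ : IsOpen Ω) (hF : DifferentiableOn ℂ (uncurry F) Ω)
    {p : ℂ × ℂ} (hp : p ∈ Ω) : DifferentiableAt ℂ (partialSnd F p.1) p.2 :=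
  differentiableAt_partialFst_fst (hΩ.preimage continuous_swap) hF.uncurry_flip (p := p.swap) hp

theorem hasDerivAt_partialFst_snd (hΩ : IsOpen Ω) (hF : DifferentiableOn ℂ (uncurry F) Ω)
    {p : ℂ × ℂ} (hp : p ∈ Ω) :
    HasDerivAt (partialFst F p.1) (partialFst (partialSnd F) p.1 p.2) p.2 := by
  obtain ⟨ρ, hρ, hsub⟩ := exists_ball_prod_subset hΩ hp
  have hdiff : ∀ s ∈ ball p.2 ρ, ∀ w ∈ ball p.1 ρ, DifferentiableAt ℂ (uncurry F) (w, s) :=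
    fun s hs w hw => hF.differentiableAt (hΩ.mem_nhds (hsub ⟨hw, hs⟩))
  refine hasDerivAt_deriv_param (u := flip F) (u' := flip (partialSnd F)) isOpen_ball isOpen_ball
    (fun s hs w hw => (hdiff s hs w hw).uncurry_snd.hasDerivAt) ?_
    (fun s hs w hw => (hdiff s hs w hw).uncurry_fst.differentiableWithinAt)
    (mem_ball_self hρ) (mem_ball_self hρ)
  refine (continuousOn_uncurry_partialSnd hΩ hF.continuousOn fun _ hq =>
    (hF.differentiableAt (hΩ.mem_nhds hq)).uncurry_snd).comp continuous_swap.continuousOn ?_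
  exact fun q hq => hsub ⟨hq.2, hq.1⟩

theorem hasDerivAt_partialSnd_fst (hΩ : IsOpen Ω) (hF : DifferentiableOn ℂ (uncurry F) Ω)
    {p : ℂ × ℂ} (hp : p ∈ Ω) :
    HasDerivAt (fun z => partialSnd F z p.2) (partialSnd (partialFst F) p.1 p.2) p.1 :=
  hasDerivAt_partialFst_snd (hΩ.preimage continuous_swap) hF.uncurry_flip (p := p.swap) hp

theorem partialSnd_partialFst (hΩ : IsOpen Ω) (hF : DifferentiableOn ℂ (uncurry F) Ω)
    {p : ℂ × ℂ} (hp : p ∈ Ω) :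
    partialSnd (partialFst F) p.1 p.2 = partialFst (partialSnd F) p.1 p.2 :=
  (hasDerivAt_partialFst_snd hΩ hF hp).deriv

theorem hasFDerivAt_uncurry_partialFst (hΩ : IsOpen Ω) (hF : DifferentiableOn ℂ (uncurry F) Ω)
    {p : ℂ × ℂ} (hp : p ∈ Ω) :
    HasFDerivAt (uncurry (partialFst F))
      (partialFst (partialFst F) p.1 p.2 • ContinuousLinearMap.fst ℂ ℂ ℂ
        + partialSnd (partialFst F) p.1 p.2 • ContinuousLinearMap.snd ℂ ℂ ℂ) p :=
  hasFDerivAt_uncurry_of_separately hΩ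
    (continuousOn_uncurry_partialFst hΩ hF.continuousOn fun _ hq =>
      (hF.differentiableAt (hΩ.mem_nhds hq)).uncurry_fst)
    (fun _ hq => differentiableAt_partialFst_fst hΩ hF hq)
    (fun _ hq => (hasDerivAt_partialFst_snd hΩ hF hq).differentiableAt) hp

theorem hasFDerivAt_uncurry_partialSnd (hΩ : IsOpen Ω) (hF : DifferentiableOn ℂ (uncurry F) Ω)
    {p : ℂ × ℂ} (hp : p ∈ Ω) :
    HasFDerivAt (uncurry (partialSnd F))
      (partialFst (partialSnd F) p.1 p.2 • ContinuousLinearMap.fst ℂ ℂ ℂ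
        + partialSnd (partialSnd F) p.1 p.2 • ContinuousLinearMap.snd ℂ ℂ ℂ) p :=
  hasFDerivAt_uncurry_of_separately hΩ
    (continuousOn_uncurry_partialSnd hΩ hF.continuousOn fun _ hq =>
      (hF.differentiableAt (hΩ.mem_nhds hq)).uncurry_snd)
    (fun _ hq => (hasDerivAt_partialSnd_fst hΩ hF hq).differentiableAt)
    (fun _ hq => differentiableAt_partialSnd_snd hΩ hF hq) hp

end TwoVariables

section Families

theorem ContDiffOn.hasDerivAt_uncurry_fst {𝕜 E G : Type*} [NontriviallyNormedField 𝕜]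
    [NormedAddCommGroup E] [NormedSpace 𝕜 E] [NormedAddCommGroup G] [NormedSpace 𝕜 G]
    {u : 𝕜 → E → G} {S : Set (𝕜 × E)} (hS : IsOpen S) (h : ContDiffOn 𝕜 1 (uncurry u) S)
    {p : 𝕜 × E} (hp : p ∈ S) :
    HasDerivAt (fun τ => u τ p.2) (fderiv 𝕜 (uncurry u) p (1, 0)) p.1 :=
  ((h.differentiableOn one_ne_zero).differentiableAt (hS.mem_nhds hp)).hasFDerivAt
    |>.comp_hasDerivAt (f := fun τ => (τ, p.2)) p.1
      ((hasDerivAt_id' p.1).prodMk (hasDerivAt_const p.1 p.2))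

theorem ContDiffOn.continuousOn_deriv_uncurry_fst {𝕜 E G : Type*} [NontriviallyNormedField 𝕜]
    [NormedAddCommGroup E] [NormedSpace 𝕜 E] [NormedAddCommGroup G] [NormedSpace 𝕜 G]
    {u : 𝕜 → E → G} {S : Set (𝕜 × E)} (hS : IsOpen S) (h : ContDiffOn 𝕜 1 (uncurry u) S) :
    ContinuousOn (fun p : 𝕜 × E => deriv (fun τ => u τ p.2) p.1) S :=
  ((h.continuousOn_fderiv_of_isOpen hS le_rfl).clm_apply continuousOn_const).congr
    fun _ hp => (h.hasDerivAt_uncurry_fst hS hp).deriv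

structure MixedPartialsCommuteAt (u : ℝ → ℂ → ℂ) (s : ℝ) (w : ℂ) : Prop where
  differentiableAt_param : DifferentiableAt ℝ (fun τ => u τ w) s
  analyticAt : AnalyticAt ℂ (u s) w
  analyticAt_deriv_param : AnalyticAt ℂ (fun v => deriv (fun τ => u τ v) s) w
  hasDerivAt_deriv :
    HasDerivAt (fun τ => deriv (u τ) w) (deriv (fun v => deriv (fun τ => u τ v) s) w) s

theorem mixedPartialsCommuteAt_of_contDiffOn {T : Set ℝ} {U : Set ℂ} (hT : IsOpen T)
    (hU : IsOpen U) {u : ℝ → ℂ → ℂ} (hC1 : ContDiffOn ℝ 1 (uncurry u) (T ×ˢ U))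
    (hhol : ∀ s ∈ T, DifferentiableOn ℂ (u s) U) {s : ℝ} (hs : s ∈ T) {w : ℂ} (hw : w ∈ U) :
    MixedPartialsCommuteAt u s w := by
  have hu : ∀ s ∈ T, ∀ w ∈ U, HasDerivAt (fun τ => u τ w) (deriv (fun τ => u τ w) s) s :=
    fun s hs w hw => (hC1.hasDerivAt_uncurry_fst (hT.prod hU) (p := (s, w)) ⟨hs, hw⟩)
      |>.differentiableAt.hasDerivAt
  have hu' := hC1.continuousOn_deriv_uncurry_fst (hT.prod hU)
  exact
    { differentiableAt_param := (hu s hs w hw).differentiableAt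
      analyticAt := (hhol s hs).analyticOnNhd hU w hw
      analyticAt_deriv_param :=
        (differentiableOn_of_hasDerivAt_param hT hU hu hu' hhol hs).analyticOnNhd hU w hw
      hasDerivAt_deriv := hasDerivAt_deriv_param hT hU hu hu' hhol hs hw }

end Families

section OneForm

theorem HasFDerivAt.comp_hasDerivAt_uncurry {𝕜 : Type*} [NontriviallyNormedField 𝕜]
    [NormedAlgebra 𝕜 ℂ] {F : ℂ → ℂ → ℂ} {a b : ℂ} {x y : 𝕜 → ℂ} {x' y' : ℂ} {s : 𝕜}
    (hF : HasFDerivAt (uncurry F)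
      (a • ContinuousLinearMap.fst ℂ ℂ ℂ + b • ContinuousLinearMap.snd ℂ ℂ ℂ) (x s, y s))
    (hx : HasDerivAt x x' s) (hy : HasDerivAt y y' s) :
    HasDerivAt (fun τ => F (x τ) (y τ)) (x' * a + y' * b) s := by
  have := (hF.restrictScalars 𝕜).comp_hasDerivAt s (hx.prodMk hy)
  simpa [mul_comm, Function.comp_def] using this

/-- The 1-form `∂₁H(z₁,z₂)·Φ(z₁) dz₁ + ∂₂H(z₁,z₂)·Ψ(z₂) dz₂` at `(x, y)`, evaluated on the
tangent vector `(dx, dy)`. -/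
noncomputable def oneForm (H : ℂ → ℂ → ℂ) (Φ Ψ : ℂ → ℂ) (x y dx dy : ℂ) : ℂ :=
  partialFst H x y * dx * Φ x + partialSnd H x y * dy * Ψ y

variable {H : ℂ → ℂ → ℂ} {Φ Ψ : ℂ → ℂ} {D : Set (ℂ × ℂ)}

theorem hasDerivAt_oneForm {𝕜 : Type*} [NontriviallyNormedField 𝕜] [NormedAlgebra 𝕜 ℂ]
    (hD : IsOpen D) (hH : DifferentiableOn ℂ (uncurry H) D)
    {x y dx dy : 𝕜 → ℂ} {x' y' dx' dy' : ℂ} {s : 𝕜} (hmem : (x s, y s) ∈ D)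
    (hΦ : DifferentiableAt ℂ Φ (x s)) (hΨ : DifferentiableAt ℂ Ψ (y s))
    (hx : HasDerivAt x x' s) (hy : HasDerivAt y y' s)
    (hdx : HasDerivAt dx dx' s) (hdy : HasDerivAt dy dy' s) :
    HasDerivAt (fun τ => oneForm H Φ Ψ (x τ) (y τ) (dx τ) (dy τ))
      (((x' * partialFst (partialFst H) (x s) (y s)
              + y' * partialSnd (partialFst H) (x s) (y s)) * dx s
            + partialFst H (x s) (y s) * dx') * Φ (x s)
          + partialFst H (x s) (y s) * dx s * (deriv Φ (x s) * x')
        + (((x' * partialFst (partialSnd H) (x s) (y s)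
              + y' * partialSnd (partialSnd H) (x s) (y s)) * dy s
            + partialSnd H (x s) (y s) * dy') * Ψ (y s)
          + partialSnd H (x s) (y s) * dy s * (deriv Ψ (y s) * y'))) s :=
  (((hasFDerivAt_uncurry_partialFst hD hH hmem).comp_hasDerivAt_uncurry hx hy).mul hdx
    |>.mul (hΦ.hasDerivAt.comp s hx)).add
  (((hasFDerivAt_uncurry_partialSnd hD hH hmem).comp_hasDerivAt_uncurry hx hy).mul hdy
    |>.mul (hΨ.hasDerivAt.comp s hy))

theorem ContinuousOn.oneForm {α : Type*} [TopologicalSpace α] (hD : IsOpen D)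
    (hH : DifferentiableOn ℂ (uncurry H) D) {S : Set α} {x y dx dy : α → ℂ}
    (hmem : ∀ a ∈ S, (x a, y a) ∈ D) (hΦ : ∀ a ∈ S, DifferentiableAt ℂ Φ (x a))
    (hΨ : ∀ a ∈ S, DifferentiableAt ℂ Ψ (y a)) (hx : ContinuousOn x S) (hy : ContinuousOn y S)
    (hdx : ContinuousOn dx S) (hdy : ContinuousOn dy S) :
    ContinuousOn (fun a => oneForm H Φ Ψ (x a) (y a) (dx a) (dy a)) S := by
  intro a ha
  have hxy := (hx a ha).prodMk (hy a ha)
  have h₁ := (hasFDerivAt_uncurry_partialFst hD hH (hmem a ha)).continuousAt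
    |>.comp_continuousWithinAt (f := fun a => (x a, y a)) hxy
  have h₂ := (hasFDerivAt_uncurry_partialSnd hD hH (hmem a ha)).continuousAt
    |>.comp_continuousWithinAt (f := fun a => (x a, y a)) hxy
  exact ((h₁.mul (hdx a ha)).mul ((hΦ a ha).continuousAt.comp_continuousWithinAt (hx a ha))).add
    ((h₂.mul (hdy a ha)).mul ((hΨ a ha).continuousAt.comp_continuousWithinAt (hy a ha)))

/-- The `dw`-component of the pullback of `oneForm H Φ Ψ` along `(s, w) ↦ (g s w, f s w)`: the
integrand of the theorem. -/
noncomputable def pullbackW (H : ℂ → ℂ → ℂ) (Φ Ψ : ℂ → ℂ) (g f : ℝ → ℂ → ℂ) (s : ℝ) (w : ℂ) :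
    ℂ :=
  oneForm H Φ Ψ (g s w) (f s w) (deriv (g s) w) (deriv (f s) w)

/-- The `ds`-component of the same pullback. -/
noncomputable def pullbackT (H : ℂ → ℂ → ℂ) (Φ Ψ : ℂ → ℂ) (g f : ℝ → ℂ → ℂ) (s : ℝ) (w : ℂ) :
    ℂ :=
  oneForm H Φ Ψ (g s w) (f s w) (deriv (fun τ => g τ w) s) (deriv (fun τ => f τ w) s)

variable {g f : ℝ → ℂ → ℂ} {U : Set ℂ}

theorem continuousOn_pullbackW (hD : IsOpen D) (hH : DifferentiableOn ℂ (uncurry H) D) {s : ℝ}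
    (hg : ∀ w ∈ U, MixedPartialsCommuteAt g s w) (hf : ∀ w ∈ U, MixedPartialsCommuteAt f s w)
    (hmem : ∀ w ∈ U, (g s w, f s w) ∈ D) (hΦ : ∀ w ∈ U, DifferentiableAt ℂ Φ (g s w))
    (hΨ : ∀ w ∈ U, DifferentiableAt ℂ Ψ (f s w)) : ContinuousOn (pullbackW H Φ Ψ g f s) U :=
  ContinuousOn.oneForm hD hH hmem hΦ hΨ
    (fun w hw => (hg w hw).analyticAt.continuousAt.continuousWithinAt)
    (fun w hw => (hf w hw).analyticAt.continuousAt.continuousWithinAt)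
    (fun w hw => (hg w hw).analyticAt.deriv.continuousAt.continuousWithinAt)
    (fun w hw => (hf w hw).analyticAt.deriv.continuousAt.continuousWithinAt)

theorem differentiableOn_pullbackT (hD : IsOpen D) (hH : DifferentiableOn ℂ (uncurry H) D)
    {s : ℝ} (hg : ∀ w ∈ U, MixedPartialsCommuteAt g s w)
    (hf : ∀ w ∈ U, MixedPartialsCommuteAt f s w) (hmem : ∀ w ∈ U, (g s w, f s w) ∈ D)
    (hΦ : ∀ w ∈ U, DifferentiableAt ℂ Φ (g s w)) (hΨ : ∀ w ∈ U, DifferentiableAt ℂ Ψ (f s w)) :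
    DifferentiableOn ℂ (pullbackT H Φ Ψ g f s) U := fun w hw =>
  (hasDerivAt_oneForm (x := g s) (y := f s) hD hH (hmem w hw) (hΦ w hw) (hΨ w hw)
    (hg w hw).analyticAt.differentiableAt.hasDerivAt
    (hf w hw).analyticAt.differentiableAt.hasDerivAt
    (hg w hw).analyticAt_deriv_param.differentiableAt.hasDerivAt
    (hf w hw).analyticAt_deriv_param.differentiableAt.hasDerivAt).differentiableAt
    |>.differentiableWithinAt

theorem continuousOn_uncurry_pullbackT {T : Set ℝ} (hT : IsOpen T) (hU : IsOpen U)
    (hD : IsOpen D) (hH : DifferentiableOn ℂ (uncurry H) D)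
    (hgC1 : ContDiffOn ℝ 1 (uncurry g) (T ×ˢ U)) (hfC1 : ContDiffOn ℝ 1 (uncurry f) (T ×ˢ U))
    (hmem : ∀ s ∈ T, ∀ w ∈ U, (g s w, f s w) ∈ D)
    (hΦ : ∀ s ∈ T, ∀ w ∈ U, DifferentiableAt ℂ Φ (g s w))
    (hΨ : ∀ s ∈ T, ∀ w ∈ U, DifferentiableAt ℂ Ψ (f s w)) :
    ContinuousOn (uncurry (pullbackT H Φ Ψ g f)) (T ×ˢ U) :=
  ContinuousOn.oneForm hD hH (fun p hp => hmem p.1 hp.1 p.2 hp.2)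
    (fun p hp => hΦ p.1 hp.1 p.2 hp.2) (fun p hp => hΨ p.1 hp.1 p.2 hp.2)
    hgC1.continuousOn hfC1.continuousOn (hgC1.continuousOn_deriv_uncurry_fst (hT.prod hU))
    (hfC1.continuousOn_deriv_uncurry_fst (hT.prod hU))

theorem hasDerivAt_pullbackW (hD : IsOpen D) (hH : DifferentiableOn ℂ (uncurry H) D)
    {P : ℂ → ℂ} {s : ℝ} {w : ℂ} (hg : MixedPartialsCommuteAt g s w)
    (hf : MixedPartialsCommuteAt f s w) (hmem : (g s w, f s w) ∈ D)
    (hΦ : DifferentiableAt ℂ Φ (g s w)) (hΨ : DifferentiableAt ℂ Ψ (f s w))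
    (hgd : deriv (g s) w ≠ 0) (hfd : deriv (f s) w ≠ 0)
    (hH₁₂ : partialFst (partialSnd H) (g s w) (f s w) ≠ 0)
    (hflow : deriv (fun τ => g τ w) s / deriv (g s) w - deriv (fun τ => f τ w) s / deriv (f s) w
      = -deriv P w / (deriv (f s) w * deriv (g s) w * partialFst (partialSnd H) (g s w) (f s w))) :
    HasDerivAt (fun τ => pullbackW H Φ Ψ g f τ w)
      (deriv (pullbackT H Φ Ψ g f s) w + deriv P w * (Φ (g s w) - Ψ (f s w))) s := by
  have hds : HasDerivAt (fun τ => pullbackW H Φ Ψ g f τ w) _ s :=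
    hasDerivAt_oneForm (x := fun τ => g τ w) (y := fun τ => f τ w) hD hH hmem hΦ hΨ
      hg.differentiableAt_param.hasDerivAt hf.differentiableAt_param.hasDerivAt
      hg.hasDerivAt_deriv hf.hasDerivAt_deriv
  have hdw : HasDerivAt (pullbackT H Φ Ψ g f s) _ w :=
    hasDerivAt_oneForm (x := g s) (y := f s) hD hH hmem hΦ hΨ
      hg.analyticAt.differentiableAt.hasDerivAt hf.analyticAt.differentiableAt.hasDerivAt
      hg.analyticAt_deriv_param.differentiableAt.hasDerivAt
      hf.analyticAt_deriv_param.differentiableAt.hasDerivAt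
  rw [hdw.deriv]
  convert hds using 1
  have hsymm := partialSnd_partialFst hD hH hmem
  set M := partialFst (partialSnd H) (g s w) (f s w)
  set gs := deriv (fun τ => g τ w) s
  set fs := deriv (fun τ => f τ w) s
  set gw := deriv (g s) w
  set fw := deriv (f s) w
  have hrel : M * (gs * fw - fs * gw) = -deriv P w := by
    field_simp at hflow
    linear_combination hflow
  linear_combination (Φ (g s w) - Ψ (f s w)) * hrel - (fs * gw - fw * gs) * Φ (g s w) * hsymm

end OneForm

section CircleIntegral

variable {E : Type*} [NormedAddCommGroup E] [NormedSpace ℂ E]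

theorem hasDerivAt_circleIntegral_of_continuousOn {F F' : ℝ → ℂ → E} {T : Set ℝ} {t : ℝ}
    {c : ℂ} {R : ℝ} (hR : 0 ≤ R) (hT : IsOpen T) (ht : t ∈ T)
    (hF : ∀ s ∈ T, ContinuousOn (F s) (sphere c R))
    (hF' : ContinuousOn (uncurry F') (T ×ˢ sphere c R))
    (hd : ∀ s ∈ T, ∀ w ∈ sphere c R, HasDerivAt (fun τ => F τ w) (F' s w) s) :
    HasDerivAt (fun s => ∮ w in C(c, R), F s w) (∮ w in C(c, R), F' t w) t := by
  obtain ⟨ε, hε, hεT⟩ := Metric.isOpen_iff.1 hT t ht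
  have hKT : closedBall t (ε / 2) ⊆ T := (closedBall_subset_ball (by linarith)).trans hεT
  obtain ⟨C, hC⟩ := ((isCompact_closedBall t (ε / 2)).prod (isCompact_sphere c R))
    |>.exists_bound_of_continuousOn (hF'.mono (prod_mono hKT subset_rfl))
  have hmem : ∀ θ, circleMap c R θ ∈ sphere c R := circleMap_mem_sphere c hR
  have hderiv : Continuous (deriv (circleMap c R)) :=
    ((continuous_circleMap 0 R).mul continuous_const).congr fun θ => (deriv_circleMap c R θ).symm
  have hslice : ∀ s ∈ T, Continuous fun θ => deriv (circleMap c R) θ • F s (circleMap c R θ) :=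
    fun s hs => hderiv.smul ((hF s hs).comp_continuous (continuous_circleMap c R) hmem)
  have hslice' : Continuous fun θ => deriv (circleMap c R) θ • F' t (circleMap c R θ) :=
    hderiv.smul (hF'.comp_continuous (continuous_const.prodMk (continuous_circleMap c R))
      fun θ => ⟨ht, hmem θ⟩)
  refine (intervalIntegral.hasDerivAt_integral_of_dominated_loc_of_deriv_le (a := 0)
    (b := 2 * Real.pi) (F := fun s θ => deriv (circleMap c R) θ • F s (circleMap c R θ))
    (F' := fun s θ => deriv (circleMap c R) θ • F' s (circleMap c R θ)) (bound := fun _ => R * C)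
    (ball_mem_nhds t (half_pos hε)) ?_ ((hslice t ht).intervalIntegrable _ _)
    hslice'.aestronglyMeasurable.restrict ?_ intervalIntegrable_const ?_).2
  · filter_upwards [hT.mem_nhds ht] with s hs
    exact (hslice s hs).aestronglyMeasurable.restrict
  · refine MeasureTheory.ae_of_all _ fun θ _ s hs => ?_
    rw [norm_smul, deriv_circleMap, norm_mul, norm_circleMap_zero, Complex.norm_I, mul_one,
      abs_of_nonneg hR]
    exact mul_le_mul_of_nonneg_left (hC (s, _) ⟨ball_subset_closedBall hs, hmem θ⟩) hR
  · exact MeasureTheory.ae_of_all _ fun θ _ s hs =>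
      (hd s (hKT (ball_subset_closedBall hs)) _ (hmem θ)).const_smul _

theorem circleIntegral_deriv_add [CompleteSpace E] {G Q : ℂ → E} {U : Set ℂ} {c : ℂ} {R : ℝ}
    (hR : 0 ≤ R) (hU : IsOpen U) (hsU : sphere c R ⊆ U) (hG : DifferentiableOn ℂ G U)
    (hQ : ContinuousOn Q (sphere c R)) :
    (∮ z in C(c, R), (deriv G z + Q z)) = ∮ z in C(c, R), Q z := by
  have hG' : ContinuousOn (deriv G) (sphere c R) :=
    ((hG.analyticOnNhd hU).deriv.continuousOn).mono hsU
  rw [circleIntegral.integral_add (hG'.circleIntegrable hR) (hQ.circleIntegrable hR),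
    circleIntegral.integral_eq_zero_of_hasDerivWithinAt hR
      fun z hz => (hG.differentiableAt (hU.mem_nhds (hsU hz))).hasDerivAt.hasDerivWithinAt,
    zero_add]

end CircleIntegral

theorem isOpen_annulus (r R : ℝ) : IsOpen {w : ℂ | r < ‖w‖ ∧ ‖w‖ < R} :=
  (isOpen_lt continuous_const continuous_norm).inter (isOpen_lt continuous_norm continuous_const)

theorem sphere_subset_annulus {r ρ R : ℝ} (hr : r < ρ) (hR : ρ < R) :
    sphere (0 : ℂ) ρ ⊆ {w : ℂ | r < ‖w‖ ∧ ‖w‖ < R} := fun w hw => by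
  rw [mem_sphere_zero_iff_norm] at hw
  exact ⟨hw ▸ hr, hw ▸ hR⟩

theorem hasDerivAt_circleIntegral_pullbackW {H : ℂ → ℂ → ℂ} {Φ Ψ P : ℂ → ℂ}
    {D : Set (ℂ × ℂ)} {g f : ℝ → ℂ → ℂ} {T : Set ℝ} {U : Set ℂ} {c : ℂ} {R t : ℝ}
    (hT : IsOpen T) (hU : IsOpen U) (hR : 0 ≤ R) (hsU : sphere c R ⊆ U) (ht : t ∈ T)
    (hD : IsOpen D) (hH : DifferentiableOn ℂ (uncurry H) D)
    (hgC1 : ContDiffOn ℝ 1 (uncurry g) (T ×ˢ U)) (hfC1 : ContDiffOn ℝ 1 (uncurry f) (T ×ˢ U))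
    (hghol : ∀ s ∈ T, DifferentiableOn ℂ (g s) U) (hfhol : ∀ s ∈ T, DifferentiableOn ℂ (f s) U)
    (hgd : ∀ s ∈ T, ∀ w ∈ U, deriv (g s) w ≠ 0) (hfd : ∀ s ∈ T, ∀ w ∈ U, deriv (f s) w ≠ 0)
    (hmem : ∀ s ∈ T, ∀ w ∈ U, (g s w, f s w) ∈ D)
    (hΦ : ∀ s ∈ T, ∀ w ∈ U, DifferentiableAt ℂ Φ (g s w))
    (hΨ : ∀ s ∈ T, ∀ w ∈ U, DifferentiableAt ℂ Ψ (f s w))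
    (hH₁₂ : ∀ p ∈ D, partialFst (partialSnd H) p.1 p.2 ≠ 0) (hP : DifferentiableOn ℂ P U)
    (hflow : ∀ s ∈ T, ∀ w ∈ U,
      deriv (fun τ => g τ w) s / deriv (g s) w - deriv (fun τ => f τ w) s / deriv (f s) w
        = -deriv P w
          / (deriv (f s) w * deriv (g s) w * partialFst (partialSnd H) (g s w) (f s w))) :
    HasDerivAt (fun s => ∮ w in C(c, R), pullbackW H Φ Ψ g f s w)
      (∮ w in C(c, R), deriv P w * (Φ (g t w) - Ψ (f t w))) t := by
  have hg := fun s (hs : s ∈ T) w (hw : w ∈ U) =>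
    mixedPartialsCommuteAt_of_contDiffOn hT hU hgC1 hghol hs hw
  have hf := fun s (hs : s ∈ T) w (hw : w ∈ U) =>
    mixedPartialsCommuteAt_of_contDiffOn hT hU hfC1 hfhol hs hw
  have hdiffT : ∀ s ∈ T, DifferentiableOn ℂ (pullbackT H Φ Ψ g f s) U := fun s hs =>
    differentiableOn_pullbackT hD hH (hg s hs) (hf s hs) (hmem s hs) (hΦ s hs) (hΨ s hs)
  have hQ : ContinuousOn (fun p : ℝ × ℂ => deriv P p.2 * (Φ (g p.1 p.2) - Ψ (f p.1 p.2)))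
      (T ×ˢ U) :=
    ((hP.analyticOnNhd hU).deriv.continuousOn.comp continuousOn_snd fun p hp => hp.2).mul
      (.sub (fun p hp => (hΦ _ hp.1 _ hp.2).continuousAt.comp_continuousWithinAt
          (f := uncurry g) (hgC1.continuousOn p hp))
        (fun p hp => (hΨ _ hp.1 _ hp.2).continuousAt.comp_continuousWithinAt
          (f := uncurry f) (hfC1.continuousOn p hp)))
  have hmain := hasDerivAt_circleIntegral_of_continuousOn hR hT ht (F := pullbackW H Φ Ψ g f)
    (F' := fun s w => deriv (pullbackT H Φ Ψ g f s) w + deriv P w * (Φ (g s w) - Ψ (f s w)))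
    (fun s hs => (continuousOn_pullbackW hD hH (hg s hs) (hf s hs) (hmem s hs) (hΦ s hs)
      (hΨ s hs)).mono hsU)
    (((continuousOn_deriv_of_continuousOn_uncurry hT hU
      (continuousOn_uncurry_pullbackT hT hU hD hH hgC1 hfC1 hmem hΦ hΨ) hdiffT).add hQ).mono
      (prod_mono subset_rfl hsU))
    fun s hs w hw => hasDerivAt_pullbackW hD hH (hg s hs w (hsU hw)) (hf s hs w (hsU hw))
      (hmem s hs w (hsU hw)) (hΦ s hs w (hsU hw)) (hΨ s hs w (hsU hw)) (hgd s hs w (hsU hw))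
      (hfd s hs w (hsU hw)) (hH₁₂ _ (hmem s hs w (hsU hw))) (hflow s hs w (hsU hw))
  exact hmain.congr_deriv (circleIntegral_deriv_add hR hU hsU (hdiffT t ht)
    (hQ.comp (continuous_const.prodMk continuous_id).continuousOn fun _ hw => ⟨ht, hsU hw⟩))

theorem stmt_8_general
    (r R : ℝ) (hr : r < 1) (hR : 1 < R)
    (A : Set ℂ) (hA : A = {w : ℂ | r < ‖w‖ ∧ ‖w‖ < R})
    (a b : ℝ)
    (D : Set (ℂ × ℂ)) (hDopen : IsOpen D)
    (g f : ℝ → ℂ → ℂ)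
    (hgC1 : ContDiffOn ℝ 1 (fun p : ℝ × ℂ => g p.1 p.2) (Set.Ioo a b ×ˢ A))
    (hfC1 : ContDiffOn ℝ 1 (fun p : ℝ × ℂ => f p.1 p.2) (Set.Ioo a b ×ˢ A))
    (hghol : ∀ t ∈ Set.Ioo a b, DifferentiableOn ℂ (g t) A)
    (hfhol : ∀ t ∈ Set.Ioo a b, DifferentiableOn ℂ (f t) A)
    (hgd : ∀ t ∈ Set.Ioo a b, ∀ w ∈ A, deriv (g t) w ≠ 0)
    (hfd : ∀ t ∈ Set.Ioo a b, ∀ w ∈ A, deriv (f t) w ≠ 0)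
    (hmemD : ∀ t ∈ Set.Ioo a b, ∀ w ∈ A, (g t w, f t w) ∈ D)
    (Φ Ψ : ℂ → ℂ) (UΦ UΨ : Set ℂ) (hUΦ : IsOpen UΦ) (hUΨ : IsOpen UΨ)
    (hΦ : DifferentiableOn ℂ Φ UΦ) (hΨ : DifferentiableOn ℂ Ψ UΨ)
    (hgU : ∀ t ∈ Set.Ioo a b, ∀ w ∈ A, g t w ∈ UΦ)
    (hfU : ∀ t ∈ Set.Ioo a b, ∀ w ∈ A, f t w ∈ UΨ)
    (H : ℂ → ℂ → ℂ)
    (hH : DifferentiableOn ℂ (fun p : ℂ × ℂ => H p.1 p.2) D)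
    (hH12 : ∀ p ∈ D, deriv (fun w => deriv (H w) p.2) p.1 ≠ 0)
    (P : ℂ → ℂ) (hP : DifferentiableOn ℂ P A)
    (hflow : ∀ t ∈ Set.Ioo a b, ∀ w ∈ A,
      deriv (fun s => g s w) t / deriv (g t) w
          - deriv (fun s => f s w) t / deriv (f t) w
        = -deriv P w / (deriv (f t) w * deriv (g t) w
            * deriv (fun z => deriv (H z) (f t w)) (g t w))) :
    ∀ t ∈ Set.Ioo a b,
      deriv (fun s =>
          ∮ w in C(0, 1),
            (deriv (fun u => H u (f s w)) (g s w) * deriv (g s) w * Φ (g s w)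
              + deriv (H (g s w)) (f s w) * deriv (f s) w * Ψ (f s w))) t
        = ∮ w in C(0, 1), deriv P w * (Φ (g t w) - Ψ (f t w)) := by
  intro t ht
  subst hA
  exact (hasDerivAt_circleIntegral_pullbackW isOpen_Ioo (isOpen_annulus r R) zero_le_one
    (sphere_subset_annulus hr hR) ht hDopen hH hgC1 hfC1 hghol hfhol hgd hfd hmemD
    (fun s hs w hw => hΦ.differentiableAt (hUΦ.mem_nhds (hgU s hs w hw)))
    (fun s hs w hw => hΨ.differentiableAt (hUΨ.mem_nhds (hfU s hs w hw))) hH12 hP hflow).deriv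

/-- Core computation for the term `𝒵₂` in the proof that `∂ log τ / ∂ t_n = v_n`:
for a C¹ family `(g(t,·), f(t,·))` on an annulus `A` around the unit circle satisfying
the deformation relation with generator `P`, and `Φ`, `Ψ` holomorphic on open sets
containing the images of `g` and `f`, the `t`-derivative of
`∮ { ∂_{z₁}ℋ(g,f)·g'·Φ(g) + ∂_{z₂}ℋ(g,f)·f'·Ψ(f) } dw` equals
`∮ P'(w) (Φ(g(t,w)) - Ψ(f(t,w))) dw`. -/
theorem stmt_8
    (r R : ℝ) (hr : r < 1) (hR : 1 < R)
    (A : Set ℂ) (hA : A = {w : ℂ | r < ‖w‖ ∧ ‖w‖ < R})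
    (hA0 : ∀ w ∈ A, w ≠ 0)
    (a b : ℝ)
    (D : Set (ℂ × ℂ)) (hDopen : IsOpen D) (hD0 : ∀ p ∈ D, p.1 ≠ 0 ∧ p.2 ≠ 0)
    (g f : ℝ → ℂ → ℂ)
    (hgC1 : ContDiffOn ℝ 1 (fun p : ℝ × ℂ => g p.1 p.2) (Set.Ioo a b ×ˢ A))
    (hfC1 : ContDiffOn ℝ 1 (fun p : ℝ × ℂ => f p.1 p.2) (Set.Ioo a b ×ˢ A))
    (hghol : ∀ t ∈ Set.Ioo a b, DifferentiableOn ℂ (g t) A)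
    (hfhol : ∀ t ∈ Set.Ioo a b, DifferentiableOn ℂ (f t) A)
    (hg0 : ∀ t ∈ Set.Ioo a b, ∀ w ∈ A, g t w ≠ 0)
    (hf0 : ∀ t ∈ Set.Ioo a b, ∀ w ∈ A, f t w ≠ 0)
    (hgd : ∀ t ∈ Set.Ioo a b, ∀ w ∈ A, deriv (g t) w ≠ 0)
    (hfd : ∀ t ∈ Set.Ioo a b, ∀ w ∈ A, deriv (f t) w ≠ 0)
    (hmemD : ∀ t ∈ Set.Ioo a b, ∀ w ∈ A, (g t w, f t w) ∈ D)
    (Φ Ψ : ℂ → ℂ) (UΦ UΨ : Set ℂ) (hUΦ : IsOpen UΦ) (hUΨ : IsOpen UΨ)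
    (hΦ : DifferentiableOn ℂ Φ UΦ) (hΨ : DifferentiableOn ℂ Ψ UΨ)
    (hgU : ∀ t ∈ Set.Ioo a b, ∀ w ∈ A, g t w ∈ UΦ)
    (hfU : ∀ t ∈ Set.Ioo a b, ∀ w ∈ A, f t w ∈ UΨ)
    (H : ℂ → ℂ → ℂ)
    (hH : DifferentiableOn ℂ (fun p : ℂ × ℂ => H p.1 p.2) D)
    (hH12 : ∀ p ∈ D, deriv (fun w => deriv (H w) p.2) p.1 ≠ 0)
    (P : ℂ → ℂ) (hP : DifferentiableOn ℂ P A)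
    (hflow : ∀ t ∈ Set.Ioo a b, ∀ w ∈ A,
      deriv (fun s => g s w) t / deriv (g t) w
          - deriv (fun s => f s w) t / deriv (f t) w
        = -deriv P w / (deriv (f t) w * deriv (g t) w
            * deriv (fun z => deriv (H z) (f t w)) (g t w))) :
    ∀ t ∈ Set.Ioo a b,
      deriv (fun s =>
          ∮ w in C(0, 1),
            (deriv (fun u => H u (f s w)) (g s w) * deriv (g s) w * Φ (g s w)
              + deriv (H (g s w)) (f s w) * deriv (f s) w * Ψ (f s w))) t
        = ∮ w in C(0, 1), deriv P w * (Φ (g t w) - Ψ (f t w)) :=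
  stmt_8_general r R hr hR A hA a b D hDopen g f hgC1 hfC1 hghol hfhol hgd hfd hmemD Φ Ψ UΦ UΨ hUΦ
    hUΨ hΦ hΨ hgU hfU H hH hH12 P hP hflow
end

section
/- Let g, f : ℝ → ℂ∖{0} be C¹ and 2π-periodic, and let ℋ be holomorphic on an open set D ⊆ (ℂ∖{0})² containing all points (g(θ), f(θ)). For n ≥ 1 define t_n = (1/(2πin))∫₀^{2π} ∂_{z₁}ℋ(g,f)·g^{−n}·g′ dθ, v_n = (1/(2πi))∫₀^{2π} ∂_{z₁}ℋ(g,f)·g^{n}·g′ dθ, t_{−n} = (1/(2πin))∫₀^{2π} ∂_{z₂}ℋ(g,f)·f^{n}·f′ dθ, v_{−n} = (1/(2πi))∫₀^{2π} ∂_{z₂}ℋ(g,f)·f^{−n}·f′ dθ. Suppose there exist 0 < ρ < min_θ|g(θ)| and σ > max_θ|f(θ)| with Σ_{n≥1}|v_n|ρ^{−n} < ∞ and Σ_{n≥1}|v_{−n}|σ^{n} < ∞, and set Φ(z) = Σ_{n≥1}(v_n/n)z^{−n} for |z| ≥ ρ and Ψ(z) = Σ_{n≥1}(v_{−n}/n)z^{n}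 for |z| ≤ σ. Then (1/(4πi)) ∫₀^{2π} { ∂_{z₁}ℋ(g,f)·g′·Φ(g) + ∂_{z₂}ℋ(g,f)·f′·Ψ(f) } dθ = (1/2) Σ_{n≥1} ( t_n v_n + t_{−n} v_{−n} ), with the series on the right converging absolutely. -/
/-!
Expanding `Φ(g)` and `Ψ(f)` into their power series, the contour integral becomes a sum of
integrals of `∂ℋ · g^{-n} · g'` and `∂ℋ · f^{n} · f'`, which are `2πi n t_{±n}` by definition, and
the coefficients `v_{±n}/n` turn them into `2πi t_{±n} v_{±n}`. The convergence hypotheses on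
`v_{±n}` dominate the series uniformly on the curves, so sum and integral may be interchanged.
The partial derivatives of `ℋ` are continuous along the curves because the slices
`ℋ(·, w)` converge locally uniformly as `w` varies, and hence so do their derivatives (Weierstrass).
-/

open MeasureTheory Metric Filter Topology

theorem continuousOn_deriv_fst_of_differentiableOn {E : Type*} [NormedAddCommGroup E]
    [NormedSpace ℂ E] [CompleteSpace E] {F : ℂ × ℂ → E} {D : Set (ℂ × ℂ)} (hD : IsOpen D)
    (hF : DifferentiableOn ℂ F D) :
    ContinuousOn (fun p : ℂ × ℂ => deriv (fun u => F (u, p.2)) p.1) D := by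
  intro p₀ hp₀
  obtain ⟨r, hr, hball⟩ := Metric.isOpen_iff.1 hD p₀ hp₀
  have hprodD : ball p₀.1 r ×ˢ ball p₀.2 r ⊆ D := by rwa [ball_prod_same]
  have hprod : ∀ q ∈ ball p₀ r, q ∈ ball p₀.1 r ×ˢ ball p₀.2 r := fun q hq => by
    rwa [ball_prod_same]
  have hmem : ∀ q ∈ ball p₀ r, ∀ u ∈ ball p₀.1 r, (u, q.2) ∈ D := fun q hq u hu =>
    hprodD ⟨hu, (hprod q hq).2⟩
  have hslice : ∀ q ∈ ball p₀ r, DifferentiableOn ℂ (fun u => F (u, q.2)) (ball p₀.1 r) :=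
    fun q hq => hF.comp (differentiableOn_id.prodMk (differentiableOn_const _)) (hmem q hq)
  have hunif : TendstoLocallyUniformlyOn (fun q u => F (u, q.2)) (fun u => F (u, p₀.2))
      (𝓝 p₀) (ball p₀.1 r) := by
    rw [tendstoLocallyUniformlyOn_iff_forall_isCompact isOpen_ball]
    intro K hKU hK
    have hcont : ContinuousOn (Function.uncurry fun (q : ℂ × ℂ) (u : ℂ) => F (u, q.2))
        (closedBall p₀ (r / 2) ×ˢ K) := by
      refine hF.continuousOn.comp (by fun_prop) fun x hx => hmem _ ?_ _ (hKU hx.2)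
      exact closedBall_subset_ball (by linarith) hx.1
    have huc := ((isCompact_closedBall p₀ (r / 2)).prod hK).uniformContinuousOn_of_continuous hcont
    have := UniformContinuousOn.tendstoUniformlyOn (F := fun (q : ℂ × ℂ) (u : ℂ) => F (u, q.2))
      huc (mem_closedBall_self (by linarith : (0:ℝ) ≤ r / 2))
    rwa [nhdsWithin_eq_nhds.2 (closedBall_mem_nhds p₀ (by linarith))] at this
  have hderiv := hunif.deriv (eventually_of_mem (ball_mem_nhds p₀ hr) hslice) isOpen_ball
  have hcont₀ : ContinuousWithinAt (deriv fun u => F (u, p₀.2)) (ball p₀.1 r) p₀.1 :=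
    ((hslice p₀ (mem_ball_self hr)).deriv isOpen_ball).continuousOn _ (mem_ball_self hr)
  have hfst : Tendsto Prod.fst (𝓝 p₀) (𝓝[ball p₀.1 r] p₀.1) :=
    tendsto_nhdsWithin_iff.2 ⟨continuous_fst.continuousAt,
      eventually_of_mem (ball_mem_nhds p₀ hr) fun q hq => (hprod q hq).1⟩
  exact ContinuousAt.continuousWithinAt (hderiv.tendsto_comp hcont₀ (mem_ball_self hr) hfst)

theorem hasSum_intervalIntegral_of_norm_le_mul {E : Type*} [NormedAddCommGroup E]
    [NormedSpace ℝ E] [CompleteSpace E] {a b : ℝ} {F : ℕ → ℝ → E} {w : ℝ → ℝ} {c : ℕ → ℝ}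
    (hF : ∀ n, Continuous (F n)) (hw : Continuous w) (hc : Summable c)
    (hbound : ∀ n θ, ‖F n θ‖ ≤ w θ * c n) :
    HasSum (fun n => ∫ θ in a..b, F n θ) (∫ θ in a..b, ∑' n, F n θ) := by
  refine intervalIntegral.hasSum_integral_of_dominated_convergence (fun n θ => w θ * c n)
    (fun n => (hF n).aestronglyMeasurable) (fun n => .of_forall fun θ _ => hbound n θ)
    (.of_forall fun θ _ => hc.mul_left (w θ)) ?_
    (.of_forall fun θ _ => (Summable.of_norm_bounded (hc.mul_left (w θ)) (hbound · θ)).hasSum)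
  simp_rw [tsum_mul_left]
  exact (hw.mul continuous_const).intervalIntegrable a b

theorem norm_div_natCast_succ_mul_le {v w : ℂ} {r : ℝ} (n : ℕ) (h : ‖w‖ ≤ r) :
    ‖v / (n + 1) * w‖ ≤ ‖v‖ * r := by
  rw [norm_mul, norm_div]
  have : (1:ℝ) ≤ ‖(n + 1 : ℂ)‖ := by
    rw [← Nat.cast_succ, Complex.norm_natCast]; exact_mod_cast Nat.succ_pos n
  exact mul_le_mul (div_le_self (norm_nonneg _) this) h (norm_nonneg _) (norm_nonneg _)

section DivSuccSeries

variable {φ : ℕ → ℝ → ℂ} {v : ℕ → ℂ} {R : ℕ → ℝ}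

theorem continuous_tsum_div_succ_mul (hφ : ∀ n, Continuous (φ n))
    (hφR : ∀ n θ, ‖φ n θ‖ ≤ R n) (hvR : Summable fun n => ‖v n‖ * R n) :
    Continuous fun θ => ∑' n, v n / (n + 1) * φ n θ :=
  continuous_tsum (fun n => continuous_const.mul (hφ n)) hvR
    fun n θ => norm_div_natCast_succ_mul_le n (hφR n θ)

theorem hasSum_integral_mul_tsum_div_succ {K L : ℝ → ℂ} {t : ℕ → ℂ}
    (hK : Continuous K) (hL : Continuous L) (hφ : ∀ n, Continuous (φ n))
    (hφR : ∀ n θ, ‖φ n θ‖ ≤ R n) (hvR : Summable fun n => ‖v n‖ * R n)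
    (ht : ∀ n, t n = (2 * Real.pi * Complex.I * ((n + 1 : ℕ) : ℂ))⁻¹ *
      ∫ θ in (0:ℝ)..(2 * Real.pi), K θ * φ n θ * L θ) :
    HasSum (fun n => 2 * Real.pi * Complex.I * (t n * v n))
      (∫ θ in (0:ℝ)..(2 * Real.pi), K θ * L θ * ∑' n, v n / (n + 1) * φ n θ) := by
  have hsum := hasSum_intervalIntegral_of_norm_le_mul (a := 0) (b := 2 * Real.pi)
    (F := fun n θ => K θ * L θ * (v n / (n + 1) * φ n θ)) (w := fun θ => ‖K θ * L θ‖)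
    (fun n => (hK.mul hL).mul (continuous_const.mul (hφ n))) (hK.mul hL).norm hvR
    (fun n θ => by rw [norm_mul]; gcongr; exact norm_div_natCast_succ_mul_le n (hφR n θ))
  simp_rw [tsum_mul_left] at hsum
  have hterm : ∀ n, ∫ θ in (0:ℝ)..(2 * Real.pi), K θ * L θ * (v n / (n + 1) * φ n θ)
      = 2 * Real.pi * Complex.I * (t n * v n) := fun n => by
    have h2πI : (2 * Real.pi * Complex.I : ℂ) ≠ 0 := by simp [Real.pi_ne_zero]
    have hn : (n + 1 : ℂ) ≠ 0 := Nat.cast_add_one_ne_zero n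
    rw [ht n, ← intervalIntegral.integral_const_mul, mul_comm _ (v n),
      ← intervalIntegral.integral_const_mul, ← intervalIntegral.integral_const_mul]
    refine intervalIntegral.integral_congr fun θ _ => ?_
    push_cast
    field_simp
  simpa only [hterm] using hsum

end DivSuccSeries

theorem hasSum_integral_mul_principalPart {K g : ℝ → ℂ} {Φ : ℂ → ℂ} {t v : ℕ → ℂ} {ρ : ℝ}
    (hK : Continuous K) (hg : ContDiff ℝ 1 g) (hρ : 0 < ρ) (hρg : ∀ θ, ρ < ‖g θ‖)
    (hv : Summable fun n : ℕ => ‖v (n + 1)‖ * ρ ^ (-(n + 1 : ℤ)))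
    (hΦ : ∀ z : ℂ, ρ ≤ ‖z‖ → Φ z = ∑' n : ℕ, (v (n + 1) / (n + 1)) * z ^ (-(n + 1 : ℤ)))
    (ht : ∀ n : ℕ, 1 ≤ n → t n = (2 * Real.pi * Complex.I * n)⁻¹ *
      ∫ θ in (0:ℝ)..(2 * Real.pi), K θ * g θ ^ (-(n:ℤ)) * deriv g θ) :
    IntervalIntegrable (fun θ => K θ * deriv g θ * Φ (g θ)) volume 0 (2 * Real.pi) ∧
    HasSum (fun n => 2 * Real.pi * Complex.I * (t (n + 1) * v (n + 1)))
      (∫ θ in (0:ℝ)..(2 * Real.pi), K θ * deriv g θ * Φ (g θ)) := by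
  have hg0 : ∀ θ, g θ ≠ 0 := fun θ => norm_pos_iff.1 (hρ.trans (hρg θ))
  have hφ : ∀ n, Continuous fun θ => g θ ^ (-((n + 1 : ℕ) : ℤ)) := fun n =>
    hg.continuous.zpow₀ _ fun θ => .inl (hg0 θ)
  have hφR : ∀ n θ, ‖g θ ^ (-((n + 1 : ℕ) : ℤ))‖ ≤ ρ ^ (-(n + 1 : ℤ)) := fun n θ => by
    rw [norm_zpow, ← Nat.cast_succ, zpow_neg, zpow_neg, zpow_natCast, zpow_natCast]
    exact inv_anti₀ (pow_pos hρ _) (pow_le_pow_left₀ hρ.le (hρg θ).le _)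
  have hΦg : ∀ θ, Φ (g θ) = ∑' n : ℕ, v (n + 1) / (n + 1) * g θ ^ (-((n + 1 : ℕ) : ℤ)) :=
    fun θ => by rw [hΦ _ (hρg θ).le]; push_cast; rfl
  simp only [hΦg]
  exact ⟨((hK.mul (hg.continuous_deriv le_rfl)).mul
      (continuous_tsum_div_succ_mul hφ hφR hv)).intervalIntegrable _ _,
    hasSum_integral_mul_tsum_div_succ hK (hg.continuous_deriv le_rfl) hφ hφR hv
      fun n => ht (n + 1) n.succ_pos⟩

theorem hasSum_integral_mul_powerSeries {K f : ℝ → ℂ} {Ψ : ℂ → ℂ} {t v : ℕ → ℂ} {σ : ℝ}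
    (hK : Continuous K) (hf : ContDiff ℝ 1 f) (hfσ : ∀ θ, ‖f θ‖ < σ)
    (hv : Summable fun n : ℕ => ‖v (n + 1)‖ * σ ^ (n + 1))
    (hΨ : ∀ z : ℂ, ‖z‖ ≤ σ → Ψ z = ∑' n : ℕ, (v (n + 1) / (n + 1)) * z ^ (n + 1))
    (ht : ∀ n : ℕ, 1 ≤ n → t n = (2 * Real.pi * Complex.I * n)⁻¹ *
      ∫ θ in (0:ℝ)..(2 * Real.pi), K θ * f θ ^ (n:ℤ) * deriv f θ) :
    IntervalIntegrable (fun θ => K θ * deriv f θ * Ψ (f θ)) volume 0 (2 * Real.pi) ∧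
    HasSum (fun n => 2 * Real.pi * Complex.I * (t (n + 1) * v (n + 1)))
      (∫ θ in (0:ℝ)..(2 * Real.pi), K θ * deriv f θ * Ψ (f θ)) := by
  have hφ : ∀ n, Continuous fun θ => f θ ^ ((n + 1 : ℕ) : ℤ) := fun n =>
    hf.continuous.zpow₀ _ fun _ => .inr (Int.natCast_nonneg _)
  have hφR : ∀ n θ, ‖f θ ^ ((n + 1 : ℕ) : ℤ)‖ ≤ σ ^ (n + 1) := fun n θ => by
    rw [norm_zpow, zpow_natCast]
    exact pow_le_pow_left₀ (norm_nonneg _) (hfσ θ).le _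
  have hΨf : ∀ θ, Ψ (f θ) = ∑' n : ℕ, v (n + 1) / (n + 1) * f θ ^ ((n + 1 : ℕ) : ℤ) :=
    fun θ => by simp only [hΨ _ (hfσ θ).le, zpow_natCast]
  simp only [hΨf]
  exact ⟨((hK.mul (hf.continuous_deriv le_rfl)).mul
      (continuous_tsum_div_succ_mul hφ hφR hv)).intervalIntegrable _ _,
    hasSum_integral_mul_tsum_div_succ hK (hf.continuous_deriv le_rfl) hφ hφR hv
      fun n => ht (n + 1) n.succ_pos⟩

theorem stmt_11_general
    (g f : ℝ → ℂ) (hg : ContDiff ℝ 1 g) (hf : ContDiff ℝ 1 f)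
    (D : Set (ℂ × ℂ)) (hDopen : IsOpen D)
    (hmem : ∀ θ : ℝ, (g θ, f θ) ∈ D)
    (H : ℂ → ℂ → ℂ)
    (hH : DifferentiableOn ℂ (fun p : ℂ × ℂ => H p.1 p.2) D)
    (tp vp tm vm : ℕ → ℂ)
    (htp : ∀ n : ℕ, 1 ≤ n → tp n = (2 * Real.pi * Complex.I * n)⁻¹ *
      ∫ θ in (0:ℝ)..(2 * Real.pi),
        deriv (fun u => H u (f θ)) (g θ) * g θ ^ (-(n:ℤ)) * deriv g θ)
    (htm : ∀ n : ℕ, 1 ≤ n → tm n = (2 * Real.pi * Complex.I * n)⁻¹ *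
      ∫ θ in (0:ℝ)..(2 * Real.pi),
        deriv (H (g θ)) (f θ) * f θ ^ (n:ℤ) * deriv f θ)
    (ρ σ : ℝ) (hρ0 : 0 < ρ)
    (hρg : ∀ θ : ℝ, ρ < ‖g θ‖)
    (hfσ : ∀ θ : ℝ, ‖f θ‖ < σ)
    (hvpsum : Summable fun n : ℕ => ‖vp (n + 1)‖ * ρ ^ (-(n + 1 : ℤ)))
    (hvmsum : Summable fun n : ℕ => ‖vm (n + 1)‖ * σ ^ (n + 1))
    (Φ Ψ : ℂ → ℂ)
    (hΦ : ∀ z : ℂ, ρ ≤ ‖z‖ →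
      Φ z = ∑' n : ℕ, (vp (n + 1) / (n + 1)) * z ^ (-(n + 1 : ℤ)))
    (hΨ : ∀ z : ℂ, ‖z‖ ≤ σ →
      Ψ z = ∑' n : ℕ, (vm (n + 1) / (n + 1)) * z ^ (n + 1)) :
    Summable (fun n : ℕ => tp (n + 1) * vp (n + 1)) ∧
    Summable (fun n : ℕ => tm (n + 1) * vm (n + 1)) ∧
    (2 * (2 * Real.pi * Complex.I))⁻¹ *
        ∫ θ in (0:ℝ)..(2 * Real.pi),
          (deriv (fun u => H u (f θ)) (g θ) * deriv g θ * Φ (g θ)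
            + deriv (H (g θ)) (f θ) * deriv f θ * Ψ (f θ))
      = (1 / 2) * ∑' n : ℕ, (tp (n + 1) * vp (n + 1) + tm (n + 1) * vm (n + 1)) := by
  have hH₁ : Continuous fun θ => deriv (fun u => H u (f θ)) (g θ) :=
    (continuousOn_deriv_fst_of_differentiableOn hDopen hH).comp_continuous
      (hg.continuous.prodMk hf.continuous) hmem
  have hH₂ : Continuous fun θ => deriv (H (g θ)) (f θ) :=
    (continuousOn_deriv_fst_of_differentiableOn (hDopen.preimage continuous_swap)
      (hH.comp (differentiableOn_snd.prodMk differentiableOn_fst) fun _ hp => hp)).comp_continuous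
      (hf.continuous.prodMk hg.continuous) hmem
  obtain ⟨hΦint, hplus⟩ := hasSum_integral_mul_principalPart hH₁ hg hρ0 hρg hvpsum hΦ htp
  obtain ⟨hΨint, hminus⟩ := hasSum_integral_mul_powerSeries hH₂ hf hfσ hvmsum hΨ htm
  have h2πI : (2 * Real.pi * Complex.I : ℂ) ≠ 0 := by simp [Real.pi_ne_zero]
  refine ⟨(summable_mul_left_iff h2πI).1 hplus.summable,
    (summable_mul_left_iff h2πI).1 hminus.summable, ?_⟩
  rw [intervalIntegral.integral_add hΦint hΨint, ← (hplus.add hminus).tsum_eq]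
  simp only [← mul_add]
  rw [tsum_mul_left]
  field_simp

/-- The term `𝒵₂` of the tau function equals `(1/2)(Σ_{n≥1} t_n v_n + Σ_{n≥1} t_{-n} v_{-n})`:
with the Toda times `t_n, t_{-n}` and dual variables `v_n, v_{-n}` attached to a pair of
2π-periodic C¹ curves `(g, f)` and a two-variable holomorphic function `ℋ`, and with `Φ, Ψ`
the generating functions of the `v`'s,
`(1/4πi) ∮ { ∂_{z₁}ℋ(g,f)·g'·Φ(g) + ∂_{z₂}ℋ(g,f)·f'·Ψ(f) } dθ
  = (1/2) Σ_{n≥1} (t_n v_n + t_{-n} v_{-n})`, the series converging absolutely. -/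
theorem stmt_11
    (g f : ℝ → ℂ) (hg : ContDiff ℝ 1 g) (hf : ContDiff ℝ 1 f)
    (hgper : Function.Periodic g (2 * Real.pi))
    (hfper : Function.Periodic f (2 * Real.pi))
    (hg0 : ∀ θ : ℝ, g θ ≠ 0) (hf0 : ∀ θ : ℝ, f θ ≠ 0)
    (D : Set (ℂ × ℂ)) (hDopen : IsOpen D)
    (hmem : ∀ θ : ℝ, (g θ, f θ) ∈ D)
    (H : ℂ → ℂ → ℂ)
    (hH : DifferentiableOn ℂ (fun p : ℂ × ℂ => H p.1 p.2) D)
    (tp vp tm vm : ℕ → ℂ)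
    (htp : ∀ n : ℕ, 1 ≤ n → tp n = (2 * Real.pi * Complex.I * n)⁻¹ *
      ∫ θ in (0:ℝ)..(2 * Real.pi),
        deriv (fun u => H u (f θ)) (g θ) * g θ ^ (-(n:ℤ)) * deriv g θ)
    (hvp : ∀ n : ℕ, 1 ≤ n → vp n = (2 * Real.pi * Complex.I)⁻¹ *
      ∫ θ in (0:ℝ)..(2 * Real.pi),
        deriv (fun u => H u (f θ)) (g θ) * g θ ^ (n:ℤ) * deriv g θ)
    (htm : ∀ n : ℕ, 1 ≤ n → tm n = (2 * Real.pi * Complex.I * n)⁻¹ *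
      ∫ θ in (0:ℝ)..(2 * Real.pi),
        deriv (H (g θ)) (f θ) * f θ ^ (n:ℤ) * deriv f θ)
    (hvm : ∀ n : ℕ, 1 ≤ n → vm n = (2 * Real.pi * Complex.I)⁻¹ *
      ∫ θ in (0:ℝ)..(2 * Real.pi),
        deriv (H (g θ)) (f θ) * f θ ^ (-(n:ℤ)) * deriv f θ)
    (ρ σ : ℝ) (hρ0 : 0 < ρ)
    (hρg : ∀ θ : ℝ, ρ < ‖g θ‖)
    (hfσ : ∀ θ : ℝ, ‖f θ‖ < σ)
    (hvpsum : Summable fun n : ℕ => ‖vp (n + 1)‖ * ρ ^ (-(n + 1 : ℤ)))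
    (hvmsum : Summable fun n : ℕ => ‖vm (n + 1)‖ * σ ^ (n + 1))
    (Φ Ψ : ℂ → ℂ)
    (hΦ : ∀ z : ℂ, ρ ≤ ‖z‖ →
      Φ z = ∑' n : ℕ, (vp (n + 1) / (n + 1)) * z ^ (-(n + 1 : ℤ)))
    (hΨ : ∀ z : ℂ, ‖z‖ ≤ σ →
      Ψ z = ∑' n : ℕ, (vm (n + 1) / (n + 1)) * z ^ (n + 1)) :
    Summable (fun n : ℕ => tp (n + 1) * vp (n + 1)) ∧
    Summable (fun n : ℕ => tm (n + 1) * vm (n + 1)) ∧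
    (2 * (2 * Real.pi * Complex.I))⁻¹ *
        ∫ θ in (0:ℝ)..(2 * Real.pi),
          (deriv (fun u => H u (f θ)) (g θ) * deriv g θ * Φ (g θ)
            + deriv (H (g θ)) (f θ) * deriv f θ * Ψ (f θ))
      = (1 / 2) * ∑' n : ℕ, (tp (n + 1) * vp (n + 1) + tm (n + 1) * vm (n + 1)) :=
  stmt_11_general g f hg hf D hDopen hmem H hH tp vp tm vm htp htm ρ σ hρ0 hρg hfσ hvpsum hvmsum Φ Ψ
    hΦ hΨ
end

section
/- Let g : ℝ → ℂ∖{0} be C¹ and 2π-periodic and define f(θ) = 1/conj(g(θ)). Let ℋ be holomorphic on an open set D ⊆ (ℂ∖{0})² containing all points (g(θ), f(θ)), and assume the reality condition conj( ∂_{z₁}ℋ(g(θ), f(θ)) ) = −f(θ)²·∂_{z₂}ℋ(g(θ), f(θ)) for all θ (this holds whenever the function 𝒰(z) = ℋ(z, 1/conj(z)) is real-valued on a neighbourhood of the curve traced by g). Define t₀ = (1/(2πi))∫₀^{2π} ∂_{z₁}ℋ(g,f)·g′ dθ and, for n ≥ 1, t_n = (1/(2πin))∫₀^{2π} ∂_{z₁}ℋ(g,f)·g^{−n}·g′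 dθ, t_{−n} = (1/(2πin))∫₀^{2π} ∂_{z₂}ℋ(g,f)·f^{n}·f′ dθ, v_n = (1/(2πi))∫₀^{2π} ∂_{z₁}ℋ(g,f)·g^{n}·g′ dθ, v_{−n} = (1/(2πi))∫₀^{2π} ∂_{z₂}ℋ(g,f)·f^{−n}·f′ dθ. Then t_{−n} = −conj(t_n) and v_{−n} = −conj(v_n) for every n ≥ 1, and t₀ is real. -/
/-!
Since `f = 1 / conj g`, we have `f' = -f² conj g'`, so the reality condition says that the
form `∂_{z₂}ℋ · fⁿ df` is, pointwise on the circle, the complex conjugate of `∂_{z₁}ℋ · g⁻ⁿ dg`.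
The prefactors `1 / (2πi n)` being purely imaginary, this gives `t_{-n} = -conj t_n` and
`v_{-n} = -conj v_n`. For `t₀`, the case `n = 0` says that `θ ↦ ℋ(g θ, f θ)` has derivative
`A + conj A` with `A = ∂_{z₁}ℋ · g'`; by periodicity its integral over a period vanishes, so
`∫ A` is purely imaginary.
-/

open scoped ComplexConjugate
open Complex Real MeasureTheory intervalIntegral

theorem IntervalIntegrable.conj {𝕜 : Type*} [RCLike 𝕜] {f : ℝ → 𝕜} {μ : Measure ℝ}
    {a b : ℝ} (hf : IntervalIntegrable f μ a b) :
    IntervalIntegrable (fun x => conj (f x)) μ a b :=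
  ⟨by simpa [IntegrableOn] using RCLike.conjCLE.toContinuousLinearMap.integrable_comp hf.1,
    by simpa [IntegrableOn] using RCLike.conjCLE.toContinuousLinearMap.integrable_comp hf.2⟩

theorem conj_intervalIntegral_eq_neg_of_hasDerivAt_add_conj {𝕜 : Type*} [RCLike 𝕜]
    {φ A : ℝ → 𝕜} {a b : ℝ} (hφ : ∀ t ∈ Set.uIcc a b, HasDerivAt φ (A t + conj (A t)) t)
    (hab : φ a = φ b) :
    conj (∫ t in a..b, A t) = -∫ t in a..b, A t := by
  by_cases hA : IntervalIntegrable A volume a b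
  · have hsum : (∫ t in a..b, A t) + conj (∫ t in a..b, A t) = 0 := by
      rw [← intervalIntegral_conj, ← integral_add hA hA.conj,
        integral_eq_sub_of_hasDerivAt hφ (hA.add hA.conj), hab, sub_self]
    exact eq_neg_of_add_eq_zero_right hsum
  · simp [integral_undef hA]

theorem HasDerivAt.inv_conj {g : ℝ → ℂ} {g' : ℂ} {θ : ℝ} (hg : HasDerivAt g g' θ) (h0 : g θ ≠ 0) :
    HasDerivAt (fun t => (conj (g t))⁻¹) (-(conj (g θ))⁻¹ ^ 2 * conj g') θ := by
  refine (hg.star.fun_inv (by simpa using h0)).congr_deriv ?_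
  simp only [← starRingEnd_apply]
  ring

theorem DifferentiableAt.hasDerivAt_uncurry_comp {𝕜 𝕜' : Type*} [NontriviallyNormedField 𝕜]
    [NontriviallyNormedField 𝕜'] [NormedAlgebra 𝕜 𝕜'] {H : 𝕜' → 𝕜' → 𝕜'} {u v : 𝕜 → 𝕜'}
    {u' v' : 𝕜'} {x : 𝕜}
    (hH : DifferentiableAt 𝕜' (fun p : 𝕜' × 𝕜' => H p.1 p.2) (u x, v x))
    (hu : HasDerivAt u u' x) (hv : HasDerivAt v v' x) :
    HasDerivAt (fun t => H (u t) (v t))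
      (deriv (fun z => H z (v x)) (u x) * u' + deriv (H (u x)) (v x) * v') x := by
  set L := fderiv 𝕜' (fun p : 𝕜' × 𝕜' => H p.1 p.2) (u x, v x)
  have hd₁ : HasDerivAt (fun z => H z (v x)) (L (1, 0)) (u x) := by
    have := hH.hasFDerivAt.comp_hasDerivAt (u x)
      ((hasDerivAt_id (u x)).prodMk (hasDerivAt_const (u x) (v x)))
    exact this
  have hd₂ : HasDerivAt (H (u x)) (L (0, 1)) (v x) := by
    have := hH.hasFDerivAt.comp_hasDerivAt (v x)
      ((hasDerivAt_const (v x) (u x)).prodMk (hasDerivAt_id (v x)))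
    exact this
  have hsplit : ((u', v') : 𝕜' × 𝕜') = u' • ((1 : 𝕜'), (0 : 𝕜')) + v' • ((0 : 𝕜'), (1 : 𝕜')) :=
    by simp
  refine ((hH.hasFDerivAt.restrictScalars 𝕜).comp_hasDerivAt x (hu.prodMk hv)).congr_deriv ?_
  rw [hd₁.deriv, hd₂.deriv, ContinuousLinearMap.coe_restrictScalars', hsplit, map_add, map_smul,
    map_smul, smul_eq_mul, smul_eq_mul, mul_comm, mul_comm (L (0, 1))]

theorem mul_zpow_mul_eq_conj_of_eq_inv_conj {a b z z' w w' : ℂ} (n : ℤ) (hw : w = (conj z)⁻¹)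
    (hw' : w' = -w ^ 2 * conj z') (hab : conj a = -w ^ 2 * b) :
    b * w ^ n * w' = conj (a * z ^ (-n) * z') := by
  have hz : conj z = w⁻¹ := by rw [hw, inv_inv]
  rw [map_mul, map_mul, hab, map_zpow₀, hz, inv_zpow', neg_neg, hw']
  ring

theorem stmt_12_general
    (g f : ℝ → ℂ) (hg : ContDiff ℝ 1 g) (hg0 : ∀ θ : ℝ, g θ ≠ 0)
    (hgper : Function.Periodic g (2 * Real.pi))
    (hf : ∀ θ : ℝ, f θ = (starRingEnd ℂ (g θ))⁻¹)
    (D : Set (ℂ × ℂ)) (hDopen : IsOpen D)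
    (hmem : ∀ θ : ℝ, (g θ, f θ) ∈ D)
    (H : ℂ → ℂ → ℂ)
    (hH : DifferentiableOn ℂ (fun p : ℂ × ℂ => H p.1 p.2) D)
    (hreal : ∀ θ : ℝ,
      starRingEnd ℂ (deriv (fun u => H u (f θ)) (g θ))
        = -(f θ) ^ 2 * deriv (H (g θ)) (f θ))
    (t₀ : ℂ) (tp tm vp vm : ℕ → ℂ)
    (ht₀ : t₀ = (2 * Real.pi * Complex.I)⁻¹ *
      ∫ θ in (0:ℝ)..(2 * Real.pi), deriv (fun u => H u (f θ)) (g θ) * deriv g θ)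
    (htp : ∀ n : ℕ, 1 ≤ n → tp n = (2 * Real.pi * Complex.I * n)⁻¹ *
      ∫ θ in (0:ℝ)..(2 * Real.pi),
        deriv (fun u => H u (f θ)) (g θ) * g θ ^ (-(n:ℤ)) * deriv g θ)
    (htm : ∀ n : ℕ, 1 ≤ n → tm n = (2 * Real.pi * Complex.I * n)⁻¹ *
      ∫ θ in (0:ℝ)..(2 * Real.pi),
        deriv (H (g θ)) (f θ) * f θ ^ (n:ℤ) * deriv f θ)
    (hvp : ∀ n : ℕ, 1 ≤ n → vp n = (2 * Real.pi * Complex.I)⁻¹ *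
      ∫ θ in (0:ℝ)..(2 * Real.pi),
        deriv (fun u => H u (f θ)) (g θ) * g θ ^ (n:ℤ) * deriv g θ)
    (hvm : ∀ n : ℕ, 1 ≤ n → vm n = (2 * Real.pi * Complex.I)⁻¹ *
      ∫ θ in (0:ℝ)..(2 * Real.pi),
        deriv (H (g θ)) (f θ) * f θ ^ (-(n:ℤ)) * deriv f θ) :
    (∀ n : ℕ, 1 ≤ n → tm n = -starRingEnd ℂ (tp n) ∧ vm n = -starRingEnd ℂ (vp n)) ∧
      starRingEnd ℂ t₀ = t₀ := by
  have hgd : ∀ θ, HasDerivAt g (deriv g θ) θ := fun θ =>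
    (hg.differentiable one_ne_zero θ).hasDerivAt
  have hfd : ∀ θ, HasDerivAt f (-f θ ^ 2 * conj (deriv g θ)) θ := fun θ => by
    rw [funext hf]
    exact (hgd θ).inv_conj (hg0 θ)
  have hintegral : ∀ n : ℤ,
      (∫ θ in (0:ℝ)..(2 * π), deriv (H (g θ)) (f θ) * f θ ^ n * deriv f θ)
        = conj (∫ θ in (0:ℝ)..(2 * π),
          deriv (fun u => H u (f θ)) (g θ) * g θ ^ (-n) * deriv g θ) := fun n => by
    rw [← intervalIntegral_conj]
    exact integral_congr fun θ _ =>
      mul_zpow_mul_eq_conj_of_eq_inv_conj n (hf θ) (hfd θ).deriv (hreal θ)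
  refine ⟨fun n hn => ⟨?_, ?_⟩, ?_⟩
  · rw [htm n hn, htp n hn, hintegral]
    simp [map_inv₀, map_ofNat]
  · rw [hvm n hn, hvp n hn, hintegral, neg_neg]
    simp [map_inv₀, map_ofNat]
  · have hloop := conj_intervalIntegral_eq_neg_of_hasDerivAt_add_conj
      (φ := fun θ => H (g θ) (f θ)) (A := fun θ => deriv (fun u => H u (f θ)) (g θ) * deriv g θ)
      (a := 0) (b := 2 * π) (fun θ _ => ?_) (by simp only [hf, hgper.eq])
    · rw [ht₀, map_mul, hloop]
      simp [map_inv₀, map_ofNat]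
    · refine ((hH.differentiableAt (hDopen.mem_nhds (hmem θ))).hasDerivAt_uncurry_comp
        (hgd θ) (hfd θ)).congr_deriv ?_
      rw [map_mul, hreal]
      ring

/-- Reduction to the subspace `Σ` (Zabrodin's case): if `f(θ) = 1/conj(g(θ))` and the
reality condition `conj(∂_{z₁}ℋ(g,f)) = -f²·∂_{z₂}ℋ(g,f)` holds on the curve, then the
Toda times and dual variables satisfy `t_{-n} = -conj(t_n)`, `v_{-n} = -conj(v_n)` for
`n ≥ 1` and `t₀` is real. -/
theorem stmt_12
    (g f : ℝ → ℂ) (hg : ContDiff ℝ 1 g) (hg0 : ∀ θ : ℝ, g θ ≠ 0)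
    (hgper : Function.Periodic g (2 * Real.pi))
    (hf : ∀ θ : ℝ, f θ = (starRingEnd ℂ (g θ))⁻¹)
    (D : Set (ℂ × ℂ)) (hDopen : IsOpen D) (hD0 : ∀ p ∈ D, p.1 ≠ 0 ∧ p.2 ≠ 0)
    (hmem : ∀ θ : ℝ, (g θ, f θ) ∈ D)
    (H : ℂ → ℂ → ℂ)
    (hH : DifferentiableOn ℂ (fun p : ℂ × ℂ => H p.1 p.2) D)
    (hreal : ∀ θ : ℝ,
      starRingEnd ℂ (deriv (fun u => H u (f θ)) (g θ))
        = -(f θ) ^ 2 * deriv (H (g θ)) (f θ))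
    (t₀ : ℂ) (tp tm vp vm : ℕ → ℂ)
    (ht₀ : t₀ = (2 * Real.pi * Complex.I)⁻¹ *
      ∫ θ in (0:ℝ)..(2 * Real.pi), deriv (fun u => H u (f θ)) (g θ) * deriv g θ)
    (htp : ∀ n : ℕ, 1 ≤ n → tp n = (2 * Real.pi * Complex.I * n)⁻¹ *
      ∫ θ in (0:ℝ)..(2 * Real.pi),
        deriv (fun u => H u (f θ)) (g θ) * g θ ^ (-(n:ℤ)) * deriv g θ)
    (htm : ∀ n : ℕ, 1 ≤ n → tm n = (2 * Real.pi * Complex.I * n)⁻¹ *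
      ∫ θ in (0:ℝ)..(2 * Real.pi),
        deriv (H (g θ)) (f θ) * f θ ^ (n:ℤ) * deriv f θ)
    (hvp : ∀ n : ℕ, 1 ≤ n → vp n = (2 * Real.pi * Complex.I)⁻¹ *
      ∫ θ in (0:ℝ)..(2 * Real.pi),
        deriv (fun u => H u (f θ)) (g θ) * g θ ^ (n:ℤ) * deriv g θ)
    (hvm : ∀ n : ℕ, 1 ≤ n → vm n = (2 * Real.pi * Complex.I)⁻¹ *
      ∫ θ in (0:ℝ)..(2 * Real.pi),
        deriv (H (g θ)) (f θ) * f θ ^ (-(n:ℤ)) * deriv f θ) :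
    (∀ n : ℕ, 1 ≤ n → tm n = -starRingEnd ℂ (tp n) ∧ vm n = -starRingEnd ℂ (vp n)) ∧
      starRingEnd ℂ t₀ = t₀ :=
  stmt_12_general g f hg hg0 hgper hf D hDopen hmem H hH hreal t₀ tp tm vp vm ht₀ htp htm hvp hvm
end

section
/- Let 0 < r < 1, let A = { w ∈ ℂ : r < |w| < 1/r }, and let g, f : A → ℂ∖{0} be holomorphic and satisfy the reflection symmetries conj(g(conj(w))) = g(w) and conj(f(conj(w))) = f(w) on A. Let ℋ be holomorphic on an open set D ⊆ (ℂ∖{0})² containing (g(w), f(w)) for |w| = 1, with D invariant under componentwise complex conjugation and conj( ℋ(conj(z₁), conj(z₂)) ) = ℋ(z₁, z₂) on D. Then t₀ = (1/(2πi))∮_{S¹} ∂_{z₁}ℋ(g,f)·g′(w) dw is real, and for every n ≥ 1 the numbers t_n = (1/(2πin))∮_{S¹} ∂_{z₁}ℋ(g,f)·g^{−n}·g′ dw, t_{−n} = (1/(2πin))∮_{S¹} ∂_{z₂}ℋ(g,f)·f^{n}·f′ dw, v_n = (1/(2πi))∮_{S¹} ∂_{z₁}ℋ(g,f)·g^{n}·g′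 dw and v_{−n} = (1/(2πi))∮_{S¹} ∂_{z₂}ℋ(g,f)·f^{−n}·f′ dw are all real. -/
open ComplexConjugate Complex Filter Metric Real Topology

/-! Reflection `w ↦ conj w` maps the unit circle onto itself reversing orientation, so for an
integrand with `conj (F (conj w)) = F w` on the circle, `conj (∮ F) = -∮ F`. The integrands of
the Toda variables have this symmetry: `g`, `f` have it by assumption, their derivatives and the
partial derivatives of `ℋ` inherit it because `conj ∘ φ ∘ conj` has derivative
`conj ∘ φ' ∘ conj`, and it is preserved by products and integer powers. Dividing by the purely
imaginary `2πi` or `2πin` then gives a real number. -/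

def ConjSymmOn (F : ℂ → ℂ) (s : Set ℂ) : Prop :=
  ∀ z ∈ s, conj (F (conj z)) = F z

theorem deriv_eq_conj_deriv_conj_of_eventually {F G : ℂ → ℂ} {z : ℂ}
    (h : ∀ᶠ w in 𝓝 z, conj (G (conj w)) = F w) :
    deriv F z = conj (deriv G (conj z)) := by
  have hFG : (conj ∘ G ∘ conj : ℂ → ℂ) =ᶠ[𝓝 z] F := h
  rw [← hFG.deriv_eq, deriv_conj_conj, Function.comp_apply, Function.comp_apply]

namespace ConjSymmOn

variable {F G : ℂ → ℂ} {s : Set ℂ}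

theorem apply_conj (h : ConjSymmOn F s) {z : ℂ} (hz : z ∈ s) : F (conj z) = conj (F z) := by
  rw [← h z hz, conj_conj]

theorem mono {t : Set ℂ} (h : ConjSymmOn F s) (hts : t ⊆ s) : ConjSymmOn F t :=
  fun z hz => h z (hts hz)

theorem mul (hF : ConjSymmOn F s) (hG : ConjSymmOn G s) : ConjSymmOn (F * G) s :=
  fun z hz => by simp only [Pi.mul_apply, map_mul, hF z hz, hG z hz]

theorem zpow (hF : ConjSymmOn F s) (k : ℤ) : ConjSymmOn (F ^ k) s :=
  fun z hz => by simp only [Pi.pow_apply, map_zpow₀, hF z hz]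

theorem deriv (hs : IsOpen s) (h : ConjSymmOn F s) : ConjSymmOn (deriv F) s := fun _ hz =>
  (deriv_eq_conj_deriv_conj_of_eventually (eventually_of_mem (hs.mem_nhds hz) h)).symm

end ConjSymmOn

theorem conj_circleIntegral_of_conjSymmOn {F : ℂ → ℂ} {c : ℂ} (hc : conj c = c) (R : ℝ)
    (hF : ConjSymmOn F (sphere c |R|)) :
    conj (∮ z in C(c, R), F z) = -∮ z in C(c, R), F z := by
  have hmap : ∀ θ : ℝ, conj (circleMap c R θ) = circleMap c R (2 * π - θ) := fun θ => by
    rw [conj_circleMap, hc, sub_eq_neg_add, periodic_circleMap]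
  have hmap0 : ∀ θ : ℝ, conj (circleMap 0 R θ) = circleMap 0 R (2 * π - θ) := fun θ => by
    rw [conj_circleMap_zero, sub_eq_neg_add, periodic_circleMap]
  have hconj : ∀ θ : ℝ, conj (deriv (circleMap c R) θ • F (circleMap c R θ)) =
      -(deriv (circleMap c R) (2 * π - θ) • F (circleMap c R (2 * π - θ))) := fun θ => by
    rw [deriv_circleMap, deriv_circleMap, smul_eq_mul, smul_eq_mul, map_mul, map_mul,
      ← hF.apply_conj (circleMap_mem_sphere' c R θ), hmap, hmap0, conj_I]
    ring
  rw [circleIntegral, ← intervalIntegral.intervalIntegral_conj]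
  simp only [hconj, intervalIntegral.integral_neg]
  rw [intervalIntegral.integral_comp_sub_left
      (fun θ => deriv (circleMap c R) θ • F (circleMap c R θ)), sub_self, sub_zero]

theorem conj_inv_mul_circleIntegral_of_conjSymmOn {F : ℂ → ℂ} {a c : ℂ} (ha : conj a = -a)
    (hc : conj c = c) (R : ℝ) (hF : ConjSymmOn F (sphere c |R|)) :
    conj (a⁻¹ * ∮ z in C(c, R), F z) = a⁻¹ * ∮ z in C(c, R), F z := by
  rw [map_mul, map_inv₀, ha, conj_circleIntegral_of_conjSymmOn hc R hF, inv_neg, neg_mul_neg]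

theorem conj_two_pi_I : conj (2 * π * I) = -(2 * π * I) := by
  rw [map_mul, map_mul, map_ofNat, conj_ofReal, conj_I, mul_neg]

theorem conj_two_pi_I_mul_natCast (n : ℕ) : conj (2 * π * I * n) = -(2 * π * I * n) := by
  rw [map_mul, conj_two_pi_I, map_natCast, neg_mul]

section Partials

variable {H : ℂ → ℂ → ℂ} {D : Set (ℂ × ℂ)}

theorem conj_deriv_fst_conj (hD : IsOpen D)
    (hH : ∀ p ∈ D, conj (H (conj p.1) (conj p.2)) = H p.1 p.2) {z₁ z₂ : ℂ} (hz : (z₁, z₂) ∈ D) :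
    conj (deriv (fun u => H u (conj z₂)) (conj z₁)) = deriv (fun u => H u z₂) z₁ := by
  refine (deriv_eq_conj_deriv_conj_of_eventually ?_).symm
  filter_upwards [(hD.preimage (Continuous.prodMk_left z₂)).mem_nhds hz] with u hu
  simpa using hH _ hu

theorem conj_deriv_snd_conj (hD : IsOpen D)
    (hH : ∀ p ∈ D, conj (H (conj p.1) (conj p.2)) = H p.1 p.2) {z₁ z₂ : ℂ} (hz : (z₁, z₂) ∈ D) :
    conj (deriv (H (conj z₁)) (conj z₂)) = deriv (H z₁) z₂ := by
  refine (deriv_eq_conj_deriv_conj_of_eventually ?_).symm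
  filter_upwards [(hD.preimage (Continuous.prodMk_right z₁)).mem_nhds hz] with u hu
  simpa using hH _ hu

end Partials

theorem stmt_13_general
    (r : ℝ) (hr0 : 0 < r) (hr1 : r < 1)
    (A : Set ℂ) (hA : A = {w : ℂ | r < ‖w‖ ∧ ‖w‖ < 1 / r})
    (g f : ℂ → ℂ)
    (hgsym : ∀ w ∈ A, starRingEnd ℂ (g (starRingEnd ℂ w)) = g w)
    (hfsym : ∀ w ∈ A, starRingEnd ℂ (f (starRingEnd ℂ w)) = f w)
    (D : Set (ℂ × ℂ)) (hDopen : IsOpen D)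
    (hmem : ∀ w : ℂ, ‖w‖ = 1 → (g w, f w) ∈ D)
    (H : ℂ → ℂ → ℂ)
    (hHsym : ∀ p ∈ D,
      starRingEnd ℂ (H (starRingEnd ℂ p.1) (starRingEnd ℂ p.2)) = H p.1 p.2)
    (t₀ : ℂ) (tp tm vp vm : ℕ → ℂ)
    (ht₀ : t₀ = (2 * Real.pi * Complex.I)⁻¹ *
      ∮ w in C(0, 1), deriv (fun u => H u (f w)) (g w) * deriv g w)
    (htp : ∀ n : ℕ, 1 ≤ n → tp n = (2 * Real.pi * Complex.I * n)⁻¹ *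
      ∮ w in C(0, 1), deriv (fun u => H u (f w)) (g w) * g w ^ (-(n:ℤ)) * deriv g w)
    (htm : ∀ n : ℕ, 1 ≤ n → tm n = (2 * Real.pi * Complex.I * n)⁻¹ *
      ∮ w in C(0, 1), deriv (H (g w)) (f w) * f w ^ (n:ℤ) * deriv f w)
    (hvp : ∀ n : ℕ, 1 ≤ n → vp n = (2 * Real.pi * Complex.I)⁻¹ *
      ∮ w in C(0, 1), deriv (fun u => H u (f w)) (g w) * g w ^ (n:ℤ) * deriv g w)
    (hvm : ∀ n : ℕ, 1 ≤ n → vm n = (2 * Real.pi * Complex.I)⁻¹ *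
      ∮ w in C(0, 1), deriv (H (g w)) (f w) * f w ^ (-(n:ℤ)) * deriv f w) :
    starRingEnd ℂ t₀ = t₀ ∧
      ∀ n : ℕ, 1 ≤ n →
        starRingEnd ℂ (tp n) = tp n ∧ starRingEnd ℂ (tm n) = tm n ∧
        starRingEnd ℂ (vp n) = vp n ∧ starRingEnd ℂ (vm n) = vm n := by
  set S := sphere (0 : ℂ) |1|
  have hnorm : ∀ w ∈ S, ‖w‖ = 1 := fun w hw => by simpa [S] using hw
  have hAopen : IsOpen A := hA ▸
    (isOpen_lt continuous_const continuous_norm).inter (isOpen_lt continuous_norm continuous_const)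
  have hSA : S ⊆ A := fun w hw => by
    rw [hA, Set.mem_ofPred_eq, hnorm w hw]
    exact ⟨hr1, one_lt_one_div hr0 hr1⟩
  have hgS : ConjSymmOn g S := ConjSymmOn.mono hgsym hSA
  have hfS : ConjSymmOn f S := ConjSymmOn.mono hfsym hSA
  have hdgS : ConjSymmOn (deriv g) S := (ConjSymmOn.deriv hAopen hgsym).mono hSA
  have hdfS : ConjSymmOn (deriv f) S := (ConjSymmOn.deriv hAopen hfsym).mono hSA
  have hH₁ : ConjSymmOn (fun w => deriv (fun u => H u (f w)) (g w)) S := fun w hw => by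
    simp only [hgS.apply_conj hw, hfS.apply_conj hw]
    exact conj_deriv_fst_conj hDopen hHsym (hmem w (hnorm w hw))
  have hH₂ : ConjSymmOn (fun w => deriv (H (g w)) (f w)) S := fun w hw => by
    simp only [hgS.apply_conj hw, hfS.apply_conj hw]
    exact conj_deriv_snd_conj hDopen hHsym (hmem w (hnorm w hw))
  have hgk : ∀ k : ℤ, ConjSymmOn
      (fun w => deriv (fun u => H u (f w)) (g w) * g w ^ k * deriv g w) S :=
    fun k => (hH₁.mul (hgS.zpow k)).mul hdgS
  have hfk : ∀ k : ℤ, ConjSymmOn (fun w => deriv (H (g w)) (f w) * f w ^ k * deriv f w) S :=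
    fun k => (hH₂.mul (hfS.zpow k)).mul hdfS
  have hreal := fun {a : ℂ} (ha : conj a = -a) {F : ℂ → ℂ} (hF : ConjSymmOn F S) =>
    conj_inv_mul_circleIntegral_of_conjSymmOn ha (map_zero _) 1 hF
  refine ⟨ht₀ ▸ hreal conj_two_pi_I (hH₁.mul hdgS), fun n hn => ⟨?_, ?_, ?_, ?_⟩⟩
  · exact htp n hn ▸ hreal (conj_two_pi_I_mul_natCast n) (hgk _)
  · exact htm n hn ▸ hreal (conj_two_pi_I_mul_natCast n) (hfk _)
  · exact hvp n hn ▸ hreal conj_two_pi_I (hgk _)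
  · exact hvm n hn ▸ hreal conj_two_pi_I (hfk _)

/-- Reduction to the subspace `𝔯` of pairs with real coefficients: if `g, f` are
holomorphic on the annulus `A = {r < |w| < 1/r}` with `conj (g (conj w)) = g w`,
`conj (f (conj w)) = f w`, and `ℋ` is holomorphic on a conjugation-invariant open set `D`
with `conj (ℋ(conj z₁, conj z₂)) = ℋ(z₁, z₂)`, then the Toda times `t₀, t_n, t_{-n}` and
dual variables `v_n, v_{-n}` are all real. -/
theorem stmt_13
    (r : ℝ) (hr0 : 0 < r) (hr1 : r < 1)
    (A : Set ℂ) (hA : A = {w : ℂ | r < ‖w‖ ∧ ‖w‖ < 1 / r})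
    (g f : ℂ → ℂ)
    (hg : DifferentiableOn ℂ g A) (hf : DifferentiableOn ℂ f A)
    (hg0 : ∀ w ∈ A, g w ≠ 0) (hf0 : ∀ w ∈ A, f w ≠ 0)
    (hgsym : ∀ w ∈ A, starRingEnd ℂ (g (starRingEnd ℂ w)) = g w)
    (hfsym : ∀ w ∈ A, starRingEnd ℂ (f (starRingEnd ℂ w)) = f w)
    (D : Set (ℂ × ℂ)) (hDopen : IsOpen D) (hD0 : ∀ p ∈ D, p.1 ≠ 0 ∧ p.2 ≠ 0)
    (hmem : ∀ w : ℂ, ‖w‖ = 1 → (g w, f w) ∈ D)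
    (hDconj : ∀ p ∈ D, (starRingEnd ℂ p.1, starRingEnd ℂ p.2) ∈ D)
    (H : ℂ → ℂ → ℂ)
    (hH : DifferentiableOn ℂ (fun p : ℂ × ℂ => H p.1 p.2) D)
    (hHsym : ∀ p ∈ D,
      starRingEnd ℂ (H (starRingEnd ℂ p.1) (starRingEnd ℂ p.2)) = H p.1 p.2)
    (t₀ : ℂ) (tp tm vp vm : ℕ → ℂ)
    (ht₀ : t₀ = (2 * Real.pi * Complex.I)⁻¹ *
      ∮ w in C(0, 1), deriv (fun u => H u (f w)) (g w) * deriv g w)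
    (htp : ∀ n : ℕ, 1 ≤ n → tp n = (2 * Real.pi * Complex.I * n)⁻¹ *
      ∮ w in C(0, 1), deriv (fun u => H u (f w)) (g w) * g w ^ (-(n:ℤ)) * deriv g w)
    (htm : ∀ n : ℕ, 1 ≤ n → tm n = (2 * Real.pi * Complex.I * n)⁻¹ *
      ∮ w in C(0, 1), deriv (H (g w)) (f w) * f w ^ (n:ℤ) * deriv f w)
    (hvp : ∀ n : ℕ, 1 ≤ n → vp n = (2 * Real.pi * Complex.I)⁻¹ *
      ∮ w in C(0, 1), deriv (fun u => H u (f w)) (g w) * g w ^ (n:ℤ) * deriv g w)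
    (hvm : ∀ n : ℕ, 1 ≤ n → vm n = (2 * Real.pi * Complex.I)⁻¹ *
      ∮ w in C(0, 1), deriv (H (g w)) (f w) * f w ^ (-(n:ℤ)) * deriv f w) :
    starRingEnd ℂ t₀ = t₀ ∧
      ∀ n : ℕ, 1 ≤ n →
        starRingEnd ℂ (tp n) = tp n ∧ starRingEnd ℂ (tm n) = tm n ∧
        starRingEnd ℂ (vp n) = vp n ∧ starRingEnd ℂ (vm n) = vm n :=
  stmt_13_general r hr0 hr1 A hA g f hgsym hfsym D hDopen hmem H hHsym t₀ tp tm vp vm ht₀ htp htm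
    hvp hvm
end

section
/- For every C¹, 2π-periodic map γ : ℝ → ℂ and every integer μ ≥ 1, the complex number (μ/(2πi)) ∫₀^{2π} γ(θ)^{μ−1} · conj(γ(θ))^{μ} · γ′(θ) dθ is real. -/
/-!
Differentiating `|γ|^{2μ} = γ^μ · conj(γ)^μ` gives `μ g + conj (μ g)` with
`g = γ^{μ-1} conj(γ)^μ γ'`, so integrating over a period yields
`2 Re (μ ∫ g) = 0`. Dividing the purely imaginary number `μ ∫ g` by `2πi` gives a real number.
-/

open ComplexConjugate intervalIntegral MeasureTheory

theorem HasDerivAt.pow_mul_conj_pow {γ : ℝ → ℂ} {γ' : ℂ} {t : ℝ} (hγ : HasDerivAt γ γ' t)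
    (n : ℕ) :
    HasDerivAt (fun s => γ s ^ n * conj (γ s) ^ n)
      (n * (γ t ^ (n - 1) * conj (γ t) ^ n * γ') +
        conj (n * (γ t ^ (n - 1) * conj (γ t) ^ n * γ'))) t := by
  have h := (hγ.fun_pow n).fun_mul (hγ.star.fun_pow n)
  simp only [← starRingEnd_apply] at h
  refine h.congr_deriv ?_
  simp only [map_mul, map_pow, map_natCast, Complex.conj_conj]
  ring

theorem intervalIntegral.re_integral_eq_zero_of_hasDerivAt_add_conj {f F : ℝ → ℂ} {a b : ℝ}
    (hF : ∀ t ∈ Set.uIcc a b, HasDerivAt F (f t + conj (f t)) t)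
    (hf : IntervalIntegrable f volume a b) (hab : F a = F b) :
    (∫ t in a..b, f t).re = 0 := by
  have hconj : IntervalIntegrable (fun t => conj (f t)) volume a b :=
    ⟨Complex.conjCLE.toContinuousLinearMap.integrable_comp hf.1,
      Complex.conjCLE.toContinuousLinearMap.integrable_comp hf.2⟩
  have hsum : (∫ t in a..b, f t) + conj (∫ t in a..b, f t) = 0 := by
    rw [← intervalIntegral_conj, ← integral_add hf hconj,
      integral_eq_sub_of_hasDerivAt hF (hf.add hconj), hab, sub_self]
  simpa [Complex.ext_iff] using hsum

theorem Complex.im_inv_ofReal_mul_I_mul_eq_zero {r : ℝ} {z : ℂ} (hz : z.re = 0) :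
    ((r * I)⁻¹ * z).im = 0 := by
  simp [Complex.mul_im, hz]

theorem stmt_14_general
    (γ : ℝ → ℂ) (hγ : ContDiff ℝ 1 γ)
    (hper : Function.Periodic γ (2 * Real.pi))
    (μ : ℕ) :
    ((μ : ℂ) * (2 * Real.pi * Complex.I)⁻¹ *
      ∫ θ in (0:ℝ)..(2 * Real.pi),
        γ θ ^ (μ - 1) * (starRingEnd ℂ (γ θ)) ^ μ * deriv γ θ).im = 0 := by
  have hderiv (θ : ℝ) : HasDerivAt γ (deriv γ θ) θ :=
    (hγ.differentiable one_ne_zero θ).hasDerivAt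
  have hcont : Continuous fun θ => γ θ ^ (μ - 1) * conj (γ θ) ^ μ * deriv γ θ := by
    have hγc : Continuous γ := hγ.continuous
    have hγ'c : Continuous (deriv γ) := hγ.continuous_deriv le_rfl
    fun_prop
  have hclosed : γ (2 * Real.pi) = γ 0 := by simpa using hper 0
  have hre : ((μ : ℂ) * ∫ θ in (0:ℝ)..(2 * Real.pi),
      γ θ ^ (μ - 1) * conj (γ θ) ^ μ * deriv γ θ).re = 0 := by
    rw [← intervalIntegral.integral_const_mul]
    exact re_integral_eq_zero_of_hasDerivAt_add_conj
      (fun θ _ => (hderiv θ).pow_mul_conj_pow μ)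
      ((continuous_const.mul hcont).intervalIntegrable _ _)
      (by rw [hclosed])
  rw [mul_comm (μ : ℂ), mul_assoc]
  exact_mod_cast Complex.im_inv_ofReal_mul_I_mul_eq_zero hre

/-- For every C¹, 2π-periodic curve `γ : ℝ → ℂ` and integer `μ ≥ 1`, the quantity
`(μ/2πi) ∫₀^{2π} γ^{μ-1} · conj(γ)^{μ} · γ' dθ` (the time `t₀` for
`ℋ(z₁,z₂) = z₁^μ z₂^{-μ}` on the subspace `Σ`) is real. -/
theorem stmt_14
    (γ : ℝ → ℂ) (hγ : ContDiff ℝ 1 γ)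
    (hper : Function.Periodic γ (2 * Real.pi))
    (μ : ℕ) (hμ : 1 ≤ μ) :
    ((μ : ℂ) * (2 * Real.pi * Complex.I)⁻¹ *
      ∫ θ in (0:ℝ)..(2 * Real.pi),
        γ θ ^ (μ - 1) * (starRingEnd ℂ (γ θ)) ^ μ * deriv γ θ).im = 0 :=
  stmt_14_general γ hγ hper μ
end

section
/- Let g, f : ℝ → ℂ∖{0} be C¹ and 2π-periodic, let μ, ν be nonzero integers, and suppose the winding number of g about 0 equals 1, i.e. (1/(2πi))∫₀^{2π} g′(θ)/g(θ) dθ = 1. Let t₀ ∈ ℂ and let (t_n)_{n≥1}, (v_n)_{n≥1} be sequences of complex numbers for which there exist R > max_θ|g(θ)| and 0 < ρ < min_θ|g(θ)| with Σ_{n≥1} n|t_n|R^{n} < ∞ and Σ_{n≥1} |v_n|ρ^{−n} < ∞, such that for all θ: μ·g(θ)^{μ}·f(θ)^{−ν} = Σ_{n≥1} n t_n g(θ)^{n} + t₀ + Σ_{n≥1} v_n g(θ)^{−n}. Then (1/(2πi)) ∫₀^{2π} μ·g(θ)^{2μ−1}·f(θ)^{−2ν}·g′(θ) dθ = (1/μ)·(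 t₀² + 2 Σ_{n≥1} n t_n v_n ), with the series on the right converging absolutely. -/
/-!
On the curve, `A = μ g^μ f^{-ν}` is the Laurent series `Σ_{n ∈ ℤ} a_n g^n` with `a_n = n t_n`,
`a_0 = t₀`, `a_{-n} = v_n` for `n ≥ 1`, dominated termwise because `ρ < |g| < R`. The integrand is
`μ⁻¹ A² g'/g = μ⁻¹ Σ_{m,n} a_m a_n g^{m+n-1} g'`, which can be integrated term by term. For `k ≠ 0`
the term `g^{k-1} g' = (g^k)'/k` integrates to `0` over a period, while `g^{-1} g'` integrates to
`2πi` by the winding hypothesis. Only the diagonal `m + n = 0` survives, leaving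
`μ⁻¹ Σ_n a_n a_{-n} = μ⁻¹ (t₀² + 2 Σ_{n ≥ 1} n t_n v_n)`.
-/

open MeasureTheory Real Complex

section Laurent

variable {g : ℝ → ℂ} {a b : ℝ}

theorem integral_zpow_sub_one_mul_deriv (hg : ContDiff ℝ 1 g) (hg0 : ∀ θ, g θ ≠ 0)
    (hab : g a = g b) (k : ℤ) :
    ∫ θ in a..b, g θ ^ (k - 1) * deriv g θ
      = if k = 0 then ∫ θ in a..b, deriv g θ / g θ else 0 := by
  split_ifs with hk
  · simp [hk, div_eq_inv_mul]
  have hderiv : ∀ θ, HasDerivAt (fun t => g t ^ k) (k * (g θ ^ (k - 1) * deriv g θ)) θ :=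
    fun θ => ((hasDerivAt_zpow k (g θ) (.inl (hg0 θ))).comp θ
      ((hg.differentiable one_ne_zero) θ).hasDerivAt).congr_deriv (by ring)
  have hcont : Continuous fun θ => (k : ℂ) * (g θ ^ (k - 1) * deriv g θ) :=
    continuous_const.mul
      ((hg.continuous.zpow₀ _ fun θ => .inl (hg0 θ)).mul (hg.continuous_deriv le_rfl))
  have := intervalIntegral.integral_eq_sub_of_hasDerivAt (fun θ _ => hderiv θ)
    (hcont.intervalIntegrable a b)
  rw [intervalIntegral.integral_const_mul, hab, sub_self] at this
  exact (mul_eq_zero.1 this).resolve_left (Int.cast_ne_zero.2 hk)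

variable {u v : ℤ → ℂ} {U V : ℤ → ℝ}

theorem hasSum_integral_laurent_mul (hg : ContDiff ℝ 1 g) (hg0 : ∀ θ, g θ ≠ 0)
    (hU : Summable U) (hV : Summable V)
    (huU : ∀ n θ, ‖u n * g θ ^ n‖ ≤ U n) (hvV : ∀ n θ, ‖v n * g θ ^ n‖ ≤ V n) :
    HasSum (fun p : ℤ × ℤ => u p.1 * v p.2 * ∫ θ in a..b, g θ ^ (p.1 + p.2 - 1) * deriv g θ)
      (∫ θ in a..b, (∑' n, u n * g θ ^ n) * (∑' n, v n * g θ ^ n) * (deriv g θ / g θ)) := by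
  have hU0 : 0 ≤ U := fun n => (norm_nonneg _).trans (huU n 0)
  have hV0 : 0 ≤ V := fun n => (norm_nonneg _).trans (hvV n 0)
  have hpow (c : ℂ) (n : ℤ) : Continuous fun θ => c * g θ ^ n :=
    continuous_const.mul (hg.continuous.zpow₀ n fun θ => .inl (hg0 θ))
  have hlog : Continuous fun θ => deriv g θ / g θ :=
    (hg.continuous_deriv le_rfl).div hg.continuous hg0
  have hsummable (w : ℤ → ℂ) (W : ℤ → ℝ) (hW : Summable W) (hwW : ∀ n θ, ‖w n * g θ ^ n‖ ≤ W n)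
      (θ : ℝ) : Summable fun n => ‖w n * g θ ^ n‖ :=
    hW.of_nonneg_of_le (fun _ => norm_nonneg _) (hwW · θ)
  have hterm (p : ℤ × ℤ) (θ : ℝ) : u p.1 * g θ ^ p.1 * (v p.2 * g θ ^ p.2) * (deriv g θ / g θ)
      = u p.1 * v p.2 * (g θ ^ (p.1 + p.2 - 1) * deriv g θ) := by
    rw [zpow_sub_one₀ (hg0 θ), zpow_add₀ (hg0 θ)]
    ring
  simp only [← intervalIntegral.integral_const_mul, ← hterm]
  refine intervalIntegral.hasSum_integral_of_dominated_convergence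
    (fun p θ => U p.1 * V p.2 * ‖deriv g θ / g θ‖) (fun p => ?_) (fun p => ?_) ?_ ?_ ?_
  · exact (((hpow _ _).mul (hpow _ _)).mul hlog).aestronglyMeasurable
  · refine .of_forall fun θ _ => ?_
    rw [norm_mul, norm_mul]
    exact mul_le_mul_of_nonneg_right
      (mul_le_mul (huU _ _) (hvV _ _) (norm_nonneg _) (hU0 _)) (norm_nonneg _)
  · exact .of_forall fun θ _ => (hU.mul_of_nonneg hV hU0 hV0).mul_right _
  · simp only [tsum_mul_right]
    exact (continuous_const.mul hlog.norm).intervalIntegrable a b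
  · refine .of_forall fun θ _ => ?_
    have hu := hsummable u U hU huU θ
    have hv := hsummable v V hV hvV θ
    have huv : HasSum (fun p : ℤ × ℤ => u p.1 * g θ ^ p.1 * (v p.2 * g θ ^ p.2))
        ((∑' n, u n * g θ ^ n) * (∑' n, v n * g θ ^ n)) :=
      HasSum.mul (f := fun n => u n * g θ ^ n) (g := fun n => v n * g θ ^ n)
        hu.of_norm.hasSum hv.of_norm.hasSum (summable_mul_of_summable_norm (R := ℂ)
          (f := fun n => u n * g θ ^ n) (g := fun n => v n * g θ ^ n) hu hv)
    exact huv.mul_right _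

theorem hasSum_mul_neg_eq_contour_integral (hg : ContDiff ℝ 1 g) (hg0 : ∀ θ, g θ ≠ 0)
    (hab : g a = g b)
    (hwind : (2 * π * I)⁻¹ * ∫ θ in a..b, deriv g θ / g θ = 1)
    (hU : Summable U) (hV : Summable V)
    (huU : ∀ n θ, ‖u n * g θ ^ n‖ ≤ U n) (hvV : ∀ n θ, ‖v n * g θ ^ n‖ ≤ V n) :
    HasSum (fun n => u n * v (-n)) ((2 * π * I)⁻¹ *
      ∫ θ in a..b, (∑' n, u n * g θ ^ n) * (∑' n, v n * g θ ^ n) * (deriv g θ / g θ)) := by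
  have hsum := hasSum_integral_laurent_mul (a := a) (b := b) hg hg0 hU hV huU hvV
  simp only [integral_zpow_sub_one_mul_deriv hg hg0 hab] at hsum
  -- only the antidiagonal `m + n = 0` contributes
  rw [← (Function.Injective.hasSum_iff (g := fun n : ℤ => (n, -n))
    (fun m n h => congrArg Prod.fst h) ?_)] at hsum
  · have h := hsum.mul_left (2 * π * I)⁻¹
    simp only [Function.comp_def, add_neg_cancel, if_true,
      fun n => mul_left_comm (2 * π * I)⁻¹ (u n * v (-n)), hwind, mul_one] at h
    exact h
  · rintro ⟨m, n⟩ hmn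
    rw [if_neg, mul_zero]
    rintro h
    exact hmn ⟨m, by simp; omega⟩

end Laurent

def twoSided {α : Type*} (p : ℕ → α) (z : α) (q : ℕ → α) : ℤ → α
  | 0 => z
  | (n + 1 : ℕ) => p n
  | .negSucc n => q n

section TwoSided

variable {α : Type*} (p q : ℕ → α) (z : α)

@[simp] theorem twoSided_natCast_add_one (n : ℕ) : twoSided p z q (n + 1) = p n := rfl

variable {p q z}

theorem hasSum_twoSided [AddCommMonoid α] [TopologicalSpace α] [ContinuousAdd α] {s t : α}
    (hp : HasSum p s) (hq : HasSum q t) : HasSum (twoSided p z q) (s + z + t) :=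
  HasSum.of_add_one_of_neg_add_one hp hq

theorem Summable.of_twoSided_left [AddCommGroup α] [UniformSpace α] [IsUniformAddGroup α]
    [CompleteSpace α] (h : Summable (twoSided p z q)) : Summable p := by
  simpa [Function.comp_def] using
    h.comp_injective (i := fun n : ℕ => (n + 1 : ℤ)) fun m n hmn => by simpa using hmn

theorem norm_twoSided_le [Norm α] {P Q : ℕ → ℝ} {Z : ℝ} (hp : ∀ n, ‖p n‖ ≤ P n) (hz : ‖z‖ ≤ Z)
    (hq : ∀ n, ‖q n‖ ≤ Q n) (n : ℤ) : ‖twoSided p z q n‖ ≤ twoSided P Z Q n := by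
  rcases n with (_ | n) | n
  exacts [hz, hp n, hq n]

theorem twoSided_mul_zpow [DivisionRing α] (x : α) (n : ℤ) :
    twoSided p z q n * x ^ n
      = twoSided (fun k => p k * x ^ (k + 1)) z (fun k => q k * x ^ (-(k + 1 : ℤ))) n := by
  rcases n with (_ | n) | n
  · simp [twoSided]
  · simp [twoSided, ← zpow_natCast]
  · simp [twoSided, Int.negSucc_eq]

theorem twoSided_mul_twoSided_neg [CommMonoid α] (n : ℤ) :
    twoSided p z q n * twoSided p z q (-n)
      = twoSided (fun k => p k * q k) (z ^ 2) (fun k => p k * q k) n := by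
  rcases n with (_ | n) | n
  · simp [twoSided, sq]
  · rfl
  · exact mul_comm _ _

end TwoSided

theorem norm_natCast_add_one_mul_mul_pow_le {t x : ℂ} {R : ℝ} (hx : ‖x‖ ≤ R) (n : ℕ) :
    ‖((n : ℂ) + 1) * t * x ^ (n + 1)‖ ≤ (n + 1 : ℝ) * ‖t‖ * R ^ (n + 1) := by
  rw [norm_mul, norm_mul, norm_pow, show ((n : ℂ) + 1) = ((n + 1 : ℕ) : ℂ) by push_cast; rfl,
    Complex.norm_natCast]
  push_cast
  gcongr

theorem norm_mul_zpow_neg_le {𝕜 : Type*} [NormedDivisionRing 𝕜] {v x : 𝕜} {ρ : ℝ} (hρ : 0 < ρ)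
    (hx : ρ ≤ ‖x‖) (n : ℕ) : ‖v * x ^ (-(n : ℤ))‖ ≤ ‖v‖ * ρ ^ (-(n : ℤ)) := by
  rw [norm_mul, norm_zpow, zpow_neg, zpow_neg, zpow_natCast, zpow_natCast]
  gcongr

theorem intCast_mul_zpow_eq_inv_mul_mul_self {K : Type*} [Field K] {x : K} (hx : x ≠ 0) {μ : ℤ}
    (hμ : (μ : K) ≠ 0) (ν : ℤ) (y d : K) :
    μ * x ^ (2 * μ - 1) * y ^ (-(2 * ν)) * d
      = (μ : K)⁻¹ * ((μ * x ^ μ * y ^ (-ν)) * (μ * x ^ μ * y ^ (-ν)) * (d / x)) := by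
  rw [zpow_sub_one₀ hx, show 2 * μ = μ * 2 by ring, show -(2 * ν) = -ν * 2 by ring,
    zpow_mul, zpow_mul]
  field_simp

theorem stmt_15_general
    (g f : ℝ → ℂ) (hg : ContDiff ℝ 1 g)
    (hgper : Function.Periodic g (2 * Real.pi))
    (hg0 : ∀ θ : ℝ, g θ ≠ 0)
    (μ ν : ℤ) (hμ : μ ≠ 0)
    (hwind : (2 * Real.pi * Complex.I)⁻¹ *
      ∫ θ in (0:ℝ)..(2 * Real.pi), deriv g θ / g θ = 1)
    (t₀ : ℂ) (tp vp : ℕ → ℂ)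
    (R ρ : ℝ) (hρ0 : 0 < ρ)
    (hρg : ∀ θ : ℝ, ρ < ‖g θ‖)
    (hgR : ∀ θ : ℝ, ‖g θ‖ < R)
    (htpsum : Summable fun n : ℕ => (n + 1 : ℝ) * ‖tp (n + 1)‖ * R ^ (n + 1))
    (hvpsum : Summable fun n : ℕ => ‖vp (n + 1)‖ * ρ ^ (-(n + 1 : ℤ)))
    (hexp : ∀ θ : ℝ,
      (μ : ℂ) * g θ ^ μ * f θ ^ (-ν)
        = (∑' n : ℕ, ((n : ℂ) + 1) * tp (n + 1) * g θ ^ (n + 1)) + t₀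
          + ∑' n : ℕ, vp (n + 1) * g θ ^ (-(n + 1 : ℤ))) :
    Summable (fun n : ℕ => ((n : ℂ) + 1) * tp (n + 1) * vp (n + 1)) ∧
    (2 * Real.pi * Complex.I)⁻¹ *
        ∫ θ in (0:ℝ)..(2 * Real.pi),
          (μ : ℂ) * g θ ^ (2 * μ - 1) * f θ ^ (-(2 * ν)) * deriv g θ
      = (μ : ℂ)⁻¹ * (t₀ ^ 2 + 2 * ∑' n : ℕ, ((n : ℂ) + 1) * tp (n + 1) * vp (n + 1)) := by
  set a := twoSided (fun n : ℕ => ((n : ℂ) + 1) * tp (n + 1)) t₀ (fun n => vp (n + 1)) with ha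
  set c := twoSided (fun n : ℕ => (n + 1 : ℝ) * ‖tp (n + 1)‖ * R ^ (n + 1)) ‖t₀‖
    (fun n : ℕ => ‖vp (n + 1)‖ * ρ ^ (-(n + 1 : ℤ)))
  have hpos (n : ℕ) (θ : ℝ) := norm_natCast_add_one_mul_mul_pow_le (t := tp (n + 1)) (hgR θ).le n
  have hneg (n : ℕ) (θ : ℝ) : ‖vp (n + 1) * g θ ^ (-(n + 1 : ℤ))‖
      ≤ ‖vp (n + 1)‖ * ρ ^ (-(n + 1 : ℤ)) := mod_cast norm_mul_zpow_neg_le hρ0 (hρg θ).le (n + 1)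
  have hac (n : ℤ) (θ : ℝ) : ‖a n * g θ ^ n‖ ≤ c n := by
    rw [twoSided_mul_zpow]
    exact norm_twoSided_le (hpos · θ) le_rfl (hneg · θ) n
  have hc : Summable c := (hasSum_twoSided htpsum.hasSum hvpsum.hasSum).summable
  have hA (θ : ℝ) : ∑' n, a n * g θ ^ n = μ * g θ ^ μ * f θ ^ (-ν) := by
    simp only [ha, twoSided_mul_zpow, hexp θ]
    exact (hasSum_twoSided (htpsum.of_norm_bounded (hpos · θ)).hasSum
      (hvpsum.of_norm_bounded (hneg · θ)).hasSum).tsum_eq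
  have hdiag := hasSum_mul_neg_eq_contour_integral hg hg0 (by simpa using (hgper 0).symm) hwind
    hc hc hac hac
  simp only [hA] at hdiag
  simp only [ha, twoSided_mul_twoSided_neg] at hdiag
  have hw := hdiag.summable.of_twoSided_left
  refine ⟨hw, ?_⟩
  rw [intervalIntegral.integral_congr fun θ _ =>
      intCast_mul_zpow_eq_inv_mul_mul_self (hg0 θ) (Int.cast_ne_zero.2 hμ) ν (f θ) (deriv g θ),
    intervalIntegral.integral_const_mul,
    mul_left_comm, ← (hasSum_twoSided hw.hasSum hw.hasSum).unique hdiag]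
  ring

/-- Evaluation of `(1/2πi) ∮ μ g^{2μ-1} f^{-2ν} dg` for the special solution
`ℋ(z₁,z₂) = z₁^μ z₂^{-ν}`: if the Orlov–Schulman expansion
`μ g^μ f^{-ν} = Σ_{n≥1} n t_n g^n + t₀ + Σ_{n≥1} v_n g^{-n}` holds on the unit circle
and the winding number of `g` about `0` is `1`, then the integral equals
`(1/μ)(t₀² + 2 Σ_{n≥1} n t_n v_n)`, the series converging absolutely. -/
theorem stmt_15
    (g f : ℝ → ℂ) (hg : ContDiff ℝ 1 g) (hf : ContDiff ℝ 1 f)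
    (hgper : Function.Periodic g (2 * Real.pi))
    (hfper : Function.Periodic f (2 * Real.pi))
    (hg0 : ∀ θ : ℝ, g θ ≠ 0) (hf0 : ∀ θ : ℝ, f θ ≠ 0)
    (μ ν : ℤ) (hμ : μ ≠ 0) (hν : ν ≠ 0)
    (hwind : (2 * Real.pi * Complex.I)⁻¹ *
      ∫ θ in (0:ℝ)..(2 * Real.pi), deriv g θ / g θ = 1)
    (t₀ : ℂ) (tp vp : ℕ → ℂ)
    (R ρ : ℝ) (hρ0 : 0 < ρ)
    (hρg : ∀ θ : ℝ, ρ < ‖g θ‖)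
    (hgR : ∀ θ : ℝ, ‖g θ‖ < R)
    (htpsum : Summable fun n : ℕ => (n + 1 : ℝ) * ‖tp (n + 1)‖ * R ^ (n + 1))
    (hvpsum : Summable fun n : ℕ => ‖vp (n + 1)‖ * ρ ^ (-(n + 1 : ℤ)))
    (hexp : ∀ θ : ℝ,
      (μ : ℂ) * g θ ^ μ * f θ ^ (-ν)
        = (∑' n : ℕ, ((n : ℂ) + 1) * tp (n + 1) * g θ ^ (n + 1)) + t₀
          + ∑' n : ℕ, vp (n + 1) * g θ ^ (-(n + 1 : ℤ))) :
    Summable (fun n : ℕ => ((n : ℂ) + 1) * tp (n + 1) * vp (n + 1)) ∧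
    (2 * Real.pi * Complex.I)⁻¹ *
        ∫ θ in (0:ℝ)..(2 * Real.pi),
          (μ : ℂ) * g θ ^ (2 * μ - 1) * f θ ^ (-(2 * ν)) * deriv g θ
      = (μ : ℂ)⁻¹ * (t₀ ^ 2 + 2 * ∑' n : ℕ, ((n : ℂ) + 1) * tp (n + 1) * vp (n + 1)) :=
  stmt_15_general g f hg hgper hg0 μ ν hμ hwind t₀ tp vp R ρ hρ0 hρg hgR htpsum hvpsum hexp
end

section
/- Let g, f : ℝ → ℂ∖{0} be C¹ and 2π-periodic, let μ, ν be nonzero integers, and suppose the winding numbers of g and of f about 0 both equal 1. Let t₀ ∈ ℂ and let (t_n)_{n≥1}, (v_n)_{n≥1}, (t_{−n})_{n≥1}, (v_{−n})_{n≥1} be sequences of complex numbers for which there exist R > max_θ|g(θ)|, 0 < ρ < min_θ|g(θ)|, 0 < σ < min_θ|f(θ)| and s > max_θ|f(θ)| with Σ n|t_n|R^{n} < ∞, Σ |v_n|ρ^{−n} < ∞, Σ n|t_{−n}|σ^{−n} < ∞ and Σ |v_{−n}|s^{n} < ∞, such that for all θ: μ·g^{μ}·f^{−ν} = Σ_{n≥1}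 n t_n g^{n} + t₀ + Σ_{n≥1} v_n g^{−n} and ν·g^{μ}·f^{−ν} = −Σ_{n≥1} n t_{−n} f^{−n} + t₀ − Σ_{n≥1} v_{−n} f^{n}. Then ν·( t₀² + 2 Σ_{n≥1} n t_n v_n ) = μ·( t₀² + 2 Σ_{n≥1} n t_{−n} v_{−n} ), both series converging absolutely. -/
/-!
Write `h = g ^ μ * f ^ (-ν)`. Along a closed `C¹` curve `u` of winding number one,
`∮ u ^ k du = 2πi` for `k = -1` and `0` otherwise, so for a uniformly convergent Laurent series
`F = ∑ₖ cₖ u ^ k` the integral `∮ F u ^ j du` picks out `2πi c₋ⱼ₋₁`, and hence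
`∮ F² du / u = 2πi ∑ₖ cₖ c₋ₖ`; the series on the right converges because it is obtained by
integrating a uniformly convergent one term by term.
Applied to `F = μ h` as a series in `g` and to `F = ν h` as a series in `f`, this identifies
`(2πi)⁻¹ ∮ (μ h)² dg / g` with `t₀² + 2 ∑ n tₙ vₙ` and `(2πi)⁻¹ ∮ (ν h)² df / f` with
`t₀² + 2 ∑ n t₋ₙ v₋ₙ`. Finally `h' / h = μ g' / g - ν f' / f`, so
`ν (μ h)² g' / g - μ (ν h)² f' / f = μ ν h h'` is the derivative of the periodic function
`μ ν h² / 2` and integrates to zero over a period.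
-/

open MeasureTheory intervalIntegral Function Complex Real

theorem integral_eq_zero_of_hasDerivAt_of_periodic {E : Type*} [NormedAddCommGroup E]
    [NormedSpace ℝ E] [CompleteSpace E] {F F' : ℝ → E} {T : ℝ}
    (hF : ∀ θ, HasDerivAt F (F' θ) θ) (hF' : IntervalIntegrable F' volume 0 T)
    (hper : Periodic F T) :
    ∫ θ in 0..T, F' θ = 0 := by
  rw [integral_eq_sub_of_hasDerivAt (fun θ _ => hF θ) hF', hper.eq, sub_self]

section Curve

variable {u : ℝ → ℂ} {T : ℝ}

theorem hasDerivAt_zpow_comp (hu : Differentiable ℝ u) (hu0 : ∀ θ, u θ ≠ 0) (k : ℤ) (θ : ℝ) :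
    HasDerivAt (fun t => u t ^ k) (k * u θ ^ (k - 1) * deriv u θ) θ := by
  simpa [mul_assoc, Function.comp_def] using
    (hasDerivAt_zpow k (u θ) (.inl (hu0 θ))).comp θ (hu θ).hasDerivAt

theorem continuous_zpow_mul_deriv (hu : ContDiff ℝ 1 u) (hu0 : ∀ θ, u θ ≠ 0) (k : ℤ) :
    Continuous fun θ => u θ ^ k * deriv u θ :=
  (hu.continuous.zpow₀ k fun θ => .inl (hu0 θ)).mul (hu.continuous_deriv le_rfl)

theorem integral_zpow_mul_deriv_of_ne_neg_one (hu : ContDiff ℝ 1 u) (hper : Periodic u T)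
    (hu0 : ∀ θ, u θ ≠ 0) {k : ℤ} (hk : k ≠ -1) :
    ∫ θ in 0..T, u θ ^ k * deriv u θ = 0 := by
  have hk' : (k + 1 : ℂ) ≠ 0 := by exact_mod_cast (show k + 1 ≠ 0 by omega)
  refine integral_eq_zero_of_hasDerivAt_of_periodic
    (F := fun θ => (k + 1 : ℂ)⁻¹ * u θ ^ (k + 1)) (fun θ => ?_)
    ((continuous_zpow_mul_deriv hu hu0 k).intervalIntegrable _ _)
    (fun θ => by simp only [hper θ])
  refine ((hasDerivAt_zpow_comp (hu.differentiable one_ne_zero) hu0 (k + 1) θ).const_mul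
    (k + 1 : ℂ)⁻¹).congr_deriv ?_
  push_cast
  rw [add_sub_cancel_right, mul_assoc, inv_mul_cancel_left₀ hk']

theorem integral_zpow_mul_deriv (hu : ContDiff ℝ 1 u) (hper : Periodic u T)
    (hu0 : ∀ θ, u θ ≠ 0) (hwind : ∫ θ in 0..T, deriv u θ / u θ = 2 * π * I) (k : ℤ) :
    ∫ θ in 0..T, u θ ^ k * deriv u θ = if k = -1 then 2 * π * I else 0 := by
  split_ifs with hk
  · simpa [hk, div_eq_inv_mul] using hwind
  · exact integral_zpow_mul_deriv_of_ne_neg_one hu hper hu0 hk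

end Curve

section Laurent

variable {u F : ℝ → ℂ} {c : ℤ → ℂ} {M : ℤ → ℝ}

theorem continuous_of_hasSum_laurent (hu : Continuous u) (hu0 : ∀ θ, u θ ≠ 0)
    (hM : Summable M) (hcM : ∀ k θ, ‖c k * u θ ^ k‖ ≤ M k)
    (hF : ∀ θ, HasSum (fun k => c k * u θ ^ k) (F θ)) : Continuous F := by
  rw [show F = fun θ => ∑' k, c k * u θ ^ k from funext fun θ => (hF θ).tsum_eq.symm]
  exact continuous_tsum (fun k => continuous_const.mul (hu.zpow₀ k fun θ => .inl (hu0 θ))) hM hcM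

theorem hasSum_intervalIntegral_mul_of_hasSum_laurent (hu : Continuous u)
    (hu0 : ∀ θ, u θ ≠ 0) (hM : Summable M) (hcM : ∀ k θ, ‖c k * u θ ^ k‖ ≤ M k)
    (hF : ∀ θ, HasSum (fun k => c k * u θ ^ k) (F θ)) {w : ℝ → ℂ} (hw : Continuous w)
    (a b : ℝ) :
    HasSum (fun k => c k * ∫ θ in a..b, u θ ^ k * w θ) (∫ θ in a..b, F θ * w θ) := by
  have hterm : ∀ k, Continuous fun θ => c k * u θ ^ k * w θ := fun k =>
    (continuous_const.mul (hu.zpow₀ k fun θ => .inl (hu0 θ))).mul hw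
  have h := hasSum_integral_of_dominated_convergence (μ := volume) (a := a) (b := b)
    (F := fun k θ => c k * u θ ^ k * w θ) (fun k θ => M k * ‖w θ‖)
    (fun k => (hterm k).aestronglyMeasurable)
    (fun k => .of_forall fun θ _ => by rw [norm_mul]; gcongr; exact hcM k θ)
    (.of_forall fun θ _ => hM.mul_right _)
    (by simp_rw [tsum_mul_right]; exact (continuous_const.mul hw.norm).intervalIntegrable _ _)
    (.of_forall fun θ _ => (hF θ).mul_right (w θ))
  simpa only [mul_assoc, intervalIntegral.integral_const_mul] using h

theorem integral_mul_zpow_mul_deriv_of_hasSum_laurent {T : ℝ} (hu : ContDiff ℝ 1 u)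
    (hper : Periodic u T) (hu0 : ∀ θ, u θ ≠ 0)
    (hwind : ∫ θ in 0..T, deriv u θ / u θ = 2 * π * I)
    (hM : Summable M) (hcM : ∀ k θ, ‖c k * u θ ^ k‖ ≤ M k)
    (hF : ∀ θ, HasSum (fun k => c k * u θ ^ k) (F θ)) (j : ℤ) :
    ∫ θ in 0..T, F θ * (u θ ^ j * deriv u θ) = 2 * π * I * c (-j - 1) := by
  have h := hasSum_intervalIntegral_mul_of_hasSum_laurent hu.continuous hu0 hM hcM hF
    (continuous_zpow_mul_deriv hu hu0 j) 0 T
  have hpow : ∀ k, ∫ θ in 0..T, u θ ^ k * (u θ ^ j * deriv u θ)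
      = if k + j = -1 then 2 * π * I else 0 := fun k => by
    simp_rw [← mul_assoc, ← zpow_add₀ (hu0 _), integral_zpow_mul_deriv hu hper hu0 hwind]
  simp only [hpow] at h
  rw [mul_comm]
  refine h.unique ?_
  convert hasSum_ite_eq (-j - 1) (c (-j - 1) * (2 * π * I)) using 1
  ext k
  by_cases hk : k = -j - 1
  · simp [hk, show -j - 1 + j = -1 by omega]
  · simp [hk, show k + j ≠ -1 by omega]

theorem hasSum_mul_neg_of_hasSum_laurent {T : ℝ} (hu : ContDiff ℝ 1 u)
    (hper : Periodic u T) (hu0 : ∀ θ, u θ ≠ 0)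
    (hwind : ∫ θ in 0..T, deriv u θ / u θ = 2 * π * I)
    (hM : Summable M) (hcM : ∀ k θ, ‖c k * u θ ^ k‖ ≤ M k)
    (hF : ∀ θ, HasSum (fun k => c k * u θ ^ k) (F θ)) :
    HasSum (fun k => c k * c (-k))
      ((2 * π * I)⁻¹ * ∫ θ in 0..T, F θ ^ 2 * (deriv u θ / u θ)) := by
  have hFc := continuous_of_hasSum_laurent hu.continuous hu0 hM hcM hF
  have h := hasSum_intervalIntegral_mul_of_hasSum_laurent hu.continuous hu0 hM hcM hF
    (w := fun θ => F θ * (u θ ^ (-1 : ℤ) * deriv u θ))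
    (hFc.mul (continuous_zpow_mul_deriv hu hu0 (-1))) 0 T
  have hcoeff : ∀ k, ∫ θ in 0..T, u θ ^ k * (F θ * (u θ ^ (-1 : ℤ) * deriv u θ))
      = 2 * π * I * c (-k) := fun k => by
    rw [show -k = -(k - 1) - 1 by ring,
      ← integral_mul_zpow_mul_deriv_of_hasSum_laurent hu hper hu0 hwind hM hcM hF]
    refine integral_congr fun θ _ => ?_
    simp only [zpow_sub_one₀ (hu0 θ), zpow_neg_one]
    ring
  have hsq : ∫ θ in 0..T, F θ ^ 2 * (deriv u θ / u θ)
      = ∫ θ in 0..T, F θ * (F θ * (u θ ^ (-1 : ℤ) * deriv u θ)) :=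
    integral_congr fun θ _ => by simp only [zpow_neg_one, div_eq_mul_inv]; ring
  have h2πI : (2 * π * I : ℂ) ≠ 0 := by simp [pi_ne_zero]
  rw [hsq]
  simpa only [hcoeff, mul_left_comm (c _), inv_mul_cancel_left₀ h2πI] using
    h.mul_left (2 * π * I)⁻¹

end Laurent

/-- The two-sided sequence `…, b 1, b 0, c, a 0, a 1, …`: `a n` sits at index `n + 1` and
`b n` at index `-(n + 1)`. -/
def laurentCoeff {α : Type*} (a : ℕ → α) (c : α) (b : ℕ → α) : ℤ → α
  | 0 => c
  | (n + 1 : ℕ) => a n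
  | Int.negSucc n => b n

section LaurentCoeff

variable {α : Type*} {a b : ℕ → α} {c : α}

@[simp] theorem laurentCoeff_zero : laurentCoeff a c b 0 = c := rfl

@[simp] theorem laurentCoeff_natCast_add_one (n : ℕ) : laurentCoeff a c b (n + 1) = a n := rfl

@[simp] theorem laurentCoeff_neg_natCast_add_one (n : ℕ) :
    laurentCoeff a c b (-(n + 1)) = b n := rfl

end LaurentCoeff

section LaurentSeries

variable {𝕜 : Type*} [NormedField 𝕜] {a b : ℕ → 𝕜} {c : 𝕜}

theorem hasSum_laurentCoeff_mul_zpow [CompleteSpace 𝕜] {z : 𝕜}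
    (hs : Summable fun k : ℤ => laurentCoeff a c b k * z ^ k) :
    HasSum (fun k => laurentCoeff a c b k * z ^ k)
      ((∑' n : ℕ, a n * z ^ (n + 1)) + c + ∑' n : ℕ, b n * z ^ (-(n + 1 : ℤ))) := by
  set f := fun k : ℤ => laurentCoeff a c b k * z ^ k
  have hnat : Summable fun n : ℕ => laurentCoeff a c b n * z ^ (n : ℤ) :=
    hs.comp_injective Nat.cast_injective
  have hneg : Summable fun n : ℕ => laurentCoeff a c b (-(n + 1)) * z ^ (-(n + 1 : ℤ)) :=
    hs.comp_injective fun m n h => by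
      have h' : -((m : ℤ) + 1) = -((n : ℤ) + 1) := h
      omega
  have h := hs.hasSum
  rw [tsum_of_nat_of_neg_add_one (f := f) hnat hneg, hnat.tsum_eq_zero_add] at h
  convert h using 1
  simp only [f, zpow_natCast]
  simp only [Nat.cast_zero, laurentCoeff_zero, pow_zero, mul_one, Nat.cast_add, Nat.cast_one,
    laurentCoeff_natCast_add_one, laurentCoeff_neg_natCast_add_one]
  ring

theorem exists_summable_bound_laurentCoeff_mul_zpow {ρ R : ℝ} (hρ : 0 < ρ)
    (ha : Summable fun n => ‖a n‖ * R ^ (n + 1))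
    (hb : Summable fun n => ‖b n‖ * ρ ^ (-(n + 1 : ℤ))) :
    ∃ M : ℤ → ℝ, Summable M ∧
      ∀ k (z : 𝕜), ρ ≤ ‖z‖ → ‖z‖ ≤ R → ‖laurentCoeff a c b k * z ^ k‖ ≤ M k := by
  refine ⟨laurentCoeff (fun n => ‖a n‖ * R ^ (n + 1)) ‖c‖ (fun n => ‖b n‖ * ρ ^ (-(n + 1 : ℤ))),
    .of_nat_of_neg_add_one ((summable_nat_add_iff 1).mp (by simpa using ha)) hb, ?_⟩
  rintro ((_ | n) | n) z hρz hzR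
  · simp
  · change ‖a n * z ^ ((n + 1 : ℕ) : ℤ)‖ ≤ ‖a n‖ * R ^ (n + 1)
    rw [zpow_natCast, norm_mul, norm_pow]
    gcongr
  · change ‖b n * z ^ Int.negSucc n‖ ≤ ‖b n‖ * ρ ^ Int.negSucc n
    rw [norm_mul, norm_zpow, zpow_negSucc, zpow_negSucc]
    gcongr

theorem hasSum_mul_of_hasSum_laurentCoeff_mul_neg [NeZero (2 : 𝕜)] {S : 𝕜}
    (h : HasSum (fun k => laurentCoeff a c b k * laurentCoeff a c b (-k)) S) :
    HasSum (fun n => a n * b n) ((S - c ^ 2) / 2) := by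
  have h' := (hasSum_nat_add_iff' 1).mpr h.nat_add_neg
  simp only [Finset.range_one, Finset.sum_singleton, Nat.cast_zero, neg_zero, laurentCoeff_zero,
    Nat.cast_add, Nat.cast_one, laurentCoeff_natCast_add_one, laurentCoeff_neg_natCast_add_one,
    neg_neg] at h'
  convert h'.div_const 2 using 1
  · ext n; field_simp; ring
  · ring

end LaurentSeries

theorem hasSum_mul_of_eq_laurent_series {u F : ℝ → ℂ} {T ρ R : ℝ} {a b : ℕ → ℂ} {c : ℂ}
    (hu : ContDiff ℝ 1 u) (hper : Periodic u T) (hu0 : ∀ θ, u θ ≠ 0)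
    (hwind : ∫ θ in 0..T, deriv u θ / u θ = 2 * π * I) (hρ : 0 < ρ)
    (hρu : ∀ θ, ρ ≤ ‖u θ‖) (huR : ∀ θ, ‖u θ‖ ≤ R)
    (ha : Summable fun n => ‖a n‖ * R ^ (n + 1))
    (hb : Summable fun n => ‖b n‖ * ρ ^ (-(n + 1 : ℤ)))
    (hF : ∀ θ, F θ = (∑' n : ℕ, a n * u θ ^ (n + 1)) + c + ∑' n : ℕ, b n * u θ ^ (-(n + 1 : ℤ))) :
    HasSum (fun n => a n * b n)
      (((2 * π * I)⁻¹ * (∫ θ in 0..T, F θ ^ 2 * (deriv u θ / u θ)) - c ^ 2) / 2) := by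
  obtain ⟨M, hM, hcM⟩ := exists_summable_bound_laurentCoeff_mul_zpow (c := c) hρ ha hb
  have hcM' : ∀ k θ, ‖laurentCoeff a c b k * u θ ^ k‖ ≤ M k := fun k θ =>
    hcM k _ (hρu θ) (huR θ)
  refine hasSum_mul_of_hasSum_laurentCoeff_mul_neg <|
    hasSum_mul_neg_of_hasSum_laurent (F := F) hu hper hu0 hwind hM hcM' fun θ => ?_
  rw [hF θ]
  exact hasSum_laurentCoeff_mul_zpow (.of_norm_bounded hM (hcM' · θ))

theorem mul_integral_sq_mul_deriv_div_eq {g f : ℝ → ℂ} {T : ℝ} (hg : ContDiff ℝ 1 g)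
    (hf : ContDiff ℝ 1 f) (hgper : Periodic g T) (hfper : Periodic f T)
    (hg0 : ∀ θ, g θ ≠ 0) (hf0 : ∀ θ, f θ ≠ 0) (μ ν : ℤ) :
    ν * ∫ θ in 0..T, (μ * g θ ^ μ * f θ ^ (-ν)) ^ 2 * (deriv g θ / g θ)
      = μ * ∫ θ in 0..T, (ν * g θ ^ μ * f θ ^ (-ν)) ^ 2 * (deriv f θ / f θ) := by
  have hg' := hg.continuous_deriv le_rfl
  have hf' := hf.continuous_deriv le_rfl
  have hgc := hg.continuous
  have hfc := hf.continuous
  have hX : Continuous fun θ => (μ * g θ ^ μ * f θ ^ (-ν)) ^ 2 * (deriv g θ / g θ) := by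
    fun_prop (disch := simp [hg0, hf0])
  have hY : Continuous fun θ => (ν * g θ ^ μ * f θ ^ (-ν)) ^ 2 * (deriv f θ / f θ) := by
    fun_prop (disch := simp [hg0, hf0])
  have hd : ∀ θ, HasDerivAt (fun θ => μ * ν / 2 * (g θ ^ μ * f θ ^ (-ν)) ^ 2)
      (ν * ((μ * g θ ^ μ * f θ ^ (-ν)) ^ 2 * (deriv g θ / g θ))
        - μ * ((ν * g θ ^ μ * f θ ^ (-ν)) ^ 2 * (deriv f θ / f θ))) θ := fun θ => by
    refine ((((hasDerivAt_zpow_comp (hg.differentiable one_ne_zero) hg0 μ θ).mul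
      (hasDerivAt_zpow_comp (hf.differentiable one_ne_zero) hf0 (-ν) θ)).pow 2).const_mul
      _).congr_deriv ?_
    rw [Pi.mul_apply, zpow_sub_one₀ (hg0 θ), zpow_sub_one₀ (hf0 θ)]
    push_cast
    field_simp
    ring
  have hper : Periodic (fun θ => μ * ν / 2 * (g θ ^ μ * f θ ^ (-ν)) ^ 2 : ℝ → ℂ) T :=
    fun θ => by simp only [hgper θ, hfper θ]
  have h := integral_eq_zero_of_hasDerivAt_of_periodic hd
    (((hX.const_mul _).sub (hY.const_mul _)).intervalIntegrable _ _) hper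
  rw [intervalIntegral.integral_sub ((hX.const_mul _).intervalIntegrable _ _)
      ((hY.const_mul _).intervalIntegrable _ _),
    intervalIntegral.integral_const_mul, intervalIntegral.integral_const_mul] at h
  exact sub_eq_zero.mp h

theorem stmt_16_general
    (g f : ℝ → ℂ) (hg : ContDiff ℝ 1 g) (hf : ContDiff ℝ 1 f)
    (hgper : Function.Periodic g (2 * Real.pi))
    (hfper : Function.Periodic f (2 * Real.pi))
    (hg0 : ∀ θ : ℝ, g θ ≠ 0) (hf0 : ∀ θ : ℝ, f θ ≠ 0)
    (μ ν : ℤ)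
    (hgwind : (2 * Real.pi * Complex.I)⁻¹ *
      ∫ θ in (0:ℝ)..(2 * Real.pi), deriv g θ / g θ = 1)
    (hfwind : (2 * Real.pi * Complex.I)⁻¹ *
      ∫ θ in (0:ℝ)..(2 * Real.pi), deriv f θ / f θ = 1)
    (t₀ : ℂ) (tp vp tm vm : ℕ → ℂ)
    (R ρ σ s : ℝ) (hρ0 : 0 < ρ) (hσ0 : 0 < σ)
    (hρg : ∀ θ : ℝ, ρ < ‖g θ‖)
    (hgR : ∀ θ : ℝ, ‖g θ‖ < R)
    (hσf : ∀ θ : ℝ, σ < ‖f θ‖)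
    (hfs : ∀ θ : ℝ, ‖f θ‖ < s)
    (htpsum : Summable fun n : ℕ => (n + 1 : ℝ) * ‖tp (n + 1)‖ * R ^ (n + 1))
    (hvpsum : Summable fun n : ℕ => ‖vp (n + 1)‖ * ρ ^ (-(n + 1 : ℤ)))
    (htmsum : Summable fun n : ℕ => (n + 1 : ℝ) * ‖tm (n + 1)‖ * σ ^ (-(n + 1 : ℤ)))
    (hvmsum : Summable fun n : ℕ => ‖vm (n + 1)‖ * s ^ (n + 1))
    (hexp₁ : ∀ θ : ℝ,
      (μ : ℂ) * g θ ^ μ * f θ ^ (-ν)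
        = (∑' n : ℕ, ((n : ℂ) + 1) * tp (n + 1) * g θ ^ (n + 1)) + t₀
          + ∑' n : ℕ, vp (n + 1) * g θ ^ (-(n + 1 : ℤ)))
    (hexp₂ : ∀ θ : ℝ,
      (ν : ℂ) * g θ ^ μ * f θ ^ (-ν)
        = -(∑' n : ℕ, ((n : ℂ) + 1) * tm (n + 1) * f θ ^ (-(n + 1 : ℤ))) + t₀
          - ∑' n : ℕ, vm (n + 1) * f θ ^ (n + 1)) :
    Summable (fun n : ℕ => ((n : ℂ) + 1) * tp (n + 1) * vp (n + 1)) ∧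
    Summable (fun n : ℕ => ((n : ℂ) + 1) * tm (n + 1) * vm (n + 1)) ∧
    (ν : ℂ) * (t₀ ^ 2 + 2 * ∑' n : ℕ, ((n : ℂ) + 1) * tp (n + 1) * vp (n + 1))
      = (μ : ℂ) * (t₀ ^ 2 + 2 * ∑' n : ℕ, ((n : ℂ) + 1) * tm (n + 1) * vm (n + 1)) := by
  have h2πI : (2 * π * I : ℂ) ≠ 0 := by simp [pi_ne_zero]
  have hnorm : ∀ n : ℕ, ‖(n : ℂ) + 1‖ = n + 1 := fun n => by
    exact_mod_cast Complex.norm_natCast (n + 1)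
  have hp := hasSum_mul_of_eq_laurent_series hg hgper hg0
    ((inv_mul_eq_one₀ h2πI).mp hgwind).symm hρ0 (hρg · |>.le) (hgR · |>.le)
    (a := fun n => ((n : ℂ) + 1) * tp (n + 1)) (b := fun n => vp (n + 1))
    (by simpa [norm_mul, hnorm] using htpsum) hvpsum hexp₁
  have hm := hasSum_mul_of_eq_laurent_series hf hfper hf0
    ((inv_mul_eq_one₀ h2πI).mp hfwind).symm hσ0 (hσf · |>.le) (hfs · |>.le)
    (a := fun n => -vm (n + 1)) (c := t₀) (b := fun n => -(((n : ℂ) + 1) * tm (n + 1)))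
    (by simpa using hvmsum) (by simpa [norm_mul, hnorm] using htmsum)
    fun θ => (hexp₂ θ).trans (by simp only [neg_mul, tsum_neg]; ring)
  simp only [neg_mul_neg, mul_comm (vm _)] at hm
  refine ⟨hp.summable, hm.summable, ?_⟩
  rw [hp.tsum_eq, hm.tsum_eq]
  linear_combination (2 * π * I)⁻¹ *
    mul_integral_sq_mul_deriv_div_eq hg hf hgper hfper hg0 hf0 μ ν (T := 2 * π)

/-- The nontrivial identity `2ν Σ n t_n v_n + ν t₀² = 2μ Σ n t_{-n} v_{-n} + μ t₀²`
obtained by integration by parts from the two Orlov–Schulman expansions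
`μ g^μ f^{-ν} = Σ n t_n g^n + t₀ + Σ v_n g^{-n}` and
`ν g^μ f^{-ν} = -Σ n t_{-n} f^{-n} + t₀ - Σ v_{-n} f^n` on the unit circle, for curves
`g, f` of winding number `1` about the origin. -/
theorem stmt_16
    (g f : ℝ → ℂ) (hg : ContDiff ℝ 1 g) (hf : ContDiff ℝ 1 f)
    (hgper : Function.Periodic g (2 * Real.pi))
    (hfper : Function.Periodic f (2 * Real.pi))
    (hg0 : ∀ θ : ℝ, g θ ≠ 0) (hf0 : ∀ θ : ℝ, f θ ≠ 0)
    (μ ν : ℤ) (hμ : μ ≠ 0) (hν : ν ≠ 0)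
    (hgwind : (2 * Real.pi * Complex.I)⁻¹ *
      ∫ θ in (0:ℝ)..(2 * Real.pi), deriv g θ / g θ = 1)
    (hfwind : (2 * Real.pi * Complex.I)⁻¹ *
      ∫ θ in (0:ℝ)..(2 * Real.pi), deriv f θ / f θ = 1)
    (t₀ : ℂ) (tp vp tm vm : ℕ → ℂ)
    (R ρ σ s : ℝ) (hρ0 : 0 < ρ) (hσ0 : 0 < σ)
    (hρg : ∀ θ : ℝ, ρ < ‖g θ‖)
    (hgR : ∀ θ : ℝ, ‖g θ‖ < R)
    (hσf : ∀ θ : ℝ, σ < ‖f θ‖)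
    (hfs : ∀ θ : ℝ, ‖f θ‖ < s)
    (htpsum : Summable fun n : ℕ => (n + 1 : ℝ) * ‖tp (n + 1)‖ * R ^ (n + 1))
    (hvpsum : Summable fun n : ℕ => ‖vp (n + 1)‖ * ρ ^ (-(n + 1 : ℤ)))
    (htmsum : Summable fun n : ℕ => (n + 1 : ℝ) * ‖tm (n + 1)‖ * σ ^ (-(n + 1 : ℤ)))
    (hvmsum : Summable fun n : ℕ => ‖vm (n + 1)‖ * s ^ (n + 1))
    (hexp₁ : ∀ θ : ℝ,
      (μ : ℂ) * g θ ^ μ * f θ ^ (-ν)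
        = (∑' n : ℕ, ((n : ℂ) + 1) * tp (n + 1) * g θ ^ (n + 1)) + t₀
          + ∑' n : ℕ, vp (n + 1) * g θ ^ (-(n + 1 : ℤ)))
    (hexp₂ : ∀ θ : ℝ,
      (ν : ℂ) * g θ ^ μ * f θ ^ (-ν)
        = -(∑' n : ℕ, ((n : ℂ) + 1) * tm (n + 1) * f θ ^ (-(n + 1 : ℤ))) + t₀
          - ∑' n : ℕ, vm (n + 1) * f θ ^ (n + 1)) :
    Summable (fun n : ℕ => ((n : ℂ) + 1) * tp (n + 1) * vp (n + 1)) ∧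
    Summable (fun n : ℕ => ((n : ℂ) + 1) * tm (n + 1) * vm (n + 1)) ∧
    (ν : ℂ) * (t₀ ^ 2 + 2 * ∑' n : ℕ, ((n : ℂ) + 1) * tp (n + 1) * vp (n + 1))
      = (μ : ℂ) * (t₀ ^ 2 + 2 * ∑' n : ℕ, ((n : ℂ) + 1) * tm (n + 1) * vm (n + 1)) :=
  stmt_16_general g f hg hf hgper hfper hg0 hf0 μ ν hgwind hfwind t₀ tp vp tm vm R ρ σ s hρ0 hσ0 hρg
    hgR hσf hfs htpsum hvpsum htmsum hvmsum hexp₁ hexp₂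
end

section
/- Let A ⊆ ℂ∖{0} be open and connected, let g, f : A → ℂ∖{0} be holomorphic, let μ, ν be nonzero integers, and let L_g, L_f : A → ℂ be holomorphic with exp(L_g(w)) = g(w)/w and exp(L_f(w)) = f(w)/w on A. Let t₀ ∈ ℂ and let (t_n)_{n≥1}, (t_{−n})_{n≥1}, (v_n)_{n≥1}, (v_{−n})_{n≥1} be sequences such that the series Σ_{n≥1} n t_n g^{n}, Σ_{n≥1} v_n g^{−n}, Σ_{n≥1} n t_{−n} f^{−n}, Σ_{n≥1} v_{−n} f^{n}, as well as Σ_{n≥1} t_n g^{n}, Σ_{n≥1} (v_n/n) g^{−n}, Σ_{n≥1} t_{−n} f^{−n}, Σ_{n≥1} (v_{−n}/n) f^{n}, all converge locally uniformly on A, and such that on A: μ·g^{μ}·f^{−ν} = Σ_{n≥1} n t_n g^{n} + t₀ + Σ_{n≥1} v_n g^{−n} and ν·g^{μ}·f^{−ν} = −Σ_{n≥1} n t_{−n} f^{−n} + t₀ − Σ_{n≥1} v_{−n} f^{n}. Then the function w ↦ g(w)^{μ} f(w)^{−ν} − [ Σ_{n≥1} t_n g(w)^{n} + t₀·L_g(w)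 − Σ_{n≥1} (v_n/n) g(w)^{−n} − Σ_{n≥1} t_{−n} f(w)^{−n} − t₀·L_f(w) + Σ_{n≥1} (v_{−n}/n) f(w)^{n} ] has identically vanishing derivative on A, hence is constant. -/
/-!
Differentiate. By the two expansions, the logarithmic derivative of `g^μ f^{-ν}` is
`μ g'/g - ν f'/f`, i.e. `g'/g` times the first expansion minus `f'/f` times the second. On the
other hand each series in the bracket is a locally uniform limit of holomorphic partial sums, so
it may be differentiated termwise, and `∑ t_n g^n`, `∑ (v_n/n) g^{-n}`, `∑ t_{-n} f^{-n}`,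
`∑ (v_{-n}/n) f^n` have derivatives `g'/g`, `-g'/g`, `-f'/f`, `f'/f` times the series in the
expansions. Finally `L_g' = g'/g - 1/w` and `L_f' = f'/f - 1/w`, so the two `t₀/w` terms cancel
and the derivative of the difference vanishes; connectedness of `A` makes it constant.
-/

open Filter Finset Topology

section LogarithmicDerivative

variable {𝕜 : Type*} [NontriviallyNormedField 𝕜] {g : 𝕜 → 𝕜} {g' x : 𝕜}

theorem HasDerivAt.zpow_of_ne_zero (hg : HasDerivAt g g' x) (hx : g x ≠ 0) (k : ℤ) :
    HasDerivAt (fun y => g y ^ k) (g' / g x * (k * g x ^ k)) x := by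
  refine ((hasDerivAt_zpow k (g x) (Or.inl hx)).comp x hg).congr_deriv ?_
  rw [zpow_sub_one₀ hx]
  field_simp

theorem HasDerivAt.pow_of_ne_zero (hg : HasDerivAt g g' x) (hx : g x ≠ 0) (k : ℕ) :
    HasDerivAt (fun y => g y ^ k) (g' / g x * (k * g x ^ k)) x := by
  simpa only [zpow_natCast, Int.cast_natCast] using hg.zpow_of_ne_zero hx k

end LogarithmicDerivative

theorem DifferentiableAt.hasDerivAt_of_cexp_eq_div {L g : ℂ → ℂ} {g' x : ℂ}
    (hL : DifferentiableAt ℂ L x) (hg : HasDerivAt g g' x)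
    (hexp : ∀ᶠ y in 𝓝 x, Complex.exp (L y) = g y / y) :
    HasDerivAt L (g' / g x - 1 / x) x := by
  have hne : ∀ {y}, Complex.exp (L y) = g y / y → g y ≠ 0 ∧ y ≠ 0 := fun h =>
    div_ne_zero_iff.mp (h ▸ Complex.exp_ne_zero _)
  have hgL : g =ᶠ[𝓝 x] fun y => Complex.exp (L y) * y :=
    hexp.mono fun y h => by simp only [h, div_mul_cancel₀ _ (hne h).2]
  have hg' := hg.unique ((hL.hasDerivAt.cexp.mul (hasDerivAt_id' x)).congr_of_eventuallyEq hgL)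
  obtain ⟨hgx, hx⟩ := hne hexp.self_of_nhds
  rw [hexp.self_of_nhds] at hg'
  refine hL.hasDerivAt.congr_deriv ?_
  rw [hg']
  field_simp
  ring

theorem hasDerivAt_of_tendstoLocallyUniformlyOn_sum {A : Set ℂ} (hA : IsOpen A)
    {u u' : ℕ → ℂ → ℂ} {S : ℂ → ℂ} {T w : ℂ}
    (hu : ∀ n, ∀ x ∈ A, HasDerivAt (u n) (u' n x) x)
    (hS : TendstoLocallyUniformlyOn (fun N x => ∑ n ∈ range N, u n x) S atTop A)
    (hT : Tendsto (fun N => ∑ n ∈ range N, u' n w) atTop (𝓝 T)) (hw : w ∈ A) :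
    HasDerivAt S T w := by
  have hF : ∀ N, ∀ x ∈ A,
      HasDerivAt (fun y => ∑ n ∈ range N, u n y) (∑ n ∈ range N, u' n x) x :=
    fun N x hx => HasDerivAt.fun_sum fun n _ => hu n x hx
  have hdiff : ∀ᶠ N in atTop, DifferentiableOn ℂ (fun y => ∑ n ∈ range N, u n y) A :=
    Eventually.of_forall fun N x hx => (hF N x hx).differentiableAt.differentiableWithinAt
  have hlim : Tendsto (fun N => ∑ n ∈ range N, u' n w) atTop (𝓝 (deriv S w)) := by
    simpa only [Function.comp_def, (hF _ w hw).deriv] using (hS.deriv hdiff hA).tendsto_at hw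
  rw [tendsto_nhds_unique hT hlim]
  exact ((hS.differentiableOn hdiff hA).differentiableAt (hA.mem_nhds hw)).hasDerivAt

section PowerSeriesInHolomorphicFunction

variable {A : Set ℂ} {g g' S : ℂ → ℂ} {c d : ℕ → ℂ} {T w : ℂ}

theorem hasDerivAt_of_tendstoLocallyUniformlyOn_sum_pow (hA : IsOpen A)
    (hg : ∀ x ∈ A, HasDerivAt g (g' x) x) (hg0 : ∀ x ∈ A, g x ≠ 0)
    (hcd : ∀ n : ℕ, ((n : ℂ) + 1) * c n = d n)
    (hS : TendstoLocallyUniformlyOn (fun N x => ∑ n ∈ range N, c n * g x ^ (n + 1)) S atTop A)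
    (hT : Tendsto (fun N => ∑ n ∈ range N, d n * g w ^ (n + 1)) atTop (𝓝 T)) (hw : w ∈ A) :
    HasDerivAt S (g' w / g w * T) w := by
  refine hasDerivAt_of_tendstoLocallyUniformlyOn_sum hA
    (fun n x hx => ((hg x hx).pow_of_ne_zero (hg0 x hx) (n + 1)).const_mul (c n)) hS ?_ hw
  refine (hT.const_mul (g' w / g w)).congr fun N => ?_
  rw [mul_sum]
  refine sum_congr rfl fun n _ => ?_
  rw [← hcd]
  push_cast
  ring

theorem hasDerivAt_of_tendstoLocallyUniformlyOn_sum_zpow_neg (hA : IsOpen A)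
    (hg : ∀ x ∈ A, HasDerivAt g (g' x) x) (hg0 : ∀ x ∈ A, g x ≠ 0)
    (hcd : ∀ n : ℕ, ((n : ℂ) + 1) * c n = d n)
    (hS : TendstoLocallyUniformlyOn
      (fun N x => ∑ n ∈ range N, c n * g x ^ (-(n + 1 : ℤ))) S atTop A)
    (hT : Tendsto (fun N => ∑ n ∈ range N, d n * g w ^ (-(n + 1 : ℤ))) atTop (𝓝 T))
    (hw : w ∈ A) :
    HasDerivAt S (-(g' w / g w) * T) w := by
  refine hasDerivAt_of_tendstoLocallyUniformlyOn_sum hA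
    (fun n x hx => ((hg x hx).zpow_of_ne_zero (hg0 x hx) _).const_mul (c n)) hS ?_ hw
  refine (hT.const_mul (-(g' w / g w))).congr fun N => ?_
  rw [mul_sum]
  refine sum_congr rfl fun n _ => ?_
  rw [← hcd]
  push_cast
  ring

end PowerSeriesInHolomorphicFunction

theorem stmt_17_general
    (A : Set ℂ) (hAopen : IsOpen A) (hAconn : IsConnected A)
    (g f : ℂ → ℂ)
    (hg : DifferentiableOn ℂ g A) (hf : DifferentiableOn ℂ f A)
    (hg0 : ∀ w ∈ A, g w ≠ 0) (hf0 : ∀ w ∈ A, f w ≠ 0)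
    (μ ν : ℤ)
    (Lg Lf : ℂ → ℂ)
    (hLg : DifferentiableOn ℂ Lg A) (hLf : DifferentiableOn ℂ Lf A)
    (hLgexp : ∀ w ∈ A, Complex.exp (Lg w) = g w / w)
    (hLfexp : ∀ w ∈ A, Complex.exp (Lf w) = f w / w)
    (t₀ : ℂ) (tp vp tm vm : ℕ → ℂ)
    (hS1 : TendstoLocallyUniformlyOn
      (fun N w => ∑ n ∈ Finset.range N, ((n : ℂ) + 1) * tp (n + 1) * g w ^ (n + 1))
      (fun w => ∑' n : ℕ, ((n : ℂ) + 1) * tp (n + 1) * g w ^ (n + 1)) Filter.atTop A)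
    (hS2 : TendstoLocallyUniformlyOn
      (fun N w => ∑ n ∈ Finset.range N, vp (n + 1) * g w ^ (-(n + 1 : ℤ)))
      (fun w => ∑' n : ℕ, vp (n + 1) * g w ^ (-(n + 1 : ℤ))) Filter.atTop A)
    (hS3 : TendstoLocallyUniformlyOn
      (fun N w => ∑ n ∈ Finset.range N, ((n : ℂ) + 1) * tm (n + 1) * f w ^ (-(n + 1 : ℤ)))
      (fun w => ∑' n : ℕ, ((n : ℂ) + 1) * tm (n + 1) * f w ^ (-(n + 1 : ℤ))) Filter.atTop A)
    (hS4 : TendstoLocallyUniformlyOn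
      (fun N w => ∑ n ∈ Finset.range N, vm (n + 1) * f w ^ (n + 1))
      (fun w => ∑' n : ℕ, vm (n + 1) * f w ^ (n + 1)) Filter.atTop A)
    (hS5 : TendstoLocallyUniformlyOn
      (fun N w => ∑ n ∈ Finset.range N, tp (n + 1) * g w ^ (n + 1))
      (fun w => ∑' n : ℕ, tp (n + 1) * g w ^ (n + 1)) Filter.atTop A)
    (hS6 : TendstoLocallyUniformlyOn
      (fun N w => ∑ n ∈ Finset.range N, (vp (n + 1) / ((n : ℂ) + 1)) * g w ^ (-(n + 1 : ℤ)))
      (fun w => ∑' n : ℕ, (vp (n + 1) / ((n : ℂ) + 1)) * g w ^ (-(n + 1 : ℤ)))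
      Filter.atTop A)
    (hS7 : TendstoLocallyUniformlyOn
      (fun N w => ∑ n ∈ Finset.range N, tm (n + 1) * f w ^ (-(n + 1 : ℤ)))
      (fun w => ∑' n : ℕ, tm (n + 1) * f w ^ (-(n + 1 : ℤ))) Filter.atTop A)
    (hS8 : TendstoLocallyUniformlyOn
      (fun N w => ∑ n ∈ Finset.range N, (vm (n + 1) / ((n : ℂ) + 1)) * f w ^ (n + 1))
      (fun w => ∑' n : ℕ, (vm (n + 1) / ((n : ℂ) + 1)) * f w ^ (n + 1)) Filter.atTop A)
    (hexp₁ : ∀ w ∈ A,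
      (μ : ℂ) * g w ^ μ * f w ^ (-ν)
        = (∑' n : ℕ, ((n : ℂ) + 1) * tp (n + 1) * g w ^ (n + 1)) + t₀
          + ∑' n : ℕ, vp (n + 1) * g w ^ (-(n + 1 : ℤ)))
    (hexp₂ : ∀ w ∈ A,
      (ν : ℂ) * g w ^ μ * f w ^ (-ν)
        = -(∑' n : ℕ, ((n : ℂ) + 1) * tm (n + 1) * f w ^ (-(n + 1 : ℤ))) + t₀
          - ∑' n : ℕ, vm (n + 1) * f w ^ (n + 1)) :
    (∀ w ∈ A,
      HasDerivAt (fun w' =>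
        g w' ^ μ * f w' ^ (-ν)
          - ((∑' n : ℕ, tp (n + 1) * g w' ^ (n + 1)) + t₀ * Lg w'
              - (∑' n : ℕ, (vp (n + 1) / ((n : ℂ) + 1)) * g w' ^ (-(n + 1 : ℤ)))
              - (∑' n : ℕ, tm (n + 1) * f w' ^ (-(n + 1 : ℤ)))
              - t₀ * Lf w'
              + ∑' n : ℕ, (vm (n + 1) / ((n : ℂ) + 1)) * f w' ^ (n + 1))) 0 w) ∧
    ∃ c : ℂ, ∀ w ∈ A,
      g w ^ μ * f w ^ (-ν)
        - ((∑' n : ℕ, tp (n + 1) * g w ^ (n + 1)) + t₀ * Lg w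
            - (∑' n : ℕ, (vp (n + 1) / ((n : ℂ) + 1)) * g w ^ (-(n + 1 : ℤ)))
            - (∑' n : ℕ, tm (n + 1) * f w ^ (-(n + 1 : ℤ)))
            - t₀ * Lf w
            + ∑' n : ℕ, (vm (n + 1) / ((n : ℂ) + 1)) * f w ^ (n + 1)) = c := by
  have hg' : ∀ x ∈ A, HasDerivAt g (deriv g x) x := fun x hx =>
    (hg.differentiableAt (hAopen.mem_nhds hx)).hasDerivAt
  have hf' : ∀ x ∈ A, HasDerivAt f (deriv f x) x := fun x hx =>
    (hf.differentiableAt (hAopen.mem_nhds hx)).hasDerivAt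
  refine ⟨?hder, hAopen.exists_is_const_of_deriv_eq_zero hAconn.isPreconnected
    (fun x hx => (?hder x hx).differentiableAt.differentiableWithinAt)
    (fun x hx => (?hder x hx).deriv)⟩
  intro w hw
  have hAw := hAopen.mem_nhds hw
  have hP := ((hg' w hw).zpow_of_ne_zero (hg0 w hw) μ).mul
    ((hf' w hw).zpow_of_ne_zero (hf0 w hw) (-ν))
  have hLg' := (hLg.differentiableAt hAw).hasDerivAt_of_cexp_eq_div (hg' w hw)
    (eventually_of_mem hAw hLgexp)
  have hLf' := (hLf.differentiableAt hAw).hasDerivAt_of_cexp_eq_div (hf' w hw)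
    (eventually_of_mem hAw hLfexp)
  have h5 := hasDerivAt_of_tendstoLocallyUniformlyOn_sum_pow hAopen hg' hg0
    (fun _ => rfl) hS5 (hS1.tendsto_at hw) hw
  have h6 := hasDerivAt_of_tendstoLocallyUniformlyOn_sum_zpow_neg hAopen hg' hg0
    (fun n => mul_div_cancel₀ _ (Nat.cast_add_one_ne_zero n)) hS6 (hS2.tendsto_at hw) hw
  have h7 := hasDerivAt_of_tendstoLocallyUniformlyOn_sum_zpow_neg hAopen hf' hf0
    (fun _ => rfl) hS7 (hS3.tendsto_at hw) hw
  have h8 := hasDerivAt_of_tendstoLocallyUniformlyOn_sum_pow hAopen hf' hf0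
    (fun n => mul_div_cancel₀ _ (Nat.cast_add_one_ne_zero n)) hS8 (hS4.tendsto_at hw) hw
  refine (hP.sub (((((h5.add (hLg'.const_mul t₀)).sub h6).sub h7).sub
    (hLf'.const_mul t₀)).add h8)).congr_deriv ?_
  push_cast
  linear_combination (deriv g w / g w) * hexp₁ w hw - (deriv f w / f w) * hexp₂ w hw

/-- For the special solution `ℋ(z₁,z₂) = z₁^μ z₂^{-ν}`: if the Orlov–Schulman expansions
`μ g^μ f^{-ν} = Σ n t_n g^n + t₀ + Σ v_n g^{-n}` and
`ν g^μ f^{-ν} = -Σ n t_{-n} f^{-n} + t₀ - Σ v_{-n} f^n` hold on a connected open set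
`A ⊆ ℂ∖{0}`, with all the relevant series converging locally uniformly on `A`, and
`L_g, L_f` are holomorphic logarithms of `g(w)/w`, `f(w)/w`, then
`g^μ f^{-ν} - [Σ t_n g^n + t₀ L_g - Σ (v_n/n) g^{-n} - Σ t_{-n} f^{-n} - t₀ L_f + Σ (v_{-n}/n) f^n]`
has identically vanishing derivative on `A`, hence is constant. -/
theorem stmt_17
    (A : Set ℂ) (hAopen : IsOpen A) (hAconn : IsConnected A) (hA0 : ∀ w ∈ A, w ≠ 0)
    (g f : ℂ → ℂ)
    (hg : DifferentiableOn ℂ g A) (hf : DifferentiableOn ℂ f A)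
    (hg0 : ∀ w ∈ A, g w ≠ 0) (hf0 : ∀ w ∈ A, f w ≠ 0)
    (μ ν : ℤ) (hμ : μ ≠ 0) (hν : ν ≠ 0)
    (Lg Lf : ℂ → ℂ)
    (hLg : DifferentiableOn ℂ Lg A) (hLf : DifferentiableOn ℂ Lf A)
    (hLgexp : ∀ w ∈ A, Complex.exp (Lg w) = g w / w)
    (hLfexp : ∀ w ∈ A, Complex.exp (Lf w) = f w / w)
    (t₀ : ℂ) (tp vp tm vm : ℕ → ℂ)
    (hS1 : TendstoLocallyUniformlyOn
      (fun N w => ∑ n ∈ Finset.range N, ((n : ℂ) + 1) * tp (n + 1) * g w ^ (n + 1))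
      (fun w => ∑' n : ℕ, ((n : ℂ) + 1) * tp (n + 1) * g w ^ (n + 1)) Filter.atTop A)
    (hS2 : TendstoLocallyUniformlyOn
      (fun N w => ∑ n ∈ Finset.range N, vp (n + 1) * g w ^ (-(n + 1 : ℤ)))
      (fun w => ∑' n : ℕ, vp (n + 1) * g w ^ (-(n + 1 : ℤ))) Filter.atTop A)
    (hS3 : TendstoLocallyUniformlyOn
      (fun N w => ∑ n ∈ Finset.range N, ((n : ℂ) + 1) * tm (n + 1) * f w ^ (-(n + 1 : ℤ)))
      (fun w => ∑' n : ℕ, ((n : ℂ) + 1) * tm (n + 1) * f w ^ (-(n + 1 : ℤ))) Filter.atTop A)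
    (hS4 : TendstoLocallyUniformlyOn
      (fun N w => ∑ n ∈ Finset.range N, vm (n + 1) * f w ^ (n + 1))
      (fun w => ∑' n : ℕ, vm (n + 1) * f w ^ (n + 1)) Filter.atTop A)
    (hS5 : TendstoLocallyUniformlyOn
      (fun N w => ∑ n ∈ Finset.range N, tp (n + 1) * g w ^ (n + 1))
      (fun w => ∑' n : ℕ, tp (n + 1) * g w ^ (n + 1)) Filter.atTop A)
    (hS6 : TendstoLocallyUniformlyOn
      (fun N w => ∑ n ∈ Finset.range N, (vp (n + 1) / ((n : ℂ) + 1)) * g w ^ (-(n + 1 : ℤ)))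
      (fun w => ∑' n : ℕ, (vp (n + 1) / ((n : ℂ) + 1)) * g w ^ (-(n + 1 : ℤ)))
      Filter.atTop A)
    (hS7 : TendstoLocallyUniformlyOn
      (fun N w => ∑ n ∈ Finset.range N, tm (n + 1) * f w ^ (-(n + 1 : ℤ)))
      (fun w => ∑' n : ℕ, tm (n + 1) * f w ^ (-(n + 1 : ℤ))) Filter.atTop A)
    (hS8 : TendstoLocallyUniformlyOn
      (fun N w => ∑ n ∈ Finset.range N, (vm (n + 1) / ((n : ℂ) + 1)) * f w ^ (n + 1))
      (fun w => ∑' n : ℕ, (vm (n + 1) / ((n : ℂ) + 1)) * f w ^ (n + 1)) Filter.atTop A)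
    (hexp₁ : ∀ w ∈ A,
      (μ : ℂ) * g w ^ μ * f w ^ (-ν)
        = (∑' n : ℕ, ((n : ℂ) + 1) * tp (n + 1) * g w ^ (n + 1)) + t₀
          + ∑' n : ℕ, vp (n + 1) * g w ^ (-(n + 1 : ℤ)))
    (hexp₂ : ∀ w ∈ A,
      (ν : ℂ) * g w ^ μ * f w ^ (-ν)
        = -(∑' n : ℕ, ((n : ℂ) + 1) * tm (n + 1) * f w ^ (-(n + 1 : ℤ))) + t₀
          - ∑' n : ℕ, vm (n + 1) * f w ^ (n + 1)) :
    (∀ w ∈ A,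
      HasDerivAt (fun w' =>
        g w' ^ μ * f w' ^ (-ν)
          - ((∑' n : ℕ, tp (n + 1) * g w' ^ (n + 1)) + t₀ * Lg w'
              - (∑' n : ℕ, (vp (n + 1) / ((n : ℂ) + 1)) * g w' ^ (-(n + 1 : ℤ)))
              - (∑' n : ℕ, tm (n + 1) * f w' ^ (-(n + 1 : ℤ)))
              - t₀ * Lf w'
              + ∑' n : ℕ, (vm (n + 1) / ((n : ℂ) + 1)) * f w' ^ (n + 1))) 0 w) ∧
    ∃ c : ℂ, ∀ w ∈ A,
      g w ^ μ * f w ^ (-ν)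
        - ((∑' n : ℕ, tp (n + 1) * g w ^ (n + 1)) + t₀ * Lg w
            - (∑' n : ℕ, (vp (n + 1) / ((n : ℂ) + 1)) * g w ^ (-(n + 1 : ℤ)))
            - (∑' n : ℕ, tm (n + 1) * f w ^ (-(n + 1 : ℤ)))
            - t₀ * Lf w
            + ∑' n : ℕ, (vm (n + 1) / ((n : ℂ) + 1)) * f w ^ (n + 1)) = c :=
  stmt_17_general A hAopen hAconn g f hg hf hg0 hf0 μ ν Lg Lf hLg hLf hLgexp hLfexp t₀ tp vp tm vm
    hS1 hS2 hS3 hS4 hS5 hS6 hS7 hS8 hexp₁ hexp₂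
end
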